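/- arXiv:math/0503553 — 8 statements merged into one kernel-verified Lean document; each statement's English description precedes it below -/
import Mathlib

section
/- Every k-tree G with more than k+1 vertices has at least one k-simplicial vertex, the set L of all k-simplicial vertices of G is a nonempty independent set, and G \ L is either a k-tree or isomorphic to K_k. -/
/-!
Fix a construction order of the `k`-tree. Every vertex `v` has `k` neighbours forming a clique
among the vertices up to position `max k (pos v)`, so `v` is `k`-simplicial exactly when it has no
neighbour beyond that position. Hence the last vertex is simplicial, while every vertex of a clique
to which some vertex beyond the initial clique was attached is not. Two adjacent simplicial
vertices would therefore both lie in the initial `(k + 1)`-clique but outside the `k`-clique to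
which vertex `k + 1` was attached, which is impossible. The non-simplicial vertices contain the
attachment cliques of all their late vertices, so the construction order restricts to them: they
form a `k`-tree, unless there are only `k` of them, and then they are the attachment clique of
vertex `k + 1`.
-/

/-- A `k`-tree, defined via a construction ordering: the first `k+1` vertices form a
clique, and each later vertex's neighbourhood among earlier vertices is a `k`-clique. -/
def IsKTree {V : Type*} [Finite V] (k : ℕ) (G : SimpleGraph V) : Prop :=
  k + 1 ≤ Nat.card V ∧
  ∃ σ : Fin (Nat.card V) ≃ V,
    ∀ i : Fin (Nat.card V),
      (((i : ℕ) ≤ k) →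
        {u | G.Adj (σ i) u ∧ ((σ.symm u : Fin (Nat.card V)) : ℕ) < (i : ℕ)} =
          {u | ((σ.symm u : Fin (Nat.card V)) : ℕ) < (i : ℕ)}) ∧
      (k < (i : ℕ) →
        ({u | G.Adj (σ i) u ∧ ((σ.symm u : Fin (Nat.card V)) : ℕ) < (i : ℕ)}.ncard = k ∧
          G.IsClique {u | G.Adj (σ i) u ∧ ((σ.symm u : Fin (Nat.card V)) : ℕ) < (i : ℕ)}))

/-- A vertex is `k`-simplicial if its neighbourhood is a clique on exactly `k` vertices. -/
def IsKSimplicial {V : Type*} (G : SimpleGraph V) (k : ℕ) (v : V) : Prop :=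
  G.IsClique (G.neighborSet v) ∧ (G.neighborSet v).ncard = k

theorem Equiv.ncard_setOf_val_lt {V : Type*} {n : ℕ} (τ : V ≃ Fin n) {i : ℕ} (hi : i ≤ n) :
    {u | (τ u : ℕ) < i}.ncard = i := by
  have : {u | (τ u : ℕ) < i} = Set.range (τ.symm ∘ Fin.castLE hi) := by
    ext u
    refine ⟨fun hu => ⟨⟨τ u, hu⟩, by simp⟩, ?_⟩
    rintro ⟨j, rfl⟩
    simp
  rw [this, Set.ncard_range_of_injective (τ.symm.injective.comp (Fin.castLE_injective hi)),
    Nat.card_eq_fintype_card, Fintype.card_fin]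

namespace SimpleGraph

variable {V : Type*} {G : SimpleGraph V} {k : ℕ} {r : V → ℕ}

def earlierNeighborSet (G : SimpleGraph V) (r : V → ℕ) (v : V) : Set V :=
  {u | G.Adj v u ∧ r u < r v}

/-- A construction order of a `k`-tree; the `min` makes the first `k + 1` vertices a clique. -/
def IsKTreeRanking (G : SimpleGraph V) (k : ℕ) (r : V → ℕ) : Prop :=
  Function.Injective r ∧ ∀ v, G.IsClique (G.earlierNeighborSet r v) ∧
    (G.earlierNeighborSet r v).ncard = min k {u | r u < r v}.ncard

namespace IsKTreeRanking

theorem earlierNeighborSet_eq [Finite V] (hr : G.IsKTreeRanking k r) {v : V}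
    (hv : {u | r u < r v}.ncard ≤ k) : G.earlierNeighborSet r v = {u | r u < r v} :=
  Set.eq_of_subset_of_ncard_le (fun _ hu => hu.2) (by rw [(hr.2 v).2, min_eq_right hv])

theorem of_lt_iff_lt {r' : V → ℕ} (hr : G.IsKTreeRanking k r)
    (h : ∀ u v, r' u < r' v ↔ r u < r v) : G.IsKTreeRanking k r' := by
  refine ⟨fun u v huv => hr.1 (le_antisymm ?_ ?_), fun v => ?_⟩
  · exact not_lt.1 fun h' => ((h v u).2 h').ne' huv
  · exact not_lt.1 fun h' => ((h u v).2 h').ne huv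
  · simpa only [earlierNeighborSet, h] using hr.2 v

theorem induce [Finite V] (hr : G.IsKTreeRanking k r) {S : Set V}
    (hS : ∀ v ∈ S, k < {u | r u < r v}.ncard → G.earlierNeighborSet r v ⊆ S) :
    (G.induce S).IsKTreeRanking k (r ∘ Subtype.val) := by
  refine ⟨hr.1.comp Subtype.val_injective, fun v => ⟨?_, ?_⟩⟩
  · intro a ha b hb hab
    exact (hr.2 v).1 ha hb (Subtype.val_injective.ne hab)
  have hB : Subtype.val '' (G.induce S).earlierNeighborSet (r ∘ Subtype.val) v =
      G.earlierNeighborSet r v ∩ S := by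
    ext u
    simp [earlierNeighborSet, and_comm, and_left_comm]
  have hP : Subtype.val '' {u : S | (r ∘ Subtype.val) u < (r ∘ Subtype.val) v} =
      {u | r u < r v} ∩ S := by
    ext u
    simp [and_comm]
  rw [← Set.ncard_image_of_injective _ Subtype.val_injective, hB,
    ← Set.ncard_image_of_injective _ Subtype.val_injective, hP]
  by_cases hv : k < {u | r u < r v}.ncard
  · have hBS := hS v v.2 hv
    have hBk : (G.earlierNeighborSet r v).ncard = k := by rw [(hr.2 v).2, min_eq_left hv.le]
    rw [Set.inter_eq_left.2 hBS, hBk, min_eq_left]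
    exact hBk ▸ Set.ncard_le_ncard fun u hu => ⟨hu.2, hBS hu⟩
  · rw [hr.earlierNeighborSet_eq (not_lt.1 hv), min_eq_right]
    exact (Set.ncard_le_ncard Set.inter_subset_left).trans (not_lt.1 hv)

end IsKTreeRanking

theorem IsClique.nonempty_induce_iso_top [Finite V] {s : Set V} (hs : G.IsClique s) :
    Nonempty (G.induce s ≃g (⊤ : SimpleGraph (Fin s.ncard))) := by
  rw [induce_eq_top.2 hs]
  exact ⟨Iso.completeGraph (Finite.equivFinOfCardEq (Nat.card_coe_set_eq s))⟩

end SimpleGraph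

theorem isKTree_iff_exists_isKTreeRanking {V : Type*} [Finite V] {k : ℕ} {G : SimpleGraph V} :
    IsKTree k G ↔
      k + 1 ≤ Nat.card V ∧ ∃ τ : V ≃ Fin (Nat.card V), G.IsKTreeRanking k (Fin.val ∘ τ) := by
  refine and_congr_right fun _ => ⟨fun ⟨σ, hσ⟩ => ⟨σ.symm, ?_⟩, fun ⟨τ, hτ⟩ => ⟨τ.symm, ?_⟩⟩
  · have hadj : ∀ u w, (σ.symm u : ℕ) < σ.symm w → (σ.symm w : ℕ) ≤ k → G.Adj w u := by
      intro u w huw hw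
      have := (hσ (σ.symm w)).1 hw
      simp only [Equiv.apply_symm_apply] at this
      exact (this.symm ▸ huw : u ∈ {u | G.Adj w u ∧ (σ.symm u : ℕ) < σ.symm w}).1
    refine ⟨Fin.val_injective.comp σ.symm.injective, fun v => ?_⟩
    obtain ⟨i, rfl⟩ := σ.surjective v
    simp only [SimpleGraph.earlierNeighborSet, Function.comp_apply, Equiv.symm_apply_apply,
      σ.symm.ncard_setOf_val_lt i.2.le]
    rcases le_or_gt (i : ℕ) k with hi | hi
    · rw [(hσ i).1 hi, σ.symm.ncard_setOf_val_lt i.2.le, min_eq_right hi]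
      refine ⟨fun u hu w hw huw => ?_, rfl⟩
      rcases lt_or_gt_of_ne (σ.symm.injective.ne huw) with h | h
      · exact (hadj u w h (hw.le.trans hi)).symm
      · exact hadj w u h (hu.le.trans hi)
    · rw [min_eq_left hi.le]
      exact ⟨((hσ i).2 hi).2, ((hσ i).2 hi).1⟩
  · intro i
    have := hτ.2 (τ.symm i)
    simp only [SimpleGraph.earlierNeighborSet, Function.comp_apply, Equiv.apply_symm_apply,
      τ.ncard_setOf_val_lt i.2.le] at this
    simp only [Equiv.symm_symm]
    refine ⟨fun hi => ?_, fun hi => ⟨by rw [this.2, min_eq_left hi.le], this.1⟩⟩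
    refine Set.eq_of_subset_of_ncard_le (fun _ hu => hu.2) ?_
    rw [this.2, min_eq_right hi, τ.ncard_setOf_val_lt i.2.le]

theorem SimpleGraph.IsKTreeRanking.isKTree {V : Type*} [Finite V] {k : ℕ} {G : SimpleGraph V}
    {r : V → ℕ} (hr : G.IsKTreeRanking k r) (hV : k + 1 ≤ Nat.card V) : IsKTree k G := by
  let : LinearOrder V := LinearOrder.lift' r hr.1
  have := Fintype.ofFinite V
  let e : Fin (Nat.card V) ≃o V := Fintype.orderIsoFinOfCardEq V Nat.card_eq_fintype_card.symm
  exact isKTree_iff_exists_isKTreeRanking.2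
    ⟨hV, e.symm.toEquiv, hr.of_lt_iff_lt fun _ _ => e.symm.lt_iff_lt⟩

namespace SimpleGraph.IsKTreeRanking

variable {V : Type*} {G : SimpleGraph V} {k n : ℕ} {τ : V ≃ Fin n}

theorem adj_of_lt_of_le [Finite V] (hτ : G.IsKTreeRanking k (Fin.val ∘ τ)) {u w : V}
    (huw : (τ u : ℕ) < τ w) (hw : (τ w : ℕ) ≤ k) : G.Adj w u := by
  have hB := hτ.earlierNeighborSet_eq (v := w) (by
    simpa only [Function.comp_apply, τ.ncard_setOf_val_lt (τ w).2.le] using hw)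
  have hu : u ∈ G.earlierNeighborSet (Fin.val ∘ τ) w := by rw [hB]; exact huw
  exact hu.1

theorem isClique_setOf_val_le [Finite V] (hτ : G.IsKTreeRanking k (Fin.val ∘ τ)) :
    G.IsClique {u | (τ u : ℕ) ≤ k} := by
  intro u hu w hw huw
  rcases lt_or_gt_of_ne (τ.injective.ne huw) with h | h
  · exact (hτ.adj_of_lt_of_le h hw).symm
  · exact hτ.adj_of_lt_of_le h hu

theorem ncard_earlierNeighborSet (hτ : G.IsKTreeRanking k (Fin.val ∘ τ)) {v : V}
    (hv : k ≤ τ v) : (G.earlierNeighborSet (Fin.val ∘ τ) v).ncard = k := by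
  rw [(hτ.2 v).2]
  simp only [Function.comp_apply, τ.ncard_setOf_val_lt (τ v).2.le, min_eq_left hv]

/-- These neighbours are the rest of the initial clique, or the clique `v` was attached to. -/
theorem isClique_and_ncard_setOf_adj_le_max [Finite V] (hτ : G.IsKTreeRanking k (Fin.val ∘ τ))
    (hkn : k < n) (v : V) :
    G.IsClique {w | G.Adj v w ∧ (τ w : ℕ) ≤ max k (τ v)} ∧
      {w | G.Adj v w ∧ (τ w : ℕ) ≤ max k (τ v)}.ncard = k := by
  rcases le_or_gt (τ v : ℕ) k with hv | hv
  · have hI : {w | G.Adj v w ∧ (τ w : ℕ) ≤ max k (τ v)} = {u | (τ u : ℕ) ≤ k} \ {v} := by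
      ext w
      simp only [max_eq_left hv, Set.mem_ofPred_eq, Set.mem_sdiff, Set.mem_singleton_iff]
      exact ⟨fun h => ⟨h.2, h.1.ne'⟩, fun h => ⟨hτ.isClique_setOf_val_le hv h.1 (Ne.symm h.2), h.1⟩⟩
    have hcard : {u | (τ u : ℕ) ≤ k}.ncard = k + 1 := by
      simpa only [Nat.lt_succ_iff] using τ.ncard_setOf_val_lt (Nat.succ_le_of_lt hkn)
    rw [hI, Set.ncard_sdiff_singleton_of_mem (show v ∈ {u | (τ u : ℕ) ≤ k} from hv), hcard]
    exact ⟨hτ.isClique_setOf_val_le.subset Set.sdiff_subset, rfl⟩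
  · have hB : {w | G.Adj v w ∧ (τ w : ℕ) ≤ max k (τ v)} = G.earlierNeighborSet (Fin.val ∘ τ) v := by
      ext w
      simp only [max_eq_right hv.le, Set.mem_ofPred_eq, earlierNeighborSet, Function.comp_apply]
      exact and_congr_right fun h => (Fin.val_injective.ne (τ.injective.ne h.ne')).le_iff_lt
    rw [hB]
    exact ⟨(hτ.2 v).1, hτ.ncard_earlierNeighborSet hv.le⟩

theorem isKSimplicial_iff [Finite V] (hτ : G.IsKTreeRanking k (Fin.val ∘ τ)) (hkn : k < n) {v : V} :
    IsKSimplicial G k v ↔ ∀ w, G.Adj v w → (τ w : ℕ) ≤ max k (τ v) := by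
  obtain ⟨hclique, hcard⟩ := hτ.isClique_and_ncard_setOf_adj_le_max hkn v
  refine ⟨fun hs w hw => ?_, fun h => ?_⟩
  · have hN : {w | G.Adj v w ∧ (τ w : ℕ) ≤ max k (τ v)} = G.neighborSet v :=
      Set.eq_of_subset_of_ncard_le (fun _ hw => hw.1) (by rw [hs.2, hcard])
    exact (hN.symm ▸ hw : w ∈ {w | G.Adj v w ∧ (τ w : ℕ) ≤ max k (τ v)}).2
  · have hN : G.neighborSet v = {w | G.Adj v w ∧ (τ w : ℕ) ≤ max k (τ v)} :=
      Set.ext fun w => ⟨fun hw => ⟨hw, h w hw⟩, fun hw => hw.1⟩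
    exact ⟨hN ▸ hclique, hN ▸ hcard⟩

theorem not_isKSimplicial_of_adj [Finite V] (hτ : G.IsKTreeRanking k (Fin.val ∘ τ)) {v w : V}
    (hvw : G.Adj v w) (hlt : (τ v : ℕ) < τ w) (hw : k < τ w) : ¬ IsKSimplicial G k v := by
  rw [hτ.isKSimplicial_iff (hw.trans (τ w).2)]
  exact fun h => (h w hvw).not_gt (max_lt hw hlt)

theorem earlierNeighborSet_subset_compl_isKSimplicial [Finite V]
    (hτ : G.IsKTreeRanking k (Fin.val ∘ τ)) {v : V}
    (hv : k < τ v) : G.earlierNeighborSet (Fin.val ∘ τ) v ⊆ {u | IsKSimplicial G k u}ᶜ :=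
  fun _ hu => hτ.not_isKSimplicial_of_adj hu.1.symm hu.2 hv

theorem exists_isKSimplicial [Finite V] (hτ : G.IsKTreeRanking k (Fin.val ∘ τ)) (hkn : k < n) :
    ∃ v, IsKSimplicial G k v := by
  refine ⟨τ.symm ⟨n - 1, by omega⟩, (hτ.isKSimplicial_iff hkn).2 fun w _ => ?_⟩
  simp only [Equiv.apply_symm_apply]
  exact le_max_of_le_right (Nat.le_sub_one_of_lt (τ w).2)

theorem not_adj_of_isKSimplicial [Finite V] (hτ : G.IsKTreeRanking k (Fin.val ∘ τ))
    (hkn : k + 1 < n) {u w : V} (hu : IsKSimplicial G k u) (hw : IsKSimplicial G k w) :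
    ¬ G.Adj u w := by
  intro huw
  wlog hlt : (τ u : ℕ) < τ w generalizing u w
  · exact this hw hu huw.symm <| lt_of_le_of_ne (not_lt.1 hlt)
      (Fin.val_injective.ne (τ.injective.ne huw.ne'))
  have hwk : (τ w : ℕ) ≤ k := by
    have := (hτ.isKSimplicial_iff (by omega)).1 hu w huw
    omega
  -- `u` and `w` would join the `k` earlier neighbours of the vertex at position `k + 1`
  -- inside the initial clique of `k + 1` vertices.
  set B := G.earlierNeighborSet (Fin.val ∘ τ) (τ.symm ⟨k + 1, hkn⟩)
  have hx : k < τ (τ.symm ⟨k + 1, hkn⟩) := by simp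
  have hsub : B ∪ {u, w} ⊆ {v | (τ v : ℕ) < k + 1} := by
    refine Set.union_subset (fun b hb => ?_) ?_
    · simpa using hb.2
    · rintro _ (rfl | rfl) <;> simp only [Set.mem_ofPred_eq] <;> omega
  have hdisj : Disjoint B {u, w} := Set.disjoint_left.2 fun b hb hb' =>
    hτ.earlierNeighborSet_subset_compl_isKSimplicial hx hb
      (by rcases hb' with rfl | rfl; exacts [hu, hw])
  have := Set.ncard_le_ncard hsub
  rw [Set.ncard_union_eq hdisj, hτ.ncard_earlierNeighborSet hx.le, Set.ncard_pair huw.ne,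
    τ.ncard_setOf_val_lt hkn.le] at this
  omega

theorem isKTree_induce_or_nonempty_iso [Finite V] (hτ : G.IsKTreeRanking k (Fin.val ∘ τ))
    (hkn : k + 1 < n) :
    IsKTree k (G.induce {v | IsKSimplicial G k v}ᶜ) ∨
      Nonempty (G.induce {v | IsKSimplicial G k v}ᶜ ≃g (⊤ : SimpleGraph (Fin k))) := by
  by_cases hR : k + 1 ≤ ({v | IsKSimplicial G k v}ᶜ : Set V).ncard
  · refine Or.inl ((hτ.induce fun v _ hv =>
      hτ.earlierNeighborSet_subset_compl_isKSimplicial ?_).isKTree ?_)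
    · simpa only [Function.comp_apply, τ.ncard_setOf_val_lt (τ v).2.le] using hv
    · rwa [Nat.card_coe_set_eq]
  · have hx : k < τ (τ.symm ⟨k + 1, hkn⟩) := by simp
    have hcard := hτ.ncard_earlierNeighborSet hx.le
    have hRB := Set.eq_of_subset_of_ncard_le
      (hτ.earlierNeighborSet_subset_compl_isKSimplicial hx) (by omega)
    have hiso := (hτ.2 (τ.symm ⟨k + 1, hkn⟩)).1.nonempty_induce_iso_top
    rw [hcard, hRB] at hiso
    exact Or.inr hiso

end SimpleGraph.IsKTreeRanking

theorem ktree_simplicial_set_general {V : Type*} [Finite V] (k : ℕ)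
    (G : SimpleGraph V) (h : IsKTree k G) (hbig : k + 1 < Nat.card V) :
    {v | IsKSimplicial G k v}.Nonempty ∧
    (∀ u ∈ {v | IsKSimplicial G k v}, ∀ w ∈ {v | IsKSimplicial G k v}, ¬ G.Adj u w) ∧
    (IsKTree k (G.induce {v | IsKSimplicial G k v}ᶜ) ∨
      Nonempty ((G.induce {v | IsKSimplicial G k v}ᶜ) ≃g (⊤ : SimpleGraph (Fin k)))) := by
  obtain ⟨-, τ, hτ⟩ := isKTree_iff_exists_isKTreeRanking.1 h
  exact ⟨hτ.exists_isKSimplicial (by omega),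
    fun u hu w hw => hτ.not_adj_of_isKSimplicial hbig hu hw,
    hτ.isKTree_induce_or_nonempty_iso hbig⟩

/-- In a `k`-tree with more than `k+1` vertices, the set `L` of `k`-simplicial vertices
is nonempty and independent, and deleting it leaves a `k`-tree or a copy of `K_k`. -/
theorem ktree_simplicial_set {V : Type*} [Finite V] (k : ℕ) (hk : 1 ≤ k)
    (G : SimpleGraph V) (h : IsKTree k G) (hbig : k + 1 < Nat.card V) :
    {v | IsKSimplicial G k v}.Nonempty ∧
    (∀ u ∈ {v | IsKSimplicial G k v}, ∀ w ∈ {v | IsKSimplicial G k v}, ¬ G.Adj u w) ∧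
    (IsKTree k (G.induce {v | IsKSimplicial G k v}ᶜ) ∨
      Nonempty ((G.induce {v | IsKSimplicial G k v}ᶜ) ≃g (⊤ : SimpleGraph (Fin k)))) :=
  ktree_simplicial_set_general k G h hbig
end

section
/- Every k-tree G has a nonempty independent set S of k-simplicial vertices such that either (a) G \ S is isomorphic to K_k, or (b) G \ S is a k-tree containing a k-simplicial vertex v such that for each w in S there is exactly one vertex u in the neighbourhood of v in G \ S with N_G(w) = (N_{G\S}(v) ∪ {v}) \ {u}, and moreover every k-simplicial vertex of G not in S is not adjacent to v. -/
/-! Order the vertices as in the construction of the `k`-tree. A `k`-simplicial vertex `w` has no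
neighbour after it outside the initial `(k+1)`-clique: its `k` earlier neighbours, or the rest of
the initial clique, already exhaust its neighbourhood. Hence, once there are at least `k + 2`
vertices, simplicial vertices are pairwise non-adjacent, and deleting any set of them leaves the
earlier neighbourhood of every surviving vertex intact, so what remains is again a `k`-tree.

Let `R` be the set of all simplicial vertices. If only `k` vertices survive, `G \ R` is the
neighbourhood of a simplicial vertex, hence `K_k`. Otherwise take a simplicial vertex `v` of the
`k`-tree `G \ R` and `S = N(v) ∩ R`, which is nonempty since `v` is not simplicial in `G`. Every
`w ∈ S` has `N(w) \ {v}` inside the `k`-clique `N(v) \ R`, so it misses exactly one vertex of it. -/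

open Set

namespace KTree

variable {V : Type*} {n k : ℕ}

def rank (σ : Fin n ≃ V) (x : V) : ℕ := σ.symm x

@[simp]
theorem rank_apply (σ : Fin n ≃ V) (i : Fin n) : rank σ (σ i) = i := by simp [rank]

theorem rank_lt (σ : Fin n ≃ V) (x : V) : rank σ x < n := (σ.symm x).isLt

theorem rank_injective (σ : Fin n ≃ V) : (rank σ).Injective :=
  fun _ _ h => σ.symm.injective (Fin.ext h)

theorem ncard_rank_lt [Finite V] (σ : Fin n ≃ V) {c : ℕ} (hc : c ≤ n) :
    {x | rank σ x < c}.ncard = c := by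
  classical
  have : {x | rank σ x < c} = σ.symm ⁻¹' ↑(Finset.univ.filter fun i : Fin n => (i : ℕ) < c) := by
    ext; simp [rank]
  rw [this, ncard_preimage_of_injective_subset_range σ.symm.injective (by simp), ncard_coe_finset,
    Fin.card_filter_val_lt, min_eq_right hc]

theorem rank_eq_ncard [Finite V] (σ : Fin n ≃ V) (x : V) :
    rank σ x = {u | rank σ u < rank σ x}.ncard :=
  (ncard_rank_lt σ (rank_lt σ x).le).symm

theorem exists_equiv_fin_rank_lt_iff {W : Type*} [Finite W] {f : W → ℕ} (hf : f.Injective) :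
    ∃ τ : Fin (Nat.card W) ≃ W, ∀ u v, rank τ u < rank τ v ↔ f u < f v := by
  let := LinearOrder.lift' f hf
  have := Fintype.ofFinite W
  let e := Fintype.orderIsoFinOfCardEq W Nat.card_eq_fintype_card.symm
  exact ⟨e.toEquiv, fun u v => e.symm.lt_iff_lt⟩

def earlierNeighborSet (G : SimpleGraph V) (σ : Fin n ≃ V) (x : V) : Set V :=
  {u | G.Adj x u ∧ rank σ u < rank σ x}

structure IsKTreeOrdering (k : ℕ) (G : SimpleGraph V) (σ : Fin n ≃ V) : Prop where
  adj_of_rank_le : ∀ ⦃x u⦄, rank σ x ≤ k → rank σ u < rank σ x → G.Adj x u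
  ncard_earlierNeighborSet : ∀ ⦃x⦄, k < rank σ x → (earlierNeighborSet G σ x).ncard = k
  isClique_earlierNeighborSet : ∀ ⦃x⦄, k < rank σ x → G.IsClique (earlierNeighborSet G σ x)

theorem isKTree_iff [Finite V] {G : SimpleGraph V} :
    IsKTree k G ↔ k + 1 ≤ Nat.card V ∧ ∃ σ : Fin (Nat.card V) ≃ V, IsKTreeOrdering k G σ := by
  refine and_congr_right fun _ => exists_congr fun σ => ?_
  rw [σ.forall_congr_left]
  simp only [Equiv.apply_symm_apply]
  exact ⟨fun h => ⟨fun x u hx hu => ((Set.ext_iff.1 ((h x).1 hx) u).2 hu).1,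
      fun x hx => ((h x).2 hx).1, fun x hx => ((h x).2 hx).2⟩,
    fun h x => ⟨fun hx => Set.ext fun u => ⟨And.right, fun hu => ⟨h.adj_of_rank_le hx hu, hu⟩⟩,
      fun hx => ⟨h.ncard_earlierNeighborSet hx, h.isClique_earlierNeighborSet hx⟩⟩⟩

namespace IsKTreeOrdering

variable {G : SimpleGraph V} {σ : Fin n ≃ V}

theorem adj_of_rank_le_of_rank_le (hσ : IsKTreeOrdering k G σ) {x y : V} (hx : rank σ x ≤ k)
    (hy : rank σ y ≤ k) (hxy : x ≠ y) : G.Adj x y := by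
  rcases ((rank_injective σ).ne hxy).lt_or_gt with h | h
  · exact (hσ.adj_of_rank_le hy h).symm
  · exact hσ.adj_of_rank_le hx h

theorem rank_le_of_isKSimplicial [Finite V] (hσ : IsKTreeOrdering k G σ) (hn : k + 1 ≤ n)
    {w x : V} (hw : IsKSimplicial G k w) (hwx : G.Adj w x) (hlt : rank σ w < rank σ x) :
    rank σ x ≤ k := by
  have mem_of_subset : ∀ T ⊆ G.neighborSet w, T.ncard = k → x ∈ T := fun T hT hTk =>
    (eq_of_subset_of_ncard_le hT (by rw [hw.2, hTk])).symm ▸ hwx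
  rcases le_or_gt (rank σ w) k with hwk | hwk
  · by_contra! hx
    have hT := mem_of_subset ({y | rank σ y < k + 1} \ {w})
      (fun y hy => hσ.adj_of_rank_le_of_rank_le hwk (Nat.lt_succ_iff.1 hy.1) (Ne.symm hy.2))
      (by rw [ncard_sdiff_singleton_of_mem (by simpa [Nat.lt_succ_iff]), ncard_rank_lt σ hn]; rfl)
    exact absurd hT.1 (by simp only [mem_ofPred_eq]; omega)
  · exact absurd (mem_of_subset _ (fun y hy => hy.1) (hσ.ncard_earlierNeighborSet hwk)).2
      hlt.not_gt

theorem not_adj_of_isKSimplicial [Finite V] (hσ : IsKTreeOrdering k G σ) (hn : k + 2 ≤ n)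
    {a b : V} (ha : IsKSimplicial G k a) (hb : IsKSimplicial G k b) : ¬ G.Adj a b := by
  wlog hab : rank σ a < rank σ b generalizing a b
  · exact fun hadj => this hb ha (lt_of_le_of_ne (not_lt.1 hab)
      ((rank_injective σ).ne (G.ne_of_adj hadj).symm)) hadj.symm
  intro hadj
  have hbk : rank σ b ≤ k := hσ.rank_le_of_isKSimplicial (by omega) ha hadj hab
  -- the vertex `z` of rank `k + 1` sees all but one of the `k + 1` vertices before it
  set z := σ ⟨k + 1, by omega⟩
  have hz : rank σ z = k + 1 := rank_apply σ _
  have hE : earlierNeighborSet G σ z ⊆ {y | rank σ y < k + 1} := fun y hy => hz ▸ hy.2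
  obtain ⟨c, hc, hcz⟩ : ∃ c, IsKSimplicial G k c ∧ c ∈ earlierNeighborSet G σ z := by
    by_contra! h
    have hsub : {a, b} ⊆ {y | rank σ y < k + 1} \ earlierNeighborSet G σ z := by
      rintro y (rfl | rfl)
      exacts [⟨by simp only [mem_ofPred_eq]; omega, h y ha⟩,
        ⟨by simp only [mem_ofPred_eq]; omega, h y hb⟩]
    have := ncard_le_ncard hsub
    rw [ncard_pair (G.ne_of_adj hadj), ncard_sdiff hE, ncard_rank_lt σ (by omega),
      hσ.ncard_earlierNeighborSet (by omega)] at this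
    omega
  have := hσ.rank_le_of_isKSimplicial (by omega) hc hcz.1.symm hcz.2
  omega

theorem isKSimplicial_of_forall_adj_rank_lt [Finite V] (hσ : IsKTreeOrdering k G σ) {x : V}
    (hx : k ≤ rank σ x) (hlater : ∀ u, G.Adj x u → rank σ u < rank σ x) :
    IsKSimplicial G k x := by
  have hN : G.neighborSet x = earlierNeighborSet G σ x :=
    Set.ext fun u => ⟨fun hu => ⟨hu, hlater u hu⟩, And.left⟩
  rcases hx.lt_or_eq with hx | hx
  · rw [IsKSimplicial, hN]
    exact ⟨hσ.isClique_earlierNeighborSet hx, hσ.ncard_earlierNeighborSet hx⟩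
  · have hE : earlierNeighborSet G σ x = {u | rank σ u < k} := Set.ext fun u =>
      ⟨fun hu => hx ▸ hu.2, fun hu => ⟨hσ.adj_of_rank_le hx.ge (hx ▸ hu), hx ▸ hu⟩⟩
    rw [IsKSimplicial, hN, hE]
    exact ⟨fun u hu v hv huv => hσ.adj_of_rank_le_of_rank_le (le_of_lt hu) (le_of_lt hv) huv,
      ncard_rank_lt σ (hx ▸ rank_lt σ x).le⟩

theorem exists_isKSimplicial [Finite V] (hσ : IsKTreeOrdering k G σ) (hn : k + 1 ≤ n) :
    ∃ z, IsKSimplicial G k z := by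
  set z := σ ⟨n - 1, by omega⟩
  have hz : rank σ z = n - 1 := rank_apply σ _
  refine ⟨z, hσ.isKSimplicial_of_forall_adj_rank_lt (by omega) fun u hu => ?_⟩
  have := (rank_injective σ).ne (G.ne_of_adj hu).symm
  have := rank_lt σ u
  omega

theorem induce [Finite V] (hσ : IsKTreeOrdering k G σ) {s : Set V} {m : ℕ} {τ : Fin m ≃ s}
    (hτ : ∀ u v, rank τ u < rank τ v ↔ rank σ u < rank σ v)
    (hs : ∀ x ∈ s, k < rank σ x → earlierNeighborSet G σ x ⊆ s) :
    IsKTreeOrdering k (G.induce s) τ := by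
  have hrank (u : s) : rank τ u = ({y | rank σ y < rank σ u} ∩ s).ncard := by
    rw [rank_eq_ncard τ, ← ncard_image_of_injective _ Subtype.val_injective]
    congr 1
    ext y
    simp [hτ]
  have hle (u : s) : rank τ u ≤ rank σ u :=
    (hrank u).trans_le ((ncard_le_ncard inter_subset_left).trans_eq (rank_eq_ncard σ u).symm)
  have hback (u : s) :
      earlierNeighborSet (G.induce s) τ u = Subtype.val ⁻¹' earlierNeighborSet G σ u := by
    ext v
    simp [earlierNeighborSet, hτ]
  refine ⟨fun u v hu hv => ?_, fun u hu => ?_, fun u hu => ?_⟩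
  · rw [hτ] at hv
    rw [SimpleGraph.comap_adj]
    by_cases hk : rank σ u ≤ k
    · exact hσ.adj_of_rank_le hk hv
    rw [not_le] at hk
    have hE : earlierNeighborSet G σ u = {y | rank σ y < rank σ u} ∩ s :=
      eq_of_subset_of_ncard_le (fun y hy => ⟨hy.2, hs u u.2 hk hy⟩)
        (by rw [← hrank, hσ.ncard_earlierNeighborSet hk]; exact hu)
    have hv' : (v : V) ∈ earlierNeighborSet G σ u := hE ▸ ⟨hv, v.2⟩
    exact hv'.1
  · have hk := hu.trans_le (hle u)
    rw [hback, ncard_preimage_of_injective_subset_range Subtype.val_injective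
      (by simpa using hs u u.2 hk), hσ.ncard_earlierNeighborSet hk]
  · have hk := hu.trans_le (hle u)
    rw [hback, SimpleGraph.isClique_induce_iff, Subtype.image_preimage_coe,
      inter_eq_right.2 (hs u u.2 hk)]
    exact hσ.isClique_earlierNeighborSet hk

end IsKTreeOrdering

end KTree

open KTree

section

variable {V : Type*} {k : ℕ} {G : SimpleGraph V}

theorem IsKTree.exists_isKSimplicial [Finite V] (h : IsKTree k G) : ∃ z, IsKSimplicial G k z :=
  let ⟨hn, _, hσ⟩ := isKTree_iff.1 h
  hσ.exists_isKSimplicial hn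

theorem IsKTree.not_adj_of_isKSimplicial [Finite V] (h : IsKTree k G) (hn : k + 2 ≤ Nat.card V)
    {a b : V} (ha : IsKSimplicial G k a) (hb : IsKSimplicial G k b) : ¬ G.Adj a b :=
  let ⟨_, _, hσ⟩ := isKTree_iff.1 h
  hσ.not_adj_of_isKSimplicial hn ha hb

theorem IsKTree.induce_compl [Finite V] (h : IsKTree k G) {S : Set V}
    (hS : ∀ w ∈ S, IsKSimplicial G k w) (hcard : k + 1 ≤ Sᶜ.ncard) :
    IsKTree k (G.induce Sᶜ) := by
  obtain ⟨hn, σ, hσ⟩ := isKTree_iff.1 h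
  obtain ⟨τ, hτ⟩ := exists_equiv_fin_rank_lt_iff (f := fun u : ↥Sᶜ => rank σ u)
    ((rank_injective σ).comp Subtype.val_injective)
  refine isKTree_iff.2 ⟨by rwa [Nat.card_coe_set_eq], τ, hσ.induce hτ fun x _ hkx y hy hyS => ?_⟩
  exact (hσ.rank_le_of_isKSimplicial hn (hS y hyS) hy.1.symm hy.2).not_gt hkx

theorem isKSimplicial_induce_iff {s : Set V} {v : s} :
    IsKSimplicial (G.induce s) k v ↔
      G.IsClique (G.neighborSet v ∩ s) ∧ (G.neighborSet v ∩ s).ncard = k := by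
  rw [IsKSimplicial, SimpleGraph.neighborSet_induce, SimpleGraph.isClique_induce_iff,
    ← ncard_image_of_injective _ Subtype.val_injective, Subtype.image_preimage_coe, inter_comm]

theorem nonempty_iso_top_of_isKSimplicial [Finite V] {s : Set V} {z : V}
    (hz : IsKSimplicial G k z) (hzs : G.neighborSet z ⊆ s) (hs : s.ncard ≤ k) :
    Nonempty (G.induce s ≃g (⊤ : SimpleGraph (Fin k))) := by
  obtain rfl : G.neighborSet z = s := eq_of_subset_of_ncard_le hzs (hz.2 ▸ hs)
  rw [SimpleGraph.induce_eq_top.2 hz.1]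
  exact ⟨SimpleGraph.Iso.completeGraph (Finite.equivFinOfCardEq (Nat.card_coe_set_eq _ ▸ hz.2))⟩

theorem Set.existsUnique_eq_insert_sdiff_singleton {α : Type*} {N A : Set α} {v : α}
    (hA : A.Finite) (hvN : v ∈ N) (hvA : v ∉ A) (hNA : N \ {v} ⊆ A) (hcard : N.ncard = A.ncard) :
    ∃! u, u ∈ A ∧ N = insert v A \ {u} := by
  have hN : N.Finite := (hA.subset hNA).of_sdiff (finite_singleton v)
  have hone : (A \ (N \ {v})).ncard = 1 := by
    have := (ncard_pos hN).2 ⟨v, hvN⟩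
    rw [ncard_sdiff hNA (hA.subset hNA), ncard_sdiff_singleton_of_mem hvN, ← hcard]
    omega
  obtain ⟨u, hu⟩ := ncard_eq_one.1 hone
  have hmem : ∀ x, x ∈ A ∧ ¬ (x ∈ N ∧ x ≠ v) ↔ x = u := by
    simpa [Set.ext_iff] using hu
  refine ⟨u, ⟨((hmem u).2 rfl).1, ?_⟩, fun u' ⟨hu'A, hu'⟩ => ?_⟩
  · ext x
    grind
  · subst hu'
    exact (hmem u').1 ⟨hu'A, fun h => h.1.2 rfl⟩

theorem existsUnique_neighborSet_eq [Finite V] {R : Set V} {v w : V}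
    (hw : IsKSimplicial G k w) (hwR : ∀ x ∈ R, ¬ G.Adj w x) (hvw : G.Adj v w)
    (hv : (G.neighborSet v \ R).ncard = k) :
    ∃! u, u ∈ G.neighborSet v \ R ∧ G.neighborSet w = insert v (G.neighborSet v \ R) \ {u} :=
  Set.existsUnique_eq_insert_sdiff_singleton (toFinite _) hvw.symm (fun h => G.irrefl h.1)
    (fun x ⟨hx, hxv⟩ => ⟨hw.1 hvw.symm hx (Ne.symm hxv), fun hxR => hwR x hxR hx⟩)
    (hw.2.trans hv.symm)

end

theorem ktree_partition_lemma_general {V : Type*} [Finite V] (k : ℕ)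
    (G : SimpleGraph V) (h : IsKTree k G) :
    ∃ S : Set V, S.Nonempty ∧ (∀ v ∈ S, IsKSimplicial G k v) ∧
      (∀ u ∈ S, ∀ w ∈ S, ¬ G.Adj u w) ∧
      (Nonempty ((G.induce Sᶜ) ≃g (⊤ : SimpleGraph (Fin k))) ∨
        (IsKTree k (G.induce Sᶜ) ∧
          ∃ v, v ∉ S ∧ G.IsClique (G.neighborSet v \ S) ∧ (G.neighborSet v \ S).ncard = k ∧
            (∀ w ∈ S, ∃! u, u ∈ G.neighborSet v \ S ∧
              G.neighborSet w = insert v (G.neighborSet v \ S) \ {u}) ∧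
            (∀ x, IsKSimplicial G k x → x ∉ S → ¬ G.Adj x v))) := by
  obtain ⟨z, hz⟩ := h.exists_isKSimplicial
  rcases h.1.eq_or_lt with hn | hn
  · refine ⟨{z}, singleton_nonempty z, by simpa using hz, by simp, Or.inl ?_⟩
    refine nonempty_iso_top_of_isKSimplicial hz (fun u hu => (G.ne_of_adj hu).symm) ?_
    rw [ncard_compl, ncard_singleton]
    omega
  set R : Set V := {w | IsKSimplicial G k w}
  have hR : ∀ u ∈ R, ∀ w ∈ R, ¬ G.Adj u w := fun _ hu _ hw => h.not_adj_of_isKSimplicial hn hu hw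
  by_cases hRc : Rᶜ.ncard ≤ k
  · exact ⟨R, ⟨z, hz⟩, fun _ => id, hR,
      Or.inl (nonempty_iso_top_of_isKSimplicial hz (fun u hu huR => hR z hz u huR hu) hRc)⟩
  obtain ⟨v, hv⟩ := (h.induce_compl (S := R) (fun _ => id) (not_le.1 hRc)).exists_isKSimplicial
  rw [isKSimplicial_induce_iff, ← sdiff_eq] at hv
  set S := G.neighborSet v ∩ R
  have hSR : S ⊆ R := inter_subset_right
  have hNS : G.neighborSet v \ S = G.neighborSet v \ R := by
    ext
    simp [S]
  have hS : S.Nonempty := by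
    by_contra hS
    rw [not_nonempty_iff_eq_empty] at hS
    exact v.2 (show IsKSimplicial G k v by simpa [IsKSimplicial, ← hNS, hS] using hv)
  refine ⟨S, hS, fun w hw => hSR hw, fun u hu w hw => hR u (hSR hu) w (hSR hw), Or.inr
    ⟨h.induce_compl (fun w hw => hSR hw)
      ((not_le.1 hRc).trans_le (ncard_le_ncard (compl_subset_compl.2 hSR))),
      v, fun hvS => v.2 (hSR hvS), hNS ▸ hv.1, hNS ▸ hv.2,
      fun w hw => hNS ▸ existsUnique_neighborSet_eq (hSR hw) (hR w (hSR hw)) hw.1 hv.2,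
      fun x hx hxS hxv => hxS ⟨hxv.symm, hx⟩⟩⟩

/-- Lemma 11 (Partition) of Dujmović–Wood. -/
theorem ktree_partition_lemma {V : Type*} [Finite V] (k : ℕ) (hk : 1 ≤ k)
    (G : SimpleGraph V) (h : IsKTree k G) :
    ∃ S : Set V, S.Nonempty ∧ (∀ v ∈ S, IsKSimplicial G k v) ∧
      (∀ u ∈ S, ∀ w ∈ S, ¬ G.Adj u w) ∧
      (Nonempty ((G.induce Sᶜ) ≃g (⊤ : SimpleGraph (Fin k))) ∨
        (IsKTree k (G.induce Sᶜ) ∧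
          ∃ v, v ∉ S ∧ G.IsClique (G.neighborSet v \ S) ∧ (G.neighborSet v \ S).ncard = k ∧
            (∀ w ∈ S, ∃! u, u ∈ G.neighborSet v \ S ∧
              G.neighborSet w = insert v (G.neighborSet v \ S) \ {u}) ∧
            (∀ x, IsKSimplicial G k x → x ∉ S → ¬ G.Adj x v))) :=
  ktree_partition_lemma_general k G h
end

section
/- Let k ≥ 2, let ℓ = k - 1, and let s = 2ℓ^k + 1. Consider the complete split graph K*_{k,s}, obtained from a k-clique K by adding s independent vertices each adjacent to all of K. Then in every partition of the edge set of K*_{k,s} into ℓ parts, some part contains a subgraph isomorphic to K_{2,3}. Consequently the outerthickness of K*_{k,s} is at least k. -/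
/-! Colour each vertex `w` of the independent side by its colour vector `u ↦ c s(u, w)`. There
are at most `ℓ ^ k` such vectors, so among `2 ℓ ^ k + 1` vertices three share one, by pigeonhole.
That common vector assigns `ℓ = k - 1` colours to the `k` clique vertices, so two of them get
the same colour `i`; these two clique vertices and the three independent ones span a copy of
`K_{2,3}` all of whose edges have colour `i`. -/

/-- The complete split graph `K*_{k,s}`: a `k`-clique plus `s` independent vertices
each adjacent to every vertex of the clique. -/
def completeSplitGraph (k s : ℕ) : SimpleGraph (Fin k ⊕ Fin s) :=
  SimpleGraph.fromRel (fun a _ => a.isLeft = true)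

theorem completeSplitGraph_adj_inl_inr {k s : ℕ} (u : Fin k) (w : Fin s) :
    (completeSplitGraph k s).Adj (Sum.inl u) (Sum.inr w) := by
  simp [completeSplitGraph]

theorem Fintype.exists_embedding_fin_succ_of_mul_lt_card {α β : Type*} [Fintype α] [Fintype β]
    [DecidableEq β] (f : α → β) {n : ℕ} (h : Fintype.card β * n < Fintype.card α) :
    ∃ (y : β) (e : Fin (n + 1) ↪ α), ∀ m, f (e m) = y := by
  obtain ⟨y, hy⟩ := Fintype.exists_lt_card_fiber_of_mul_lt_card f h
  have hcard : Fintype.card (Fin (n + 1)) ≤ Fintype.card {x // f x = y} := by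
    rw [Fintype.card_fin, Fintype.card_subtype]
    exact hy
  obtain ⟨e⟩ := Function.Embedding.nonempty_of_card_le hcard
  exact ⟨y, e.trans (Function.Embedding.subtype _), fun m => (e m).2⟩

theorem SimpleGraph.forall_completeBipartiteGraph_adj_sumMap {ι κ α β : Type*}
    {P : Sym2 (α ⊕ β) → Prop} (a : ι ↪ α) (b : κ ↪ β)
    (hP : ∀ i j, P s(Sum.inl (a i), Sum.inr (b j))) :
    ∀ u v, (completeBipartiteGraph ι κ).Adj u v → P s(a.sumMap b u, a.sumMap b v) := by
  rintro (i | i) (j | j) hadj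
  · simp at hadj
  · exact hP i j
  · rw [Sym2.eq_swap]
    exact hP j i
  · simp at hadj

/-- For `k ≥ 2`, `ℓ = k-1`, `s = 2ℓ^k+1`: every partition of the edges of the complete
split graph `K*_{k,s}` into `ℓ` parts has a part containing a copy of `K_{2,3}`. -/
theorem completeSplitGraph_outerthickness (k : ℕ) (hk : 2 ≤ k)
    (c : Sym2 (Fin k ⊕ Fin (2 * (k - 1) ^ k + 1)) → Fin (k - 1)) :
    ∃ (i : Fin (k - 1)) (g : (Fin 2 ⊕ Fin 3) ↪ (Fin k ⊕ Fin (2 * (k - 1) ^ k + 1))),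
      ∀ u v, (completeBipartiteGraph (Fin 2) (Fin 3)).Adj u v →
        (completeSplitGraph k (2 * (k - 1) ^ k + 1)).Adj (g u) (g v) ∧
        c s(g u, g v) = i := by
  let colourVector : Fin (2 * (k - 1) ^ k + 1) → Fin k → Fin (k - 1) :=
    fun w u => c s(Sum.inl u, Sum.inr w)
  obtain ⟨v, b, hb⟩ := Fintype.exists_embedding_fin_succ_of_mul_lt_card colourVector (n := 2)
    (by simp only [Fintype.card_fun, Fintype.card_fin]; omega)
  obtain ⟨i, a, ha⟩ := Fintype.exists_embedding_fin_succ_of_mul_lt_card v (n := 1)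
    (by simp only [Fintype.card_fin]; omega)
  refine ⟨i, a.sumMap b, fun u w hadj => ?_⟩
  rw [← SimpleGraph.mem_edgeSet]
  refine SimpleGraph.forall_completeBipartiteGraph_adj_sumMap
    (P := fun e => e ∈ (completeSplitGraph _ _).edgeSet ∧ c e = i) a b
    (fun j m => ⟨completeSplitGraph_adj_inl_inr _ _, ?_⟩) u w hadj
  rw [← ha j, ← hb m]
end

section
/- For every k ≥ 1 there exists a graph of treewidth k whose star-arboricity is at least k+1. Explicitly, let s = k^k + 1 and let G be obtained from the complete split graph K*_{k,s} (k-clique K plus independent set S of size s joined completely to K) by attaching a pendant vertex to each vertex of S. Then G has treewidth k and the edges of G cannot be partitioned into k star-forests. -/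
/-- `G` has treewidth at most `k`: it is a subgraph of some `k`-tree. -/
def HasTreewidthAtMost {V : Type*} (k : ℕ) (G : SimpleGraph V) : Prop :=
  ∃ (n : ℕ) (H : SimpleGraph (Fin n)), IsKTree k H ∧
    ∃ f : V ↪ Fin n, ∀ u v, G.Adj u v → H.Adj (f u) (f v)

/-- A star forest: every vertex of degree at least 2 has only degree-1 neighbours,
so every connected component is a star. -/
def IsStarForest {V : Type*} (H : SimpleGraph V) : Prop :=
  ∀ v, 2 ≤ (H.neighborSet v).ncard → ∀ u, H.Adj v u → (H.neighborSet u).ncard = 1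

/-- The edge set of `G` can be partitioned into `t` star forests. -/
def HasStarArboricityAtMost {V : Type*} (t : ℕ) (G : SimpleGraph V) : Prop :=
  ∃ H : Fin t → SimpleGraph V, (∀ i, IsStarForest (H i)) ∧ (∀ i, H i ≤ G) ∧
    ∀ u v, G.Adj u v → ∃! i, (H i).Adj u v

/-- The complete split graph `K*_{k,s}` together with a pendant vertex attached to each
vertex of the independent set `S`. -/
def pendantSplit (k s : ℕ) : SimpleGraph ((Fin k ⊕ Fin s) ⊕ Fin s) :=
  SimpleGraph.fromRel (fun a b =>
    (∃ x y, a = Sum.inl x ∧ b = Sum.inl y ∧ (completeSplitGraph k s).Adj x y) ∨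
    (∃ y : Fin s, a = Sum.inl (Sum.inr y) ∧ b = Sum.inr y))

def relH (k s : ℕ) (p q : Fin (k + s + s)) : Prop :=
  ((p : ℕ) < k ∧ (q : ℕ) < k + s) ∨
  (k + s ≤ (p : ℕ) ∧ ((q : ℕ) + 1 < k ∨ (q : ℕ) + s = (p : ℕ)))

def Htree (k s : ℕ) : SimpleGraph (Fin (k + s + s)) := SimpleGraph.fromRel (relH k s)

lemma htree_adj {k s : ℕ} {p q : Fin (k + s + s)} :
    (Htree k s).Adj p q ↔ (p : ℕ) ≠ (q : ℕ) ∧ (relH k s p q ∨ relH k s q p) := by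
  rw [Htree, SimpleGraph.fromRel_adj]
  simp [Fin.ext_iff]

lemma ncard_val_lt (n m : ℕ) (h : m ≤ n) : {u : Fin n | (u : ℕ) < m}.ncard = m := by
  have heq : {u : Fin n | (u : ℕ) < m} = Set.range (Fin.castLE h) := by
    ext u
    constructor
    · intro hu; exact ⟨⟨(u : ℕ), hu⟩, Fin.ext rfl⟩
    · rintro ⟨v, rfl⟩; exact v.isLt
  rw [heq, ← Nat.card_coe_set_eq, Nat.card_range_of_injective (Fin.castLE_injective h)]
  simp

lemma tw_upper (k s : ℕ) (hk : 1 ≤ k) (hs : 1 ≤ s) :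
    HasTreewidthAtMost k (pendantSplit k s) := by
  have hcard : Nat.card (Fin (k + s + s)) = k + s + s := by simp
  have hval1 : ∀ i : Fin (Nat.card (Fin (k + s + s))),
      ((finCongr hcard i : Fin (k + s + s)) : ℕ) = (i : ℕ) := fun _ => rfl
  have hval2 : ∀ u : Fin (k + s + s),
      (((finCongr hcard).symm u : Fin (Nat.card (Fin (k + s + s)))) : ℕ) = (u : ℕ) :=
    fun _ => rfl
  refine ⟨k + s + s, Htree k s, ⟨by rw [hcard]; omega, ?_⟩, ?_⟩
  · refine ⟨finCongr hcard, fun i => ⟨?_, ?_⟩⟩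
    · -- i ≤ k
      intro hik
      ext u
      simp only [Set.mem_setOf_eq, htree_adj, hval1, hval2, relH]
      omega
    · -- i > k
      intro hik
      by_cases hbc : (i : ℕ) < k + s
      · -- a vertex of S : back-neighbourhood is the clique A
        have heq : {u | (Htree k s).Adj (finCongr hcard i) u ∧
            (((finCongr hcard).symm u : Fin (Nat.card (Fin (k+s+s)))) : ℕ) < (i : ℕ)} =
            {u : Fin (k + s + s) | (u : ℕ) < k} := by
          ext u
          simp only [Set.mem_setOf_eq, htree_adj, hval1, hval2, relH]
          omega
        rw [heq]
        refine ⟨ncard_val_lt _ _ (by omega), ?_⟩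
        intro u hu v hv huv
        simp only [Set.mem_setOf_eq] at hu hv
        rw [htree_adj]
        refine ⟨Fin.val_ne_of_ne huv, ?_⟩
        simp only [relH]
        omega
      · -- a pendant vertex
        have heq : {u | (Htree k s).Adj (finCongr hcard i) u ∧
            (((finCongr hcard).symm u : Fin (Nat.card (Fin (k+s+s)))) : ℕ) < (i : ℕ)} =
            {u : Fin (k + s + s) | (u : ℕ) + 1 < k ∨ (u : ℕ) + s = (i : ℕ)} := by
          ext u
          simp only [Set.mem_setOf_eq, htree_adj, hval1, hval2, relH]
          omega
        rw [heq]
        have hin : (i : ℕ) < k + s + s := by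
          have := i.isLt; omega
        constructor
        · have h2 : {u : Fin (k + s + s) | (u : ℕ) + 1 < k ∨ (u : ℕ) + s = (i : ℕ)} =
              insert (⟨(i : ℕ) - s, by omega⟩ : Fin (k + s + s))
                {u : Fin (k + s + s) | (u : ℕ) + 1 < k} := by
            ext u
            simp only [Set.mem_setOf_eq, Set.mem_insert_iff, Fin.ext_iff]
            omega
          have h3 : {u : Fin (k + s + s) | (u : ℕ) + 1 < k} =
              {u : Fin (k + s + s) | (u : ℕ) < k - 1} := by
            ext u; simp only [Set.mem_setOf_eq]; omega
          rw [h2, Set.ncard_insert_of_notMem (by simp only [Set.mem_setOf_eq]; simp; omega),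
            h3, ncard_val_lt _ _ (by omega)]
          omega
        · intro u hu v hv huv
          simp only [Set.mem_setOf_eq] at hu hv
          rw [htree_adj]
          refine ⟨Fin.val_ne_of_ne huv, ?_⟩
          have hne := Fin.val_ne_of_ne huv
          simp only [relH]
          omega
  · -- the embedding
    set fv : (Fin k ⊕ Fin s) ⊕ Fin s → Fin (k + s + s) := fun v => match v with
      | .inl (.inl x) => ⟨(x : ℕ), by omega⟩
      | .inl (.inr j) => ⟨k + (j : ℕ), by omega⟩
      | .inr j => ⟨k + s + (j : ℕ), by omega⟩ with hfv
    have hinj : Function.Injective fv := by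
      rintro ((⟨x, hx⟩ | ⟨x, hx⟩) | ⟨x, hx⟩) ((⟨y, hy⟩ | ⟨y, hy⟩) | ⟨y, hy⟩) h <;>
        simp only [hfv, Fin.mk.injEq] at h <;>
        first
          | (simp only [Sum.inl.injEq, Sum.inr.injEq, Fin.mk.injEq]; omega)
          | (exfalso; omega)
    refine ⟨⟨fv, hinj⟩, ?_⟩
    have main : ∀ a b : (Fin k ⊕ Fin s) ⊕ Fin s,
        ((∃ x y, a = Sum.inl x ∧ b = Sum.inl y ∧ (completeSplitGraph k s).Adj x y) ∨
         (∃ y : Fin s, a = Sum.inl (Sum.inr y) ∧ b = Sum.inr y)) →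
        (Htree k s).Adj (fv a) (fv b) := by
      rintro a b (⟨x, y, rfl, rfl, hxy⟩ | ⟨y, rfl, rfl⟩)
      · rw [completeSplitGraph, SimpleGraph.fromRel_adj] at hxy
        obtain ⟨hne, hleft⟩ := hxy
        rcases x with x | xj <;> rcases y with y | yj
        · have : (x : ℕ) ≠ (y : ℕ) := Fin.val_ne_of_ne (by simpa using hne)
          rw [htree_adj]
          exact ⟨by simpa [hfv] using this, Or.inl (Or.inl ⟨by simp [hfv] <;> omega, by simp [hfv] <;> omega⟩)⟩
        · rw [htree_adj]
          refine ⟨by simp [hfv] <;> omega, Or.inl (Or.inl ⟨by simp [hfv] <;> omega, by simp [hfv] <;> omega⟩)⟩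
        · rw [htree_adj]
          refine ⟨by simp [hfv] <;> omega, Or.inr (Or.inl ⟨by simp [hfv] <;> omega, by simp [hfv] <;> omega⟩)⟩
        · simp at hleft
      · rw [htree_adj]
        refine ⟨by simp [hfv] <;> omega, Or.inr (Or.inr ⟨by simp [hfv] <;> omega, Or.inr (by simp [hfv] <;> omega)⟩)⟩
    intro u v huv
    rw [pendantSplit, SimpleGraph.fromRel_adj] at huv
    rcases huv.2 with h | h
    · exact main u v h
    · exact (main v u h).symm

lemma tw_lower (k s : ℕ) (hk : 1 ≤ k) (hs : 1 ≤ s) :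
    ¬ HasTreewidthAtMost (k - 1) (pendantSplit k s) := by
  rintro ⟨n, H, ⟨hn, σ, hσ⟩, f, hf⟩
  -- the (k+1)-clique in pendantSplit
  set v : Fin (k + 1) → (Fin k ⊕ Fin s) ⊕ Fin s := fun m =>
    if h : (m : ℕ) < k then Sum.inl (Sum.inl ⟨(m : ℕ), h⟩)
    else Sum.inl (Sum.inr ⟨0, hs⟩) with hv
  have hvinj : Function.Injective v := by
    intro m m' h
    simp only [hv] at h
    split_ifs at h with h1 h2 h2 <;>
      [skip; exact absurd h (by simp); exact absurd h (by simp); skip]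
    · have : (m : ℕ) = (m' : ℕ) := by
        simpa [Fin.ext_iff] using h
      exact Fin.ext this
    · have hm := m.isLt
      have hm' := m'.isLt
      exact Fin.ext (by omega)
  have hvadj : ∀ m m', m ≠ m' → (pendantSplit k s).Adj (v m) (v m') := by
    intro m m' hmm'
    rw [pendantSplit, SimpleGraph.fromRel_adj]
    refine ⟨fun h => hmm' (hvinj h), ?_⟩
    simp only [hv]
    split_ifs with h1 h2 h2
    · refine Or.inl (Or.inl ⟨_, _, rfl, rfl, ?_⟩)
      rw [completeSplitGraph, SimpleGraph.fromRel_adj]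
      refine ⟨?_, by simp⟩
      simp only [ne_eq, Sum.inl.injEq, Fin.mk.injEq]
      intro h
      exact hmm' (Fin.ext h)
    · exact Or.inl (Or.inl ⟨_, _, rfl, rfl, by
        rw [completeSplitGraph, SimpleGraph.fromRel_adj]; exact ⟨by simp, by simp⟩⟩)
    · exact Or.inr (Or.inl ⟨_, _, rfl, rfl, by
        rw [completeSplitGraph, SimpleGraph.fromRel_adj]; exact ⟨by simp, by simp⟩⟩)
    · exfalso
      have hm := m.isLt; have hm' := m'.isLt
      exact hmm' (Fin.ext (by omega))
  -- positions
  set p : Fin (k + 1) → ℕ := fun m => ((σ.symm (f (v m))) : ℕ) with hp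
  have hpinj : Function.Injective p := by
    intro m m' h
    exact hvinj (f.injective (σ.symm.injective (Fin.ext h)))
  obtain ⟨m₀, -, hmax⟩ := Finset.exists_max_image (Finset.univ : Finset (Fin (k + 1))) p
    ⟨0, Finset.mem_univ _⟩
  have hge : k ≤ p m₀ := by
    by_contra hlt
    push_neg at hlt
    have : (Finset.univ : Finset (Fin (k + 1))).card ≤ (Finset.range k).card :=
      Finset.card_le_card_of_injOn p
        (fun m _ => Finset.mem_range.mpr (lt_of_le_of_lt (hmax m (Finset.mem_univ m))
          (by omega : p m₀ < k)))
        (fun a _ b _ h => hpinj h)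
    rw [Finset.card_univ, Fintype.card_fin, Finset.card_range] at this
    omega
  set i : Fin (Nat.card (Fin n)) := σ.symm (f (v m₀)) with hi
  have hip : (i : ℕ) = p m₀ := rfl
  obtain ⟨hcard', -⟩ := (hσ i).2 (by omega : k - 1 < (i : ℕ))
  -- the other clique vertices lie in the back-neighbourhood
  have hsub : (fun m => f (v m)) '' {m | m ≠ m₀} ⊆
      {u | H.Adj (σ i) u ∧ ((σ.symm u : Fin (Nat.card (Fin n))) : ℕ) < (i : ℕ)} := by
    rintro - ⟨m, hm, rfl⟩
    have hσi : σ i = f (v m₀) := σ.apply_symm_apply _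
    have hm' : m ≠ m₀ := hm
    constructor
    · rw [hσi]
      exact hf _ _ (hvadj m₀ m (Ne.symm hm'))
    · show ((σ.symm (f (v m)) : Fin (Nat.card (Fin n))) : ℕ) < (i : ℕ)
      have h1 : ((σ.symm (f (v m)) : Fin (Nat.card (Fin n))) : ℕ) = p m := rfl
      have h2 : p m ≤ p m₀ := hmax m (Finset.mem_univ m)
      have h3 : p m ≠ p m₀ := fun h => hm' (hpinj h)
      omega
  have himg : ((fun m => f (v m)) '' {m | m ≠ m₀}).ncard = k := by
    rw [Set.ncard_image_of_injective _ (fun a b h => hvinj (f.injective h))]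
    have h4 : {m : Fin (k + 1) | m ≠ m₀} = Set.univ \ {m₀} := by ext; simp
    rw [h4, Set.ncard_diff_singleton_of_mem (Set.mem_univ _), Set.ncard_univ]
    simp
  have hle := Set.ncard_le_ncard hsub (Set.toFinite _)
  rw [hcard', himg] at hle
  omega

lemma ps_adj_ba (k s : ℕ) (j : Fin s) (x : Fin k) :
    (pendantSplit k s).Adj (Sum.inl (Sum.inr j)) (Sum.inl (Sum.inl x)) := by
  rw [pendantSplit, SimpleGraph.fromRel_adj]
  refine ⟨by simp, Or.inl (Or.inl ⟨_, _, rfl, rfl, ?_⟩)⟩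
  rw [completeSplitGraph, SimpleGraph.fromRel_adj]
  simp

lemma ps_adj_bc (k s : ℕ) (j : Fin s) :
    (pendantSplit k s).Adj (Sum.inl (Sum.inr j)) (Sum.inr j) := by
  rw [pendantSplit, SimpleGraph.fromRel_adj]
  exact ⟨by simp, Or.inl (Or.inr ⟨j, rfl, rfl⟩)⟩

lemma sa_lower (k : ℕ) (hk : 1 ≤ k) :
    ¬ HasStarArboricityAtMost k (pendantSplit k (k ^ k + 1)) := by
  set s := k ^ k + 1 with hs
  rintro ⟨H, hSF, -, hcol⟩
  -- colour of edge b_j -- a_x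
  have hchoice : ∀ (j : Fin s) (x : Fin k), ∃ i, (H i).Adj (Sum.inl (Sum.inr j)) (Sum.inl (Sum.inl x)) :=
    fun j x => (hcol _ _ (ps_adj_ba k s j x)).exists
  choose vec hvec using hchoice
  -- pigeonhole
  obtain ⟨j, j', hjj', hv⟩ : ∃ j j', j ≠ j' ∧ vec j = vec j' := by
    obtain ⟨j, j', h1, h2⟩ := Fintype.exists_ne_map_eq_of_card_lt vec (by simp [hs])
    exact ⟨j, j', h1, h2⟩
  -- key: b_j has no H (vec j x) neighbour besides a_x
  have key : ∀ (x : Fin k) (w : (Fin k ⊕ Fin s) ⊕ Fin s), w ≠ Sum.inl (Sum.inl x) →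
      (H (vec j x)).Adj (Sum.inl (Sum.inr j)) w → False := by
    intro x w hw hadj
    have h1 : (H (vec j x)).Adj (Sum.inl (Sum.inr j)) (Sum.inl (Sum.inl x)) := hvec j x
    have h2 : (H (vec j x)).Adj (Sum.inl (Sum.inr j')) (Sum.inl (Sum.inl x)) := by
      have := hvec j' x; rwa [← hv] at this
    have hdeg : 2 ≤ ((H (vec j x)).neighborSet (Sum.inl (Sum.inl x))).ncard := by
      rw [show (2:ℕ) = 1 + 1 from rfl, Nat.add_one_le_iff, Set.one_lt_ncard]
      exact ⟨_, h1.symm, _, h2.symm, by simp [hjj']⟩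
    have hone := hSF (vec j x) _ hdeg _ h1.symm
    have : 2 ≤ ((H (vec j x)).neighborSet (Sum.inl (Sum.inr j))).ncard := by
      rw [show (2:ℕ) = 1 + 1 from rfl, Nat.add_one_le_iff, Set.one_lt_ncard]
      exact ⟨_, h1, _, hadj, fun h => hw h.symm⟩
    omega
  -- vec j is injective, hence surjective
  have hinj : Function.Injective (vec j) := by
    intro x x' hxx'
    by_contra hne
    exact key x (Sum.inl (Sum.inl x'))
      (by simp only [ne_eq, Sum.inl.injEq]; exact fun h => hne h.symm)
      (hxx' ▸ hvec j x')
  have hsurj := Finite.injective_iff_surjective.mp hinj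
  -- pendant edge
  obtain ⟨c₀, hc₀, -⟩ := hcol _ _ (ps_adj_bc k s j)
  obtain ⟨x, hx⟩ := hsurj c₀
  exact key x (Sum.inr j) (by simp) (hx ▸ hc₀)

/-- For `k ≥ 1` and `s = k^k + 1`, the graph obtained from `K*_{k,s}` by attaching a
pendant vertex to each vertex of `S` has treewidth exactly `k` and its edges cannot be
partitioned into `k` star forests. -/
theorem exists_treewidth_starArboricity_succ (k : ℕ) (hk : 1 ≤ k) :
    HasTreewidthAtMost k (pendantSplit k (k ^ k + 1)) ∧
    ¬ HasTreewidthAtMost (k - 1) (pendantSplit k (k ^ k + 1)) ∧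
    ¬ HasStarArboricityAtMost k (pendantSplit k (k ^ k + 1)) :=
  ⟨tw_upper k (k ^ k + 1) hk (Nat.le_add_left 1 _),
   tw_lower k (k ^ k + 1) hk (Nat.le_add_left 1 _),
   sa_lower k hk⟩
end

section
/- Every k-tree has star-arboricity at most k+1; that is, its edge set can be partitioned into k+1 star-forests. -/
/-! Order the vertices as in the construction of the `k`-tree. Every vertex has at most `k`
earlier neighbours, so colouring greedily along the order gives a proper `(k+1)`-colouring, and
since the earlier neighbours of a vertex form a clique, they all receive distinct colours.
Put each edge into the class of the colour of its earlier endpoint. In class `c`, a vertex not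
of colour `c` is joined only to earlier neighbours of colour `c`, of which there is at most one,
and two vertices of colour `c` are never joined; so every edge of the class has an endpoint of
degree one, and the class is a star forest. -/

open Function

namespace SimpleGraph

variable {V α ι : Type*} {G : SimpleGraph V}

variable (G) in
def backNeighborSet [LT α] (r : V → α) (v : V) : Set V :=
  {u | G.Adj v u ∧ r u < r v}

theorem IsClique.injOn_coloring {s : Set V} (hs : G.IsClique s) (C : G.Coloring ι) :
    Set.InjOn C s :=
  fun _ ha _ hb hab => by_contra fun hne => C.valid (hs ha hb hne) hab

variable (G) in
noncomputable def greedyColor (r : V → ℕ) (k : ℕ) (v : V) : Fin (k + 1) :=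
  Classical.epsilon fun c => c ∉ Set.range fun u : G.backNeighborSet r v => greedyColor r k u
termination_by r v
decreasing_by exact u.2.2

theorem greedyColor_ne_of_mem_backNeighborSet {r : V → ℕ} {k : ℕ}
    (hdeg : ∀ v, (G.backNeighborSet r v).encard ≤ k) {u v : V}
    (hu : u ∈ G.backNeighborSet r v) : G.greedyColor r k u ≠ G.greedyColor r k v := by
  set used := Set.range fun w : G.backNeighborSet r v => G.greedyColor r k w
  have hfree : ∃ c, c ∉ used := by
    by_contra! hall
    have : (k + 1 : ℕ∞) ≤ k := calc
      (k + 1 : ℕ∞) = used.encard := by simp [Set.eq_univ_of_forall hall]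
      _ = (G.greedyColor r k '' G.backNeighborSet r v).encard := by rw [Set.image_eq_range]
      _ ≤ (G.backNeighborSet r v).encard := Set.encard_image_le _ _
      _ ≤ k := hdeg v
    have : k + 1 ≤ k := by exact_mod_cast this
    omega
  have hv : G.greedyColor r k v = Classical.epsilon (· ∉ used) := by rw [greedyColor]
  rw [hv]
  exact fun h => Classical.epsilon_spec hfree (h ▸ ⟨⟨u, hu⟩, rfl⟩)

theorem colorable_of_backNeighborSet_encard_le {r : V → ℕ} (hr : Injective r) {k : ℕ}
    (hdeg : ∀ v, (G.backNeighborSet r v).encard ≤ k) : G.Colorable (k + 1) := by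
  refine ⟨Coloring.mk (G.greedyColor r k) fun {u v} huv => ?_⟩
  rcases lt_or_gt_of_ne (hr.ne huv.ne) with h | h
  · exact greedyColor_ne_of_mem_backNeighborSet hdeg ⟨huv.symm, h⟩
  · exact (greedyColor_ne_of_mem_backNeighborSet hdeg ⟨huv, h⟩).symm

theorem isStarForest_of_forall_adj {H : SimpleGraph V}
    (h : ∀ u v, H.Adj u v → (H.neighborSet u).Subsingleton ∨ (H.neighborSet v).Subsingleton) :
    IsStarForest H := by
  intro v hv u huv
  have hv' : ¬ (H.neighborSet v).Subsingleton := fun hs =>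
    absurd hv (by have := hs.finite.to_subtype; simpa using hs)
  have hu := (h v u huv).resolve_left hv'
  exact Set.ncard_eq_one.mpr ⟨v, hu.eq_singleton_of_mem huv.symm⟩

variable (G) in
def starSubgraph [LT α] (r : V → α) (C : V → ι) (c : ι) : SimpleGraph V :=
  fromRel fun u v => G.Adj u v ∧ r u < r v ∧ C u = c

section StarSubgraph

variable [LinearOrder α] {r : V → α}

theorem starSubgraph_le (C : V → ι) (c : ι) : G.starSubgraph r C c ≤ G := by
  rintro u v ⟨-, ⟨huv, -⟩ | ⟨hvu, -⟩⟩
  exacts [huv, hvu.symm]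

theorem subsingleton_neighborSet_starSubgraph {C : V → ι}
    (hC : ∀ v, Set.InjOn C (G.backNeighborSet r v)) {c : ι} {v : V} (hv : C v ≠ c) :
    ((G.starSubgraph r C c).neighborSet v).Subsingleton := by
  have back : ∀ u ∈ (G.starSubgraph r C c).neighborSet v,
      u ∈ G.backNeighborSet r v ∧ C u = c := by
    rintro u ⟨-, ⟨-, -, hvc⟩ | ⟨huv, hlt, huc⟩⟩
    exacts [absurd hvc hv, ⟨⟨huv.symm, hlt⟩, huc⟩]
  intro a ha b hb
  obtain ⟨ha, hac⟩ := back a ha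
  obtain ⟨hb, hbc⟩ := back b hb
  exact hC v ha hb (hac.trans hbc.symm)

theorem isStarForest_starSubgraph (C : G.Coloring ι)
    (hC : ∀ v, Set.InjOn C (G.backNeighborSet r v)) (c : ι) :
    IsStarForest (G.starSubgraph r C c) := by
  refine isStarForest_of_forall_adj fun u v huv => ?_
  by_cases hu : C u = c
  · exact .inr (subsingleton_neighborSet_starSubgraph hC
      fun hv => C.valid (starSubgraph_le C c huv) (hu.trans hv.symm))
  · exact .inl (subsingleton_neighborSet_starSubgraph hC hu)

theorem existsUnique_starSubgraph_adj (hr : Injective r) (C : V → ι) {u v : V}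
    (huv : G.Adj u v) : ∃! c, (G.starSubgraph r C c).Adj u v := by
  rcases lt_or_gt_of_ne (hr.ne huv.ne) with h | h
  · refine ⟨C u, ⟨huv.ne, .inl ⟨huv, h, rfl⟩⟩, ?_⟩
    rintro c ⟨-, ⟨-, -, huc⟩ | ⟨-, hvu, -⟩⟩
    exacts [huc.symm, absurd hvu h.not_gt]
  · refine ⟨C v, ⟨huv.ne, .inr ⟨huv.symm, h, rfl⟩⟩, ?_⟩
    rintro c ⟨-, ⟨-, huv, -⟩ | ⟨-, -, hvc⟩⟩
    exacts [absurd huv h.not_gt, hvc.symm]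

theorem hasStarArboricityAtMost_of_coloring (hr : Injective r) {t : ℕ}
    (C : G.Coloring (Fin t)) (hC : ∀ v, Set.InjOn C (G.backNeighborSet r v)) :
    HasStarArboricityAtMost t G :=
  ⟨G.starSubgraph r C, isStarForest_starSubgraph C hC, starSubgraph_le C,
    fun _ _ => existsUnique_starSubgraph_adj hr C⟩

end StarSubgraph

end SimpleGraph

open SimpleGraph in
theorem IsKTree.exists_rank {V : Type*} [Finite V] {k : ℕ} {G : SimpleGraph V}
    (h : IsKTree k G) : ∃ r : V → ℕ, Injective r ∧
      ∀ v, G.IsClique (G.backNeighborSet r v) ∧ (G.backNeighborSet r v).encard ≤ k := by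
  obtain ⟨-, σ, hσ⟩ := h
  set r : V → ℕ := fun v => σ.symm v
  have hr : Injective r := Fin.val_injective.comp σ.symm.injective
  have hinit : ∀ v, r v ≤ k → G.backNeighborSet r v = {u | r u < r v} := fun v hv => by
    have := (hσ (σ.symm v)).1 hv
    rwa [Equiv.apply_symm_apply] at this
  have hlater : ∀ v, k < r v →
      (G.backNeighborSet r v).ncard = k ∧ G.IsClique (G.backNeighborSet r v) := fun v hv => by
    have := (hσ (σ.symm v)).2 hv
    rwa [Equiv.apply_symm_apply] at this
  refine ⟨r, hr, fun v => ?_⟩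
  rcases le_or_gt (r v) k with hv | hv
  · have adj : ∀ a b, r a < r b → r b < r v → G.Adj b a := fun a b hab hb => by
      have : a ∈ G.backNeighborSet r b := by rw [hinit b (by omega)]; exact hab
      exact this.1
    rw [hinit v hv]
    refine ⟨fun a ha b hb hab => ?_, ?_⟩
    · rcases lt_or_gt_of_ne (hr.ne hab) with h | h
      exacts [(adj a b h hb).symm, adj b a h ha]
    · calc {u | r u < r v}.encard
          _ ≤ (Set.Iio (r v)).encard := Set.encard_le_encard_of_injOn (fun _ hu => hu) hr.injOn
          _ = r v := by rw [← Finset.coe_Iio, Set.encard_coe_eq_coe_finsetCard, Nat.card_Iio]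
          _ ≤ k := by exact_mod_cast hv
  · obtain ⟨hcard, hclique⟩ := hlater v hv
    exact ⟨hclique, by rw [← (Set.toFinite _).cast_ncard_eq, hcard]⟩

theorem ktree_starArboricity_general {V : Type*} [Finite V] (k : ℕ)
    (G : SimpleGraph V) (h : IsKTree k G) :
    HasStarArboricityAtMost (k + 1) G := by
  obtain ⟨r, hr, hback⟩ := h.exists_rank
  obtain ⟨C⟩ := G.colorable_of_backNeighborSet_encard_le hr fun v => (hback v).2
  exact G.hasStarArboricityAtMost_of_coloring hr C fun v => (hback v).1.injOn_coloring C

/-- Every `k`-tree has star-arboricity at most `k+1`. -/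
theorem ktree_starArboricity {V : Type*} [Finite V] (k : ℕ) (hk : 1 ≤ k)
    (G : SimpleGraph V) (h : IsKTree k G) :
    HasStarArboricityAtMost (k + 1) G :=
  ktree_starArboricity_general k G h
end

section
/- For all nonnegative integers k_1, k_2 with k_1 + k_2 = k, the edge set of every k-tree G can be partitioned into two subgraphs G_1 and G_2 such that G_i has treewidth at most k_i for i = 1, 2. -/
section

open Set

variable {V : Type*} {n k m : ℕ}

def backNbhd (G : SimpleGraph V) (σ : Fin n ≃ V) (i : Fin n) : Set V :=
  {u | G.Adj (σ i) u ∧ σ.symm u < i}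

/-- Equivalent to `IsKTree` (`isKTree_iff`), but the initial clique is not a separate case. -/
def IsKTreeOrder (k : ℕ) (G : SimpleGraph V) (σ : Fin n ≃ V) : Prop :=
  ∀ i, G.IsClique (backNbhd G σ i) ∧ (backNbhd G σ i).ncard = min (i : ℕ) k

lemma ncard_setOf_symm_lt (σ : Fin n ≃ V) (i : Fin n) : {u | σ.symm u < i}.ncard = i := by
  change (σ.symm ⁻¹' Iio i).ncard = i
  rw [ncard_preimage_of_injective_subset_range σ.symm.injective (by simp), ← Finset.coe_Iio,
    ncard_coe_finset, Fin.card_Iio]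

namespace IsKTreeOrder

variable {G : SimpleGraph V} {σ : Fin n ≃ V}

lemma backNbhd_eq_of_le (hG : IsKTreeOrder k G σ) {i : Fin n} (hi : (i : ℕ) ≤ k) :
    backNbhd G σ i = {u | σ.symm u < i} := by
  have := Finite.of_equiv _ σ
  exact eq_of_subset_of_ncard_le (fun _ hu => hu.2)
    (by rw [ncard_setOf_symm_lt, (hG i).2, min_eq_left hi])

lemma adj_of_le (hG : IsKTreeOrder k G σ) {i j : Fin n} (hi : (i : ℕ) ≤ k) (hj : (j : ℕ) ≤ k)
    (hij : i ≠ j) : G.Adj (σ i) (σ j) := by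
  rcases hij.lt_or_gt with h | h
  · have hmem : σ i ∈ backNbhd G σ j := by rw [hG.backNbhd_eq_of_le hj]; simpa
    exact hmem.1.symm
  · have hmem : σ j ∈ backNbhd G σ i := by rw [hG.backNbhd_eq_of_le hi]; simpa
    exact hmem.1

lemma isClique_setOf_le (hG : IsKTreeOrder k G σ) : G.IsClique {u | (σ.symm u : ℕ) ≤ k} :=
  fun u hu w hw huw => by simpa using hG.adj_of_le hu hw (σ.symm.injective.ne huw)

end IsKTreeOrder

theorem isKTree_iff [Finite V] {G : SimpleGraph V} :
    IsKTree k G ↔ k + 1 ≤ Nat.card V ∧ ∃ σ : Fin (Nat.card V) ≃ V, IsKTreeOrder k G σ := by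
  change (k + 1 ≤ Nat.card V ∧ ∃ σ : Fin (Nat.card V) ≃ V, ∀ i : Fin (Nat.card V),
    ((i : ℕ) ≤ k → backNbhd G σ i = {u | σ.symm u < i}) ∧
    (k < (i : ℕ) → (backNbhd G σ i).ncard = k ∧ G.IsClique (backNbhd G σ i))) ↔ _
  refine and_congr_right fun _ => exists_congr fun σ => ⟨fun h i => ?_,
    fun h i => ⟨h.backNbhd_eq_of_le, fun hi => ⟨by rw [(h i).2]; omega, (h i).1⟩⟩⟩
  by_cases hi : (i : ℕ) ≤ k
  · have hadj : ∀ j : Fin (Nat.card V), (j : ℕ) ≤ k → ∀ u, σ.symm u < j → G.Adj (σ j) u :=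
      fun j hj u hu => (((h j).1 hj).symm ▸ hu : u ∈ backNbhd G σ j).1
    rw [(h i).1 hi, ncard_setOf_symm_lt, min_eq_left hi]
    refine ⟨fun u hu w hw huw => ?_, rfl⟩
    rcases (σ.symm.injective.ne huw).lt_or_gt with hlt | hlt
    · simpa using (hadj _ (by simp only [mem_ofPred_eq] at hw; omega) u hlt).symm
    · simpa using hadj _ (by simp only [mem_ofPred_eq] at hu; omega) w hlt
  · obtain ⟨hcard, hclique⟩ := (h i).2 (by omega)
    exact ⟨hclique, by rw [hcard]; omega⟩

namespace IsKTreeOrder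

variable {G : SimpleGraph V} {σ : Fin n ≃ V} {c : V → ℕ}

theorem isKTree [Finite V] (hG : IsKTreeOrder k G σ) (hkn : k + 1 ≤ n) : IsKTree k G := by
  obtain rfl : n = Nat.card V := by simpa using Nat.card_congr σ
  exact isKTree_iff.mpr ⟨hkn, σ, hG⟩

theorem comap {W : Type*} (e : W ≃ V) (hG : IsKTreeOrder k G σ) :
    IsKTreeOrder k (G.comap e) (σ.trans e.symm) := by
  intro i
  have h : backNbhd (G.comap e) (σ.trans e.symm) i = e ⁻¹' backNbhd G σ i := by
    ext w; simp [backNbhd]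
  rw [h, ncard_preimage_of_injective_subset_range e.injective (by simp)]
  exact ⟨fun a ha b hb hab => (hG i).1 ha hb (e.injective.ne hab), (hG i).2⟩

theorem hasTreewidthAtMost_of_le {H : SimpleGraph V} (hH : IsKTreeOrder k H σ)
    (hkn : k + 1 ≤ n) (hGH : G ≤ H) : HasTreewidthAtMost k G :=
  ⟨n, H.comap σ, (hH.comap σ).isKTree hkn, σ.symm.toEmbedding,
    fun u v huv => by simpa using hGH huv⟩

lemma exists_mem_Iic_notMem_image (hG : IsKTreeOrder k G σ) (c : V → ℕ) (i : Fin n) :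
    ∃ y ∈ Iic k, y ∉ c '' backNbhd G σ i := by
  have := Finite.of_equiv _ σ
  refine exists_mem_notMem_of_ncard_lt_ncard ?_
  have := ncard_image_le (f := c) (toFinite (backNbhd G σ i))
  rw [(hG i).2] at this
  rw [ncard_Iic_nat]
  omega

theorem exists_coloring (hG : IsKTreeOrder k G σ) :
    ∃ c : V → ℕ, (∀ u v, G.Adj u v → c u ≠ c v) ∧ (∀ v, c v ≤ k) ∧
      ∀ i : Fin n, (i : ℕ) ≤ k → c (σ i) = i := by
  classical
  have := Finite.of_equiv _ σ
  suffices h : ∀ p : ℕ, ∃ c : V → ℕ,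
      (∀ u v, G.Adj u v → (σ.symm u : ℕ) < p → (σ.symm v : ℕ) < p → c u ≠ c v) ∧
      (∀ v, c v ≤ k) ∧ ∀ i : Fin n, (i : ℕ) ≤ k → c (σ i) = i by
    obtain ⟨c, hc, hck, hcσ⟩ := h n
    exact ⟨c, fun u v huv => hc u v huv (σ.symm u).isLt (σ.symm v).isLt, hck, hcσ⟩
  intro p
  induction p with
  | zero =>
    exact ⟨fun v => min (σ.symm v : ℕ) k, by simp, fun _ => min_le_right _ _,
      fun i hi => by simp [hi]⟩
  | succ p ih =>
    obtain ⟨c, hc, hck, hcσ⟩ := ih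
    by_cases hp : k < p ∧ p < n
    swap
    · refine ⟨c, fun u w huw hu hw => ?_, hck, hcσ⟩
      by_cases hpk : p ≤ k
      · rw [← σ.apply_symm_apply u, ← σ.apply_symm_apply w, hcσ _ (by omega),
          hcσ _ (by omega)]
        exact fun h => huw.ne (σ.symm.injective (Fin.ext h))
      · exact hc u w huw (by omega) (by omega)
    let i : Fin n := ⟨p, hp.2⟩
    obtain ⟨y, hyk, hy⟩ := hG.exists_mem_Iic_notMem_image c i
    have hpos : ∀ w, w ≠ σ i → (σ.symm w : ℕ) < p + 1 → σ.symm w < i := fun w hw hwp => by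
      have : (σ.symm w : ℕ) ≠ p := fun h => hw (σ.symm_apply_eq.mp (Fin.ext h))
      simp only [Fin.lt_def, i]
      omega
    have hnew : ∀ w, G.Adj (σ i) w → (σ.symm w : ℕ) < p + 1 → c w ≠ y :=
      fun w hw hwp hcw => hy ⟨w, ⟨hw, hpos w hw.ne.symm hwp⟩, hcw⟩
    refine ⟨Function.update c (σ i) y, fun u w huw hu hw => ?_, fun v => ?_, fun j hj => ?_⟩
    · by_cases hu' : u = σ i
      · subst hu'
        simpa [Function.update_of_ne huw.ne.symm] using (hnew w huw hw).symm
      by_cases hw' : w = σ i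
      · subst hw'
        simpa [Function.update_of_ne hu'] using hnew u huw.symm hu
      simpa [Function.update_of_ne hu', Function.update_of_ne hw'] using
        hc u w huw (hpos u hu' hu) (hpos w hw' hw)
    · by_cases hv : v = σ i
      · simpa [hv] using hyk
      · simpa [Function.update_of_ne hv] using hck v
    · have hji : j ≠ i := fun h => by simp [h, i] at hj; omega
      simpa [Function.update_of_ne (σ.injective.ne hji)] using hcσ j hj

lemma injOn_backNbhd (hG : IsKTreeOrder k G σ) (hc : ∀ u v, G.Adj u v → c u ≠ c v)
    (i : Fin n) : InjOn c (backNbhd G σ i) :=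
  fun u hu w hw h => by_contra fun hne => hc u w ((hG i).1 hu hw hne) h

lemma image_backNbhd_of_le (hG : IsKTreeOrder k G σ)
    (hcσ : ∀ i : Fin n, (i : ℕ) ≤ k → c (σ i) = i) {i : Fin n} (hi : (i : ℕ) ≤ k) :
    c '' backNbhd G σ i = Iio (i : ℕ) := by
  rw [hG.backNbhd_eq_of_le hi]
  ext y
  constructor
  · rintro ⟨u, hu, rfl⟩
    have hu : σ.symm u < i := hu
    rw [← σ.apply_symm_apply u, hcσ _ (by rw [Fin.lt_def] at hu; omega)]
    exact hu
  · intro hy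
    have hy : y < i := hy
    refine ⟨σ ⟨y, by omega⟩, ?_, hcσ _ (by simp only; omega)⟩
    change σ.symm (σ _) < i
    rwa [σ.symm_apply_apply]

lemma image_backNbhd_of_lt (hG : IsKTreeOrder k G σ) (hc : ∀ u v, G.Adj u v → c u ≠ c v)
    (hck : ∀ v, c v ≤ k) {i : Fin n} (hi : k < (i : ℕ)) :
    c '' backNbhd G σ i = Iic k \ {c (σ i)} := by
  refine eq_of_subset_of_ncard_le ?_ ?_ (finite_Iic k).sdiff
  · rintro _ ⟨u, hu, rfl⟩
    exact ⟨hck u, (hc _ _ hu.1).symm⟩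
  · rw [ncard_sdiff_singleton_of_mem (s := Iic k) (by simpa using hck (σ i)), ncard_Iic_nat,
      (hG.injOn_backNbhd hc i).ncard_image, (hG i).2]
    omega

end IsKTreeOrder

section Perm

variable {π : Equiv.Perm (Fin n)}

lemma val_le_iff_of_fix (hπ : ∀ i : Fin n, k < (i : ℕ) → π i = i) (j : Fin n) :
    (π j : ℕ) ≤ k ↔ (j : ℕ) ≤ k := by
  constructor <;> intro h <;> by_contra h'
  · exact h' (hπ j (by omega) ▸ h)
  · have := π.injective (hπ (π j) (by omega))
    omega

lemma symm_apply_of_fix (hπ : ∀ i : Fin n, k < (i : ℕ) → π i = i) {i : Fin n}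
    (hi : k < (i : ℕ)) : π.symm i = i :=
  π.symm_apply_eq.mpr (hπ i hi).symm

lemma symm_lt_iff_of_fix (hπ : ∀ i : Fin n, k < (i : ℕ) → π i = i) {i : Fin n}
    (hi : k < (i : ℕ)) (j : Fin n) : π.symm j < i ↔ j < i := by
  by_cases hj : (j : ℕ) ≤ k
  · have := (val_le_iff_of_fix (fun i hi => symm_apply_of_fix hπ hi) j).mpr hj
    simp only [Fin.lt_def]
    omega
  · rw [symm_apply_of_fix hπ (by omega)]

lemma exists_perm_rev_initial (hkn : k < n) :
    ∃ π : Equiv.Perm (Fin n), (∀ i : Fin n, k < (i : ℕ) → π i = i) ∧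
      ∀ i : Fin n, (i : ℕ) ≤ k → (π i : ℕ) = k - i := by
  let f : Fin n → Fin n := fun i => if (i : ℕ) ≤ k then ⟨k - i, by omega⟩ else i
  have hf : Function.Involutive f := fun i => by
    by_cases hi : (i : ℕ) ≤ k <;> ext
    · simp [f, hi]; omega
    · simp [f, hi]
  exact ⟨hf.toPerm f, fun i hi => by simp [f, show ¬ (i : ℕ) ≤ k by omega],
    fun i hi => by simp [f, hi]⟩

end Perm

namespace IsKTreeOrder

variable {G : SimpleGraph V} {σ : Fin n ≃ V}

theorem perm_trans_of_fix (hG : IsKTreeOrder k G σ) {π : Equiv.Perm (Fin n)}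
    (hπ : ∀ i : Fin n, k < (i : ℕ) → π i = i) : IsKTreeOrder k G (π.trans σ) := by
  intro i
  by_cases hi : (i : ℕ) ≤ k
  · have hsub : {u | (π.trans σ).symm u < i} ⊆ {u | (σ.symm u : ℕ) ≤ k} := fun u hu => by
      have hu' : (π.symm (σ.symm u) : ℕ) ≤ k := by
        simp only [Equiv.symm_trans_apply, mem_ofPred_eq, Fin.lt_def] at hu; omega
      simpa [val_le_iff_of_fix (fun i hi => symm_apply_of_fix hπ hi)] using hu'
    have heq : backNbhd G (π.trans σ) i = {u | (π.trans σ).symm u < i} := by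
      refine subset_antisymm (fun _ hu => hu.2) fun u hu => ⟨?_, hu⟩
      have hi' : σ (π i) ∈ {u | (σ.symm u : ℕ) ≤ k} := by
        simpa [val_le_iff_of_fix hπ] using hi
      refine hG.isClique_setOf_le hi' (hsub hu) ?_
      rintro rfl
      simp at hu
    rw [heq, ncard_setOf_symm_lt, min_eq_left hi]
    exact ⟨hG.isClique_setOf_le.subset hsub, rfl⟩
  · have heq : backNbhd G (π.trans σ) i = backNbhd G σ i := by
      ext u
      simp [backNbhd, hπ i (by omega), symm_lt_iff_of_fix hπ (show k < (i : ℕ) by omega)]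
    rw [heq]
    exact hG i

end IsKTreeOrder

/-- The colours that a vertex of colour `x` accepts from earlier neighbours into the low part:
the pivot colour `m` counts as low exactly for vertices whose own colour is below `m`. -/
def lowColours (m x : ℕ) : Set ℕ := {y | y < m ∨ y = m ∧ x < m}

def lowPart (G : SimpleGraph V) (σ : Fin n ≃ V) (c : V → ℕ) (m : ℕ) : SimpleGraph V :=
  SimpleGraph.fromRel fun u v => G.Adj u v ∧ σ.symm u < σ.symm v ∧ c u ∈ lowColours m (c v)

section LowPart

variable {G : SimpleGraph V} {σ : Fin n ≃ V} {c : V → ℕ}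

lemma lowPart_le : lowPart G σ c m ≤ G := fun u v h => by
  rcases ((SimpleGraph.fromRel_adj _ u v).mp h).2 with h | h
  exacts [h.1, h.1.symm]

lemma lowPart_adj_of_lt {u v : V} (huv : G.Adj u v) (hlt : σ.symm u < σ.symm v) :
    (lowPart G σ c m).Adj u v ↔ c u ∈ lowColours m (c v) := by
  simp [lowPart, huv, huv.ne, hlt, hlt.not_gt]

theorem lowPart_rev_adj_iff (hc : ∀ u v, G.Adj u v → c u ≠ c v) (hck : ∀ v, c v ≤ k)
    {k₁ k₂ : ℕ} (hsum : k₁ + k₂ = k) {u v : V} (huv : G.Adj u v) :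
    (lowPart G σ (fun w => k - c w) k₂).Adj u v ↔ ¬ (lowPart G σ c k₁).Adj u v := by
  have := hc u v huv
  have := hck u
  have := hck v
  rcases (σ.symm.injective.ne huv.ne).lt_or_gt with hlt | hlt
  · rw [lowPart_adj_of_lt huv hlt, lowPart_adj_of_lt huv hlt]
    simp only [lowColours, mem_ofPred_eq]
    omega
  · rw [(lowPart G σ _ k₂).adj_comm, (lowPart G σ c k₁).adj_comm,
      lowPart_adj_of_lt huv.symm hlt, lowPart_adj_of_lt huv.symm hlt]
    simp only [lowColours, mem_ofPred_eq]
    omega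

theorem lowPart_mono {σ' : Fin n ≃ V}
    (h : ∀ u v, G.Adj u v → σ.symm u < σ.symm v → σ'.symm u < σ'.symm v ∨ c v < c u) :
    lowPart G σ c m ≤ lowPart G σ' c m := by
  have key : ∀ u v, G.Adj u v → σ.symm u < σ.symm v → c u ∈ lowColours m (c v) →
      (lowPart G σ' c m).Adj u v := fun u v huv hlt hcol => by
    rcases h u v huv hlt with hlt' | hc
    · exact (lowPart_adj_of_lt huv hlt').mpr hcol
    · rcases (σ'.symm.injective.ne huv.ne).lt_or_gt with hlt' | hlt'
      · exact (lowPart_adj_of_lt huv hlt').mpr hcol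
      · refine ((lowPart_adj_of_lt huv.symm hlt').mpr ?_).symm
        simp only [lowColours, mem_ofPred_eq] at hcol ⊢
        omega
  intro u v huv
  rcases ((SimpleGraph.fromRel_adj _ u v).mp huv).2 with ⟨hadj, hlt, hcol⟩ | ⟨hadj, hlt, hcol⟩
  · exact key u v hadj hlt hcol
  · exact (key v u hadj hlt hcol).symm

end LowPart

namespace IsKTreeOrder

variable {G : SimpleGraph V} {σ : Fin n ≃ V} {c : V → ℕ}

lemma backNbhd_lowPart (i : Fin n) :
    backNbhd (lowPart G σ c m) σ i = backNbhd G σ i ∩ c ⁻¹' lowColours m (c (σ i)) := by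
  ext u
  constructor
  · rintro ⟨hadj, hlt⟩
    have hadj' : G.Adj u (σ i) := (lowPart_le hadj).symm
    exact ⟨⟨hadj'.symm, hlt⟩, (lowPart_adj_of_lt hadj' (by simpa using hlt)).mp hadj.symm⟩
  · rintro ⟨⟨hadj, hlt⟩, hcol⟩
    exact ⟨((lowPart_adj_of_lt hadj.symm (by simpa using hlt)).mpr hcol).symm, hlt⟩

theorem lowPart (hG : IsKTreeOrder k G σ) (hc : ∀ u v, G.Adj u v → c u ≠ c v)
    (hck : ∀ v, c v ≤ k) (hcσ : ∀ i : Fin n, (i : ℕ) ≤ k → c (σ i) = i) (hm : m ≤ k) :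
    IsKTreeOrder m (lowPart G σ c m) σ := by
  intro i
  rw [backNbhd_lowPart]
  constructor
  · intro u hu w hw huw
    have hadj := (hG i).1 hu.1 hw.1 huw
    have := hc _ _ hadj
    have := hc _ _ hu.1.1
    have := hc _ _ hw.1.1
    have hu' := hu.2
    have hw' := hw.2
    simp only [mem_preimage, lowColours, mem_ofPred_eq] at hu' hw'
    rcases (σ.symm.injective.ne huw).lt_or_gt with hlt | hlt
    · exact (lowPart_adj_of_lt hadj hlt).mpr (by simp only [lowColours, mem_ofPred_eq]; omega)
    · exact ((lowPart_adj_of_lt hadj.symm hlt).mpr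
        (by simp only [lowColours, mem_ofPred_eq]; omega)).symm
  · rw [← ((hG.injOn_backNbhd hc i).mono inter_subset_left).ncard_image, image_inter_preimage]
    by_cases hi : (i : ℕ) ≤ k
    · rw [hG.image_backNbhd_of_le hcσ hi, hcσ i hi,
        show Iio (i : ℕ) ∩ lowColours m i = Iio (min (i : ℕ) m) by ext; simp [lowColours]; omega,
        ncard_Iio_nat]
    · rw [hG.image_backNbhd_of_lt hc hck (by omega), min_eq_right (by omega)]
      have := hck (σ i)
      rcases lt_or_ge (c (σ i)) m with h | h
      · rw [show Iic k \ {c (σ i)} ∩ lowColours m (c (σ i)) = Iic m \ {c (σ i)} by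
            ext; simp [lowColours]; omega,
          ncard_sdiff_singleton_of_mem (by simpa using h.le), ncard_Iic_nat]
        rfl
      · rw [show Iic k \ {c (σ i)} ∩ lowColours m (c (σ i)) = Iio m by
            ext; simp [lowColours]; omega,
          ncard_Iio_nat]

/-- Reversing the initial clique makes `k - c` increasing along it, and only adds edges to the low
part, since it puts the smaller colour first. -/
theorem hasTreewidthAtMost_lowPart_rev (hG : IsKTreeOrder k G σ)
    (hc : ∀ u v, G.Adj u v → c u ≠ c v) (hck : ∀ v, c v ≤ k)
    (hcσ : ∀ i : Fin n, (i : ℕ) ≤ k → c (σ i) = i) (hm : m ≤ k) (hkn : k < n) :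
    HasTreewidthAtMost m (_root_.lowPart G σ (fun v => k - c v) m) := by
  obtain ⟨π, hπ, hπrev⟩ := exists_perm_rev_initial hkn
  have hc' : ∀ u v, G.Adj u v → k - c u ≠ k - c v := fun u v huv => by
    have := hc u v huv; have := hck u; have := hck v; omega
  have hc'σ : ∀ i : Fin n, (i : ℕ) ≤ k → k - c ((π.trans σ) i) = i := fun i hi => by
    rw [Equiv.trans_apply, hcσ _ (by rw [hπrev i hi]; omega), hπrev i hi]
    omega
  have hrev := (hG.perm_trans_of_fix hπ).lowPart hc' (fun _ => Nat.sub_le _ _) hc'σ hm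
  refine hrev.hasTreewidthAtMost_of_le (by omega) (lowPart_mono fun u v huv hlt => ?_)
  by_cases hv : (σ.symm v : ℕ) ≤ k
  · have hcu := hcσ (σ.symm u) (by rw [Fin.lt_def] at hlt; omega)
    have hcv := hcσ (σ.symm v) hv
    simp only [Equiv.apply_symm_apply] at hcu hcv
    rw [Fin.lt_def] at hlt
    right
    omega
  · left
    simp only [Equiv.symm_trans_apply, symm_apply_of_fix hπ (show k < (σ.symm v : ℕ) by omega)]
    exact (symm_lt_iff_of_fix hπ (by omega) _).mpr hlt

end IsKTreeOrder

end

/-- For `k₁ + k₂ = k`, every `k`-tree partitions into two subgraphs of treewidth at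
most `k₁` and `k₂` respectively. -/
theorem ktree_treewidth_partition {V : Type*} [Finite V] (k₁ k₂ k : ℕ)
    (hsum : k₁ + k₂ = k) (G : SimpleGraph V) (h : IsKTree k G) :
    ∃ G₁ G₂ : SimpleGraph V, G₁ ≤ G ∧ G₂ ≤ G ∧
      HasTreewidthAtMost k₁ G₁ ∧ HasTreewidthAtMost k₂ G₂ ∧
      (∀ u v, G.Adj u v ↔ (G₁.Adj u v ∨ G₂.Adj u v)) ∧
      (∀ u v, ¬ (G₁.Adj u v ∧ G₂.Adj u v)) := by
  obtain ⟨hkn, σ, hσ⟩ := isKTree_iff.mp h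
  obtain ⟨c, hc, hck, hcσ⟩ := hσ.exists_coloring
  have hsplit {u v : V} (huv : G.Adj u v) := lowPart_rev_adj_iff (σ := σ) hc hck hsum huv
  refine ⟨lowPart G σ c k₁, lowPart G σ (fun v => k - c v) k₂, lowPart_le, lowPart_le,
    (hσ.lowPart hc hck hcσ (by omega)).hasTreewidthAtMost_of_le (by omega) le_rfl,
    hσ.hasTreewidthAtMost_lowPart_rev hc hck hcσ (by omega) (by omega),
    fun u v => ⟨fun huv => ?_, fun h => h.elim (lowPart_le ·) (lowPart_le ·)⟩,
    fun u v ⟨h₁, h₂⟩ => (hsplit (lowPart_le h₁)).mp h₂ h₁⟩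
  by_cases h₁ : (lowPart G σ c k₁).Adj u v
  exacts [Or.inl h₁, Or.inr ((hsplit huv).mpr h₁)]
end

section
/- Every 2-tree G has a book embedding with arboricity 2: there is a cyclic ordering of V(G) and a partition of E(G) into two forests such that no two edges in the same forest interleave in the cyclic order. Moreover this can be done so that if G ≇ K_3 then every 2-simplicial vertex is colourful (its two incident matched edges receive distinct colours). -/
namespace BK
open List

lemma lt_is_lex {l l' : List ℕ} : l < l' ↔ List.Lex (· < ·) l l' := Iff.rfl

lemma self_lt_append {p t : List ℕ} (h : t ≠ []) : p < p ++ t := by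
  rw [lt_is_lex]
  induction p with
  | nil => cases t with | nil => exact absurd rfl h | cons a l => exact List.Lex.nil
  | cons a p ih => exact List.Lex.cons ih

lemma lt_of_head_lt {a b : ℕ} (u s t : List ℕ) (h : a < b) : u ++ a :: s < u ++ b :: t := by
  rw [lt_is_lex]; exact List.Lex.append_left _ (List.Lex.rel h) u

lemma lex_decomp {l1 l2 : List ℕ} (h : l1 < l2) :
    (∃ t, l2 = l1 ++ t ∧ t ≠ []) ∨
      ∃ u a b s t, a < b ∧ l1 = u ++ a :: s ∧ l2 = u ++ b :: t := by
  rw [lt_is_lex] at h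
  induction h with
  | @nil a l => exact Or.inl ⟨a :: l, rfl, by simp⟩
  | @cons a l₁ l₂ h ih =>
    rcases ih with ⟨t, rfl, ht⟩ | ⟨u, x, y, s, t, hxy, h1, h2⟩
    · exact Or.inl ⟨t, rfl, ht⟩
    · exact Or.inr ⟨a :: u, x, y, s, t, hxy, by simp [h1], by simp [h2]⟩
  | @rel a₁ l₁ a₂ l₂ h => exact Or.inr ⟨[], a₁, a₂, l₁, l₂, h, rfl, rfl⟩

lemma snoc_eq_append {r2 s w : List ℕ} {k2 : ℕ} (h : r2 ++ [k2] = s ++ w) (hw : w ≠ []) :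
    ∃ w0, w = w0 ++ [k2] ∧ r2 = s ++ w0 := by
  induction w using List.reverseRecOn with
  | nil => exact absurd rfl hw
  | append_singleton ws x _ =>
    rw [← List.append_assoc] at h
    obtain ⟨h1, h2⟩ := List.append_inj' h rfl
    obtain rfl : k2 = x := by simpa using h2
    exact ⟨ws, rfl, h1⟩

open List

/-- strip leading elements `≡ 2 mod 3` (input is a reversed room-path). -/
def stripR : List ℕ → List ℕ
  | [] => []
  | e :: r => if e % 3 = 2 then stripR r else e :: r

/-- strip leading elements `≡ 0 mod 3`. -/
def stripL : List ℕ → List ℕ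
  | [] => []
  | e :: r => if e % 3 = 0 then stripL r else e :: r

/-- key of the right end of an edge with room path `r`; `B` is the key of the global max. -/
def RV (B : ℕ) (r : List ℕ) : List ℕ :=
  match stripR r.reverse with
  | [] => [B]
  | e :: r' => ((e + 1) :: r').reverse

/-- key of the left end of an edge with room path `r`. -/
def LV (r : List ℕ) : List ℕ :=
  match stripL r.reverse with
  | [] => []
  | e :: r' => ((e - 1) :: r').reverse

lemma RV_append2 {B : ℕ} {r : List ℕ} {e : ℕ} (he : e % 3 = 2) : RV B (r ++ [e]) = RV B r := by
  simp [RV, stripR, he]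

lemma RV_append_stop {B : ℕ} {r : List ℕ} {e : ℕ} (he : ¬ e % 3 = 2) :
    RV B (r ++ [e]) = r ++ [e + 1] := by
  simp [RV, stripR, he]

lemma LV_append0 {r : List ℕ} {e : ℕ} (he : e % 3 = 0) : LV (r ++ [e]) = LV r := by
  simp [LV, stripL, he]

lemma LV_append_stop {r : List ℕ} {e : ℕ} (he : ¬ e % 3 = 0) :
    LV (r ++ [e]) = r ++ [e - 1] := by
  simp [LV, stripL, he]

lemma RV_nil {B : ℕ} : RV B [] = [B] := by simp [RV, stripR]
lemma LV_nil : LV [] = [] := by simp [LV, stripL]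

lemma rLemmaR (B : ℕ) (r : List ℕ) :
    ((∀ x ∈ r, x % 3 = 2) ∧ RV B r = [B]) ∨
      ∃ u e v, r = u ++ e :: v ∧ ¬ e % 3 = 2 ∧ (∀ x ∈ v, x % 3 = 2) ∧ RV B r = u ++ [e + 1] := by
  induction r using List.reverseRecOn with
  | nil => exact Or.inl ⟨by simp, RV_nil⟩
  | append_singleton s x ih =>
    by_cases hx : x % 3 = 2
    · rcases ih with ⟨h1, h2⟩ | ⟨u, e, v, rfl, he, hv, hRV⟩
      · refine Or.inl ⟨?_, by rw [RV_append2 hx, h2]⟩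
        intro y hy; rcases List.mem_append.1 hy with h | h
        · exact h1 y h
        · rw [List.mem_singleton.1 h]; exact hx
      · refine Or.inr ⟨u, e, v ++ [x], by simp, he, ?_, by rw [RV_append2 hx, hRV]⟩
        intro y hy; rcases List.mem_append.1 hy with h | h
        · exact hv y h
        · simpa using (List.mem_singleton.1 h) ▸ hx
    · exact Or.inr ⟨s, x, [], rfl, hx, by simp, RV_append_stop hx⟩

lemma rLemmaL (r : List ℕ) :
    ((∀ x ∈ r, x % 3 = 0) ∧ LV r = []) ∨
      ∃ u e v, r = u ++ e :: v ∧ ¬ e % 3 = 0 ∧ (∀ x ∈ v, x % 3 = 0) ∧ LV r = u ++ [e - 1] := by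
  induction r using List.reverseRecOn with
  | nil => exact Or.inl ⟨by simp, LV_nil⟩
  | append_singleton s x ih =>
    by_cases hx : x % 3 = 0
    · rcases ih with ⟨h1, h2⟩ | ⟨u, e, v, rfl, he, hv, hLV⟩
      · refine Or.inl ⟨?_, by rw [LV_append0 hx, h2]⟩
        intro y hy; rcases List.mem_append.1 hy with h | h
        · exact h1 y h
        · rw [List.mem_singleton.1 h]; exact hx
      · refine Or.inr ⟨u, e, v ++ [x], by simp, he, ?_, by rw [LV_append0 hx, hLV]⟩
        intro y hy; rcases List.mem_append.1 hy with h | h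
        · exact hv y h
        · simpa using (List.mem_singleton.1 h) ▸ hx
    · exact Or.inr ⟨s, x, [], rfl, hx, by simp, LV_append_stop hx⟩

lemma RV_bound {B : ℕ} (u : List ℕ) (e : ℕ) (w : List ℕ) (he : ¬ e % 3 = 2) :
    RV B (u ++ e :: w) ≤ u ++ [e + 1] := by
  induction w using List.reverseRecOn with
  | nil => rw [show u ++ [e] = u ++ [e] from rfl] at *; rw [RV_append_stop he]
  | append_singleton ws c ih =>
    rw [show u ++ e :: (ws ++ [c]) = (u ++ e :: ws) ++ [c] by simp]
    by_cases hc : c % 3 = 2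
    · rw [RV_append2 hc]; exact ih
    · rw [RV_append_stop hc]
      refine le_of_lt ?_
      rw [show u ++ e :: ws ++ [c + 1] = u ++ e :: (ws ++ [c+1]) by simp]
      exact lt_of_head_lt u _ [] (Nat.lt_succ_self e)

lemma LV_bound (u : List ℕ) (e : ℕ) (w : List ℕ) (he : ¬ e % 3 = 0) :
    u ++ [e - 1] ≤ LV (u ++ e :: w) := by
  have he1 : e - 1 < e := Nat.sub_lt (Nat.pos_of_ne_zero (by rintro rfl; exact he rfl)) one_pos
  induction w using List.reverseRecOn with
  | nil => rw [LV_append_stop he]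
  | append_singleton ws c ih =>
    rw [show u ++ e :: (ws ++ [c]) = (u ++ e :: ws) ++ [c] by simp]
    by_cases hc : c % 3 = 0
    · rw [LV_append0 hc]; exact ih
    · rw [LV_append_stop hc]
      refine le_of_lt ?_
      rw [show u ++ e :: ws ++ [c - 1] = u ++ e :: (ws ++ [c-1]) by simp]
      exact lt_of_head_lt u [] _ he1

lemma LV_lt_self {r : List ℕ} (h : ∀ x ∈ r, x % 3 = 0 ∨ x % 3 = 2) (k : ℕ) :
    LV r < r ++ [k] := by
  rcases rLemmaL r with ⟨h1, h2⟩ | ⟨u, e, v, rfl, he, hv, hLV⟩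
  · rw [h2]; rw [lt_is_lex]
    cases hr : r ++ [k] with
    | nil => simp at hr
    | cons a l => exact List.Lex.nil
  · rw [hLV]
    have he2 : e % 3 = 2 := (h e (by simp)).resolve_left he
    have : e - 1 < e := Nat.sub_lt (by omega) one_pos
    rw [show (u ++ e :: v) ++ [k] = u ++ e :: (v ++ [k]) by simp]
    exact lt_of_head_lt u [] _ this

lemma self_lt_RV {B n : ℕ} {r : List ℕ} (h : ∀ x ∈ r, x ≤ 3 * n) (hB : 3 * n < B) (k : ℕ)
    (hk : k < B) : r ++ [k] < RV B r := by
  rcases rLemmaR B r with ⟨h1, h2⟩ | ⟨u, e, v, rfl, he, hv, hRV⟩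
  · rw [h2]
    cases r with
    | nil => exact lt_of_head_lt [] [] [] hk
    | cons c r' =>
      have : c ≤ 3 * n := h c (by simp)
      exact lt_of_head_lt [] _ [] (by omega)
  · rw [hRV, show (u ++ e :: v) ++ [k] = u ++ e :: (v ++ [k]) by simp]
    exact lt_of_head_lt u _ [] (Nat.lt_succ_self e)

lemma lt_singletonB {B n : ℕ} {r : List ℕ} (h : ∀ x ∈ r, x ≤ 3 * n) (hB : 3 * n < B) (k : ℕ)
    (hk : k < B) : r ++ [k] < [B] := by
  cases r with
  | nil => exact lt_of_head_lt [] [] [] hk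
  | cons c r' =>
    have : c ≤ 3 * n := h c (by simp)
    exact lt_of_head_lt [] _ [] (by omega)

open List

lemma self_le_append (p t : List ℕ) : p ≤ p ++ t := by
  cases t with
  | nil => simp
  | cons a l => exact le_of_lt (self_lt_append (by simp))

lemma le_head_succ {e b : ℕ} (h : e < b) (u t : List ℕ) : u ++ [e+1] ≤ u ++ b :: t := by
  rcases Nat.lt_or_ge (e+1) b with h' | h'
  · exact le_of_lt (lt_of_head_lt u [] t h')
  · have hb : b = e + 1 := by omega
    subst hb
    rw [show u ++ (e+1) :: t = (u ++ [e+1]) ++ t by simp]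
    exact self_le_append _ _

lemma elem_of_append_singleton {r1 u s : List ℕ} {k1 a : ℕ}
    (h : r1 ++ [k1] = u ++ a :: s) : a ∈ r1 ∨ (a = k1 ∧ s = [] ∧ r1 = u) := by
  induction s using List.reverseRecOn with
  | nil =>
    obtain ⟨h1, h2⟩ := List.append_inj' h rfl
    exact Or.inr ⟨by simpa using h2.symm, rfl, h1⟩
  | append_singleton ss x _ =>
    rw [show u ++ a :: (ss ++ [x]) = (u ++ a :: ss) ++ [x] by simp] at h
    obtain ⟨h1, _⟩ := List.append_inj' h rfl
    exact Or.inl (by rw [h1]; simp)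

theorem NC1 {B n : ℕ} (hB : 3*n+1 < B) {r1 r2 : List ℕ} {k1 k2 : ℕ}
    (hb2 : ∀ x ∈ r2, x ≤ 3*n)
    (h12 : r1 ++ [k1] < r2 ++ [k2]) (h2R : r2 ++ [k2] < RV B r1) :
    RV B r2 ≤ RV B r1 := by
  rcases rLemmaR B r1 with ⟨_, hR1⟩ | ⟨u, e, v, hr1, he, hv, hR1⟩
  · rw [hR1]
    rcases rLemmaR B r2 with ⟨_, hR2⟩ | ⟨u, e, v, hr2, he, hv, hR2⟩
    · rw [hR2]
    · rw [hR2]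
      have heB : e ≤ 3*n := hb2 e (by rw [hr2]; simp)
      cases u with
      | nil => exact le_of_lt (lt_of_head_lt [] [] [] (by omega))
      | cons c u' =>
        have : c ≤ 3*n := hb2 c (by rw [hr2]; simp)
        exact le_of_lt (lt_of_head_lt [] _ [] (by omega))
  · rw [hR1] at h2R ⊢
    have hK1 : r1 ++ [k1] = u ++ e :: (v ++ [k1]) := by rw [hr1]; simp
    -- establish r2 ++ [k2] = u ++ e :: w with w ≠ []
    have key : ∃ w, w ≠ [] ∧ r2 ++ [k2] = u ++ e :: w := by
      rcases lex_decomp h12 with ⟨t, ht, htne⟩ | ⟨c, a, b, s, t, hab, hc1, hc2⟩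
      · refine ⟨v ++ [k1] ++ t, by simp, ?_⟩
        rw [ht, hK1]; simp
      · -- r1 ++ [k1] = c ++ a :: s,  r2 ++ [k2] = c ++ b :: t
        have hcu : c ++ a :: s = u ++ e :: (v ++ [k1]) := by rw [← hc1, hK1]
        rcases List.append_eq_append_iff.1 hcu with ⟨a', hu, hs⟩ | ⟨c', hc, hd⟩
        · cases a' with
          | nil =>
            simp at hu hs
            obtain ⟨rfl, -⟩ := hs
            subst hu
            exfalso
            exact absurd h2R (not_lt.2 (by rw [hc2]; exact le_head_succ hab _ _))
          | cons y a'' =>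
            have hay : a = y := by have := hs; simp at this; exact this.1
            subst hay
            exfalso
            refine absurd h2R (not_lt.2 (le_of_lt ?_))
            rw [hc2, hu, show (c ++ a :: a'') ++ [e+1] = c ++ a :: (a'' ++ [e+1]) by simp]
            exact lt_of_head_lt c _ _ hab
        · cases c' with
          | nil =>
            simp at hc hd
            obtain ⟨rfl, -⟩ := hd
            subst hc
            exfalso
            exact absurd h2R (not_lt.2 (by rw [hc2]; exact le_head_succ hab _ _))
          | cons y c'' =>
            have hey : y = e := by have := hd; simp at this; omega
            refine ⟨c'' ++ b :: t, by simp, ?_⟩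
            rw [hc2, hc, hey]; simp
    obtain ⟨w, hwne, hw⟩ := key
    rw [show u ++ e :: w = (u ++ [e]) ++ w by simp] at hw
    obtain ⟨w0, hw0, hr2'⟩ := snoc_eq_append hw hwne
    rw [show (u ++ [e]) ++ w0 = u ++ e :: w0 by simp] at hr2'
    rw [hr2']
    exact RV_bound u e w0 he

theorem NC0 {r1 r2 : List ℕ} {k1 k2 : ℕ}
    (h1m : ∀ x ∈ r1, x % 3 = 0 ∨ x % 3 = 2) (h2m : ∀ x ∈ r2, x % 3 = 0 ∨ x % 3 = 2)
    (hk1 : k1 % 3 = 1)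
    (hL : LV r2 < r1 ++ [k1]) (h12 : r1 ++ [k1] < r2 ++ [k2]) :
    LV r2 ≤ LV r1 := by
  rcases rLemmaL r2 with ⟨_, hL2⟩ | ⟨u, e, v, hr2, he, hv, hL2⟩
  · rw [hL2]; exact le_of_not_gt (fun h => List.not_lex_nil (lt_is_lex.1 h))
  · have he2 : e % 3 = 2 := (h2m e (by rw [hr2]; simp)).resolve_left he
    rw [hL2] at hL ⊢
    have hK2 : r2 ++ [k2] = u ++ e :: (v ++ [k2]) := by rw [hr2]; simp
    have key : ∃ w, w ≠ [] ∧ r1 ++ [k1] = u ++ e :: w := by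
      rcases lex_decomp h12 with ⟨t, ht, htne⟩ | ⟨c, a, b, s, t, hab, hc1, hc2⟩
      · -- r2 ++ [k2] = (r1 ++ [k1]) ++ t
        have : (r1 ++ [k1]) ++ t = u ++ e :: (v ++ [k2]) := by rw [← ht, hK2]
        rcases List.append_eq_append_iff.1 this with ⟨a', hu, hs⟩ | ⟨c', hc, hd⟩
        · exfalso
          refine absurd hL (not_lt.2 ?_)
          rw [hu, show (r1 ++ [k1] ++ a') ++ [e-1] = (r1 ++ [k1]) ++ (a' ++ [e-1]) by simp]
          exact self_le_append _ _
        · cases c' with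
          | nil =>
            simp at hc hd
            exfalso
            refine absurd hL (not_lt.2 ?_)
            rw [hc]
            exact le_of_lt (self_lt_append (by simp))
          | cons y c'' =>
            have hey : y = e := by have := hd; simp at this; omega
            cases c'' with
            | nil =>
              exfalso
              have h3 : r1 ++ [k1] = u ++ [e] := by rw [hc, hey]
              obtain ⟨h1', h2'⟩ := List.append_inj' h3 rfl
              have : k1 = e := by simpa using h2'
              omega
            | cons z c3 =>
              exact ⟨z :: c3, by simp, by rw [hc, hey]⟩
      · -- r1 ++ [k1] = c ++ a :: s,  r2 ++ [k2] = c ++ b :: t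
        have hcu : c ++ b :: t = u ++ e :: (v ++ [k2]) := by rw [← hc2, hK2]
        rcases List.append_eq_append_iff.1 hcu with ⟨a', hu, hs⟩ | ⟨c', hc, hd⟩
        · cases a' with
          | nil =>
            simp at hu hs
            have hbe : b = e := hs.1
            subst hu
            exfalso
            have hae' : a < e := by omega
            rcases Nat.lt_or_ge a (e-1) with h' | h'
            · refine absurd hL (not_lt.2 (le_of_lt ?_))
              rw [hc1]
              exact lt_of_head_lt u s [] h'
            · have hae : a = e - 1 := by omega
              rcases elem_of_append_singleton hc1 with hmem | ⟨hk, hs0, hr⟩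
              · have h2' := h1m a hmem; omega
              · rw [hc1, hs0, hae] at hL
                exact absurd hL (lt_irrefl _)
          | cons y a'' =>
            have hby : b = y := by have := hs; simp at this; exact this.1
            subst hby
            exfalso
            refine absurd hL (not_lt.2 (le_of_lt ?_))
            rw [hc1, hu, show (c ++ b :: a'') ++ [e-1] = c ++ b :: (a'' ++ [e-1]) by simp]
            exact lt_of_head_lt c _ _ hab
        · cases c' with
          | nil =>
            simp at hc hd
            have hbe : e = b := hd.1
            have hc1' : r1 ++ [k1] = u ++ a :: s := by rw [hc1, hc]
            exfalso
            have hae' : a < e := by omega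
            rcases Nat.lt_or_ge a (e-1) with h' | h'
            · refine absurd hL (not_lt.2 (le_of_lt ?_))
              rw [hc1']
              exact lt_of_head_lt u s [] h'
            · have hae : a = e - 1 := by omega
              rcases elem_of_append_singleton hc1' with hmem | ⟨hk, hs0, hr⟩
              · have h2' := h1m a hmem; omega
              · rw [hc1', hs0, hae] at hL
                exact absurd hL (lt_irrefl _)
          | cons y c'' =>
            have hey : y = e := by have := hd; simp at this; omega
            exact ⟨c'' ++ a :: s, by simp, by rw [hc1, hc, hey]; simp⟩
    obtain ⟨w, hwne, hw⟩ := key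
    rw [show u ++ e :: w = (u ++ [e]) ++ w by simp] at hw
    obtain ⟨w0, hw0, hr1'⟩ := snoc_eq_append hw hwne
    rw [show (u ++ [e]) ++ w0 = u ++ e :: w0 by simp] at hr1'
    rw [hr1']
    exact LV_bound u e w0 he

open List

/-- Orientation/room-path data for the parent edge of vertex `j`:
`(room path, left parent, right parent)`. -/
def T (n : ℕ) (pa pb : ℕ → ℕ) (hb : ∀ j, 2 ≤ j → j < n → pb j < j) (j : ℕ) :
    List ℕ × ℕ × ℕ :=
  if h : 2 ≤ j ∧ j < n then
    if hq : 2 ≤ pb j then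
      let t := T n pa pb hb (pb j)
      if pa j = t.2.1 then (t.1 ++ [3 * pb j], pa j, pb j)
      else (t.1 ++ [3 * pb j + 2], pb j, pa j)
    else ([], 0, 1)
  else ([], 0, 0)
termination_by j
decreasing_by exact hb j h.1 h.2

/-- The key (position in the lexicographic spine order) of vertex `j`. -/
def keyN (n : ℕ) (pa pb : ℕ → ℕ) (hb : ∀ j, 2 ≤ j → j < n → pb j < j) (j : ℕ) : List ℕ :=
  if j = 0 then [] else if j = 1 then [3*n+3] else (T n pa pb hb j).1 ++ [3*j+1]

section W
variable {n : ℕ} {pa pb : ℕ → ℕ} {hb : ∀ j, 2 ≤ j → j < n → pb j < j}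
variable (hab : ∀ j, 2 ≤ j → j < n → pa j < pb j)
variable (hco : ∀ j, 2 ≤ j → j < n → 2 ≤ pb j → pa j = pa (pb j) ∨ pa j = pb (pb j))

include hab hco

theorem Wmain : ∀ j, 2 ≤ j → j < n →
    ((T n pa pb hb j).2 = (pa j, pb j) ∨ (T n pa pb hb j).2 = (pb j, pa j)) ∧
    (∀ x ∈ (T n pa pb hb j).1, (x % 3 = 0 ∨ x % 3 = 2) ∧ x ≤ 3*n) ∧
    keyN n pa pb hb (T n pa pb hb j).2.1 = LV (T n pa pb hb j).1 ∧
    keyN n pa pb hb (T n pa pb hb j).2.2 = RV (3*n+3) (T n pa pb hb j).1 := by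
  intro j
  induction j using Nat.strong_induction_on with
  | _ j IH =>
    intro h2 hn
    rw [T]
    rw [dif_pos ⟨h2, hn⟩]
    by_cases hq : 2 ≤ pb j
    · rw [dif_pos hq]
      have hbj : pb j < j := hb j h2 hn
      have hqn : pb j < n := lt_trans hbj hn
      obtain ⟨hpair, helem, hkL, hkR⟩ := IH (pb j) hbj hq hqn
      have hmem : pa j = (T n pa pb hb (pb j)).2.1 ∨ pa j = (T n pa pb hb (pb j)).2.2 := by
        rcases hco j h2 hn hq with h | h <;> rcases hpair with hp | hp <;>
          simp [hp, h]
      by_cases hifa : pa j = (T n pa pb hb (pb j)).2.1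
      · rw [if_pos hifa]
        refine ⟨Or.inl rfl, ?_, ?_, ?_⟩
        · intro x hx
          rcases List.mem_append.1 hx with h | h
          · exact helem x h
          · have : x = 3 * pb j := by simpa using h
            subst this
            exact ⟨Or.inl (by omega), by omega⟩
        · show keyN n pa pb hb (pa j) = _
          rw [hifa, hkL, LV_append0 (by omega)]
        · show keyN n pa pb hb (pb j) = _
          rw [RV_append_stop (by omega), keyN, if_neg (by omega), if_neg (by omega)]
      · rw [if_neg hifa]
        have hifb : pa j = (T n pa pb hb (pb j)).2.2 := hmem.resolve_left hifa
        refine ⟨Or.inr rfl, ?_, ?_, ?_⟩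
        · intro x hx
          rcases List.mem_append.1 hx with h | h
          · exact helem x h
          · have : x = 3 * pb j + 2 := by simpa using h
            subst this
            exact ⟨Or.inr (by omega), by omega⟩
        · show keyN n pa pb hb (pb j) = _
          have h21 : 3 * pb j + 2 - 1 = 3 * pb j + 1 := by omega
          rw [LV_append_stop (by omega), h21, keyN, if_neg (by omega), if_neg (by omega)]
        · show keyN n pa pb hb (pa j) = _
          rw [hifb, hkR, RV_append2 (by omega)]
    · rw [dif_neg hq]
      have h1 : pb j = 1 := by have := hab j h2 hn; omega
      have h0 : pa j = 0 := by have := hab j h2 hn; omega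
      refine ⟨Or.inl (by rw [h1, h0]), by simp, ?_, ?_⟩
      · show keyN n pa pb hb 0 = LV []
        simp [keyN, LV_nil]
      · show keyN n pa pb hb 1 = RV (3*n+3) []
        simp [keyN, RV_nil]

theorem keysand : ∀ j, 2 ≤ j → j < n →
    keyN n pa pb hb (T n pa pb hb j).2.1 < keyN n pa pb hb j ∧
    keyN n pa pb hb j < keyN n pa pb hb (T n pa pb hb j).2.2 := by
  intro j h2 hn
  obtain ⟨-, helem, hkL, hkR⟩ := Wmain hab hco j h2 hn
  have hkey : keyN n pa pb hb j = (T n pa pb hb j).1 ++ [3*j+1] := by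
    rw [keyN, if_neg (by omega), if_neg (by omega)]
  constructor
  · rw [hkL, hkey]
    exact LV_lt_self (fun x hx => (helem x hx).1) _
  · rw [hkR, hkey]
    exact self_lt_RV (n := n) (fun x hx => (helem x hx).2) (by omega) _ (by omega)

theorem keyLtB : ∀ j, j < n → j ≠ 1 → keyN n pa pb hb j < [3*n+3] := by
  intro j hn h1
  by_cases h0 : j = 0
  · subst h0; rw [keyN]; simp [lt_is_lex]
  · have h2 : 2 ≤ j := by omega
    obtain ⟨-, helem, -, -⟩ := Wmain hab hco j h2 hn
    rw [keyN, if_neg h0, if_neg h1]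
    exact lt_singletonB (n := n) (fun x hx => (helem x hx).2) (by omega) _ (by omega)

theorem keyLeB : ∀ j, j < n → keyN n pa pb hb j ≤ [3*n+3] := by
  intro j hn
  by_cases h1 : j = 1
  · subst h1; rw [keyN]; simp
  · exact le_of_lt (keyLtB hab hco j hn h1)

theorem keyInj : ∀ i j, i < n → j < n → keyN n pa pb hb i = keyN n pa pb hb j → i = j := by
  have hne : ∀ i, 2 ≤ i → i < n → keyN n pa pb hb i ≠ [] := by
    intro i h2 hn
    rw [keyN, if_neg (by omega), if_neg (by omega)]
    simp
  have hlast : ∀ i, 2 ≤ i → i < n →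
      (keyN n pa pb hb i).getLast? = some (3*i+1) := by
    intro i h2 hn
    rw [keyN, if_neg (by omega), if_neg (by omega), List.getLast?_concat]
  intro i j hi hj heq
  by_cases hi1 : i = 1
  · subst hi1
    by_cases hj1 : j = 1
    · omega
    · exact absurd heq.symm (ne_of_lt (keyLtB hab hco j hj hj1))
  by_cases hj1 : j = 1
  · subst hj1
    exact absurd heq (ne_of_lt (keyLtB hab hco i hi hi1))
  by_cases hi0 : i = 0
  · subst hi0
    by_cases hj0 : j = 0
    · omega
    · have h' := hne j (by omega) hj
      have h0 : keyN n pa pb hb 0 = [] := by simp [keyN]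
      rw [h0] at heq
      exact absurd heq.symm h'
  by_cases hj0 : j = 0
  · subst hj0
    have h' := hne i (by omega) hi
    have h0 : keyN n pa pb hb 0 = [] := by simp [keyN]
    rw [h0] at heq
    exact absurd heq h'
  · have l1 := hlast i (by omega) hi
    have l2 := hlast j (by omega) hj
    rw [heq, l2] at l1
    have : 3*j+1 = 3*i+1 := by simpa using l1
    omega

end W
open SimpleGraph

/-- A graph in which every vertex has at most one neighbour of smaller `ord`,
adjacent vertices having distinct `ord`, is acyclic. -/
theorem acyclic_of_unique_smaller {V : Type*} (H : SimpleGraph V) (ord : V → ℕ)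
    (huniq : ∀ v u1 u2, H.Adj v u1 → H.Adj v u2 → ord u1 < ord v → ord u2 < ord v → u1 = u2)
    (hne : ∀ u v, H.Adj u v → ord u ≠ ord v) : H.IsAcyclic := by
  classical
  intro v p hp
  -- find vertex of maximal ord on the cycle
  obtain ⟨m, hmmem, hmax⟩ := Finset.exists_max_image p.support.toFinset ord
    (by simp [List.toFinset_nonempty_iff])
  rw [List.mem_toFinset] at hmmem
  have hc' : (p.rotate m hmmem).IsCycle := hp.rotate hmmem
  have hsupp : ∀ x ∈ (p.rotate m hmmem).support, x ∈ p.support := by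
    intro x hx
    rw [Walk.support_eq_cons] at hx
    rcases List.mem_cons.1 hx with rfl | hx
    · exact hmmem
    · have := (Walk.support_rotate p m hmmem).mem_iff.1 hx
      exact List.mem_of_mem_tail this
  set c := p.rotate m hmmem with hcdef
  clear_value c
  cases c with
  | nil => exact hc'.ne_nil rfl
  | cons hadj q =>
    rename_i u
    obtain ⟨hqpath, hqe⟩ := (Walk.cons_isCycle_iff _ _).1 hc'
    have hlen : 2 ≤ q.length := by
      have := hc'.three_le_length
      simp only [Walk.length_cons] at this
      omega
    have hqrev : ¬ q.reverse.Nil := by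
      rw [Walk.not_nil_iff_lt_length, Walk.length_reverse]
      omega
    obtain ⟨w, hadj2, q', hq'⟩ := Walk.not_nil_iff.1 hqrev
    -- hadj : H.Adj m u, hadj2 : H.Adj m w
    have huw : u ≠ w := by
      intro h
      subst h
      have : q'.IsPath := by
        have := hqpath.reverse
        rw [hq'] at this
        exact this.of_cons
      rw [Walk.isPath_iff_eq_nil] at this
      subst this
      have : q.reverse.length = 1 := by rw [hq']; simp
      rw [Walk.length_reverse] at this
      omega
    have humem : u ∈ p.support := hsupp u (by simp)
    have hwmem : w ∈ p.support := by
      apply hsupp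
      have : w ∈ q.reverse.support := by rw [hq']; simp
      rw [Walk.support_reverse] at this
      simp [Walk.support_cons]
      exact Or.inr (List.mem_reverse.1 this)
    have hu_lt : ord u < ord m := by
      have h1 : ord u ≤ ord m := hmax u (List.mem_toFinset.2 humem)
      have h2 : ord u ≠ ord m := fun h => hne m u hadj h.symm
      omega
    have hw_lt : ord w < ord m := by
      have h1 : ord w ≤ ord m := hmax w (List.mem_toFinset.2 hwmem)
      have h2 : ord w ≠ ord m := fun h => hne m w hadj2 h.symm
      omega
    exact huw (huniq m u w hadj hadj2 hu_lt hw_lt)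
end BK



set_option maxHeartbeats 2000000

/-- Every `2`-tree has a book embedding with arboricity `2`: a circular vertex ordering
and a partition of the edges into two forests, each noncrossing with respect to the
ordering; moreover if `G ≄ K₃` then every `2`-simplicial vertex is colourful. -/
theorem twoTree_book_arboricity {V : Type*} [Finite V] (G : SimpleGraph V)
    (h : IsKTree 2 G) :
    ∃ (σ : V ≃ Fin (Nat.card V)) (H : Fin 2 → SimpleGraph V),
      (∀ i, (H i).IsAcyclic) ∧ (∀ i, H i ≤ G) ∧
      (∀ u v, G.Adj u v → ∃! i, (H i).Adj u v) ∧
      (∀ i, ∀ a b x y, (H i).Adj a b → (H i).Adj x y →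
        ¬ (σ a < σ x ∧ σ x < σ b ∧ σ b < σ y)) ∧
      (IsEmpty (G ≃g (⊤ : SimpleGraph (Fin 3))) →
        ∀ v, IsKSimplicial G 2 v →
          ∀ i, ∀ u w, u ≠ w → (H i).Adj v u → ¬ (H i).Adj v w) := by
  classical
  set n := Nat.card V with hn
  obtain ⟨hn3, σ0, hσ0⟩ := h
  have hnpos : 0 < n := by omega
  let F : ℕ → Fin n := fun i => ⟨i % n, Nat.mod_lt _ hnpos⟩
  have hF : ∀ i, i < n → (F i : ℕ) = i := fun i hi => Nat.mod_eq_of_lt hi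
  have hF0 : (F 0 : ℕ) = 0 := hF 0 (by omega)
  have hF1 : (F 1 : ℕ) = 1 := hF 1 (by omega)
  have hF2 : (F 2 : ℕ) = 2 := hF 2 (by omega)
  -- idx for σ0
  let idx0 : V → ℕ := fun v => ((σ0.symm v : Fin n) : ℕ)
  have hidx0 : ∀ i : Fin n, idx0 (σ0 i) = (i : ℕ) := by
    intro i; simp only [idx0, Equiv.symm_apply_apply]
  -- base adjacency facts for σ0
  have hback : ∀ j : ℕ, j ≤ 2 → j < n →
      {u | G.Adj (σ0 (F j)) u ∧ idx0 u < j} = {u | idx0 u < j} := by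
    intro j hj2 hjn
    have := (hσ0 (F j)).1 (by rw [hF j hjn]; exact hj2)
    rw [hF j hjn] at this
    exact this
  have A1 : G.Adj (σ0 (F 1)) (σ0 (F 0)) := by
    have h0 : σ0 (F 0) ∈ {u | idx0 u < 1} := by
      show idx0 (σ0 (F 0)) < 1
      rw [hidx0, hF0]; omega
    have := (hback 1 (by omega) (by omega)) ▸ h0
    exact this.1
  have A2a : G.Adj (σ0 (F 2)) (σ0 (F 0)) := by
    have h0 : σ0 (F 0) ∈ {u | idx0 u < 2} := by
      show idx0 (σ0 (F 0)) < 2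
      rw [hidx0, hF0]; omega
    have := (hback 2 (by omega) (by omega)) ▸ h0
    exact this.1
  have A2b : G.Adj (σ0 (F 2)) (σ0 (F 1)) := by
    have h0 : σ0 (F 1) ∈ {u | idx0 u < 2} := by
      show idx0 (σ0 (F 1)) < 2
      rw [hidx0, hF1]; omega
    have := (hback 2 (by omega) (by omega)) ▸ h0
    exact this.1
  have hB3 : ∀ j : ℕ, 3 ≤ j → j < n →
      ({u | G.Adj (σ0 (F j)) u ∧ idx0 u < j}.ncard = 2 ∧
        G.IsClique {u | G.Adj (σ0 (F j)) u ∧ idx0 u < j}) := by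
    intro j hj3 hjn
    have := (hσ0 (F j)).2 (by rw [hF j hjn]; omega)
    rw [hF j hjn] at this
    exact this

  -- final ordering: swap first two vertices if σ0 0 is 2-simplicial
  have hFne : F 0 ≠ F 1 := by
    intro hcon; have := congrArg Fin.val hcon; rw [hF0, hF1] at this; omega
  let σA : Fin n ≃ V :=
    if IsKSimplicial G 2 (σ0 (F 0)) then (Equiv.swap (F 0) (F 1)).trans σ0 else σ0
  let idxA : V → ℕ := fun v => ((σA.symm v : Fin n) : ℕ)
  let vt : ℕ → V := fun i => σA (F i)
  have hidxA : ∀ i : Fin n, idxA (σA i) = (i : ℕ) := by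
    intro i; simp only [idxA, Equiv.symm_apply_apply]
  have hvtidx : ∀ i, i < n → idxA (vt i) = i := by
    intro i hi
    simp only [vt, hidxA]
    exact hF i hi
  have hidxvt : ∀ v, vt (idxA v) = v := by
    intro v
    have hlt : idxA v < n := (σA.symm v).isLt
    simp only [vt]
    have : F (idxA v) = σA.symm v := Fin.ext (hF _ hlt)
    rw [this, Equiv.apply_symm_apply]
  have hidxA_lt : ∀ v, idxA v < n := fun v => (σA.symm v).isLt
  have hidxA_inj : ∀ u v, idxA u = idxA v → u = v := by
    intro u v huv
    have : σA.symm u = σA.symm v := Fin.ext huv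
    simpa using congrArg σA this
  -- transfer base adjacencies
  have hswap_cases : (σA = σ0 ∧ ¬ IsKSimplicial G 2 (σ0 (F 0))) ∨
      (σA = (Equiv.swap (F 0) (F 1)).trans σ0 ∧ IsKSimplicial G 2 (σ0 (F 0))) := by
    by_cases hsw : IsKSimplicial G 2 (σ0 (F 0))
    · exact Or.inr ⟨if_pos hsw, hsw⟩
    · exact Or.inl ⟨if_neg hsw, hsw⟩
  have hsw01 : ∀ (hsw : σA = (Equiv.swap (F 0) (F 1)).trans σ0),
      σA (F 0) = σ0 (F 1) ∧ σA (F 1) = σ0 (F 0) := by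
    intro hsw
    rw [hsw]
    constructor
    · simp [Equiv.trans_apply, Equiv.swap_apply_left]
    · simp [Equiv.trans_apply, Equiv.swap_apply_right]
  have A1' : G.Adj (vt 1) (vt 0) := by
    rcases hswap_cases with ⟨hs, -⟩ | ⟨hs, -⟩
    · simp only [vt, hs]; exact A1
    · obtain ⟨h0, h1⟩ := hsw01 hs
      simp only [vt, h0, h1]; exact A1.symm
  have hswFj : ∀ j, 2 ≤ j → j < n → σA (F j) = σ0 (F j) := by
    intro j h2 hjn
    rcases hswap_cases with ⟨hs, -⟩ | ⟨hs, -⟩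
    · rw [hs]
    · rw [hs]
      simp only [Equiv.trans_apply]
      congr 1
      apply Equiv.swap_apply_of_ne_of_ne
      · intro hcon; have := congrArg Fin.val hcon; rw [hF j hjn, hF0] at this; omega
      · intro hcon; have := congrArg Fin.val hcon; rw [hF j hjn, hF1] at this; omega
  have A2a' : G.Adj (vt 2) (vt 0) := by
    rcases hswap_cases with ⟨hs, -⟩ | ⟨hs, -⟩
    · simp only [vt, hs]; exact A2a
    · obtain ⟨h0, -⟩ := hsw01 hs
      simp only [vt, h0, hswFj 2 (by omega) (by omega)]
      exact A2b
  have A2b' : G.Adj (vt 2) (vt 1) := by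
    rcases hswap_cases with ⟨hs, -⟩ | ⟨hs, -⟩
    · simp only [vt, hs]; exact A2b
    · obtain ⟨-, h1⟩ := hsw01 hs
      simp only [vt, h1, hswFj 2 (by omega) (by omega)]
      exact A2a
  have hidx_lt_iff : ∀ (j : ℕ), 2 ≤ j → ∀ u, (idxA u < j ↔ idx0 u < j) := by
    intro j h2 u
    rcases hswap_cases with ⟨hs, -⟩ | ⟨hs, -⟩
    · simp only [idxA, idx0, hs]
    · simp only [idxA, idx0, hs, Equiv.symm_trans_apply, Equiv.symm_swap]
      by_cases hu0 : σ0.symm u = F 0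
      · rw [hu0, Equiv.swap_apply_left, hF0, hF1]; omega
      · by_cases hu1 : σ0.symm u = F 1
        · rw [hu1, Equiv.swap_apply_right, hF0, hF1]; omega
        · rw [Equiv.swap_apply_of_ne_of_ne hu0 hu1]
  have hB3' : ∀ j : ℕ, 3 ≤ j → j < n →
      ({u | G.Adj (vt j) u ∧ idxA u < j}.ncard = 2 ∧
        G.IsClique {u | G.Adj (vt j) u ∧ idxA u < j}) := by
    intro j h3 hjn
    have hseteq : {u | G.Adj (vt j) u ∧ idxA u < j} = {u | G.Adj (σ0 (F j)) u ∧ idx0 u < j} := by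
      ext u
      simp only [Set.mem_setOf_eq, vt, hswFj j (by omega) hjn, hidx_lt_iff j (by omega) u]
    rw [hseteq]
    exact hB3 j h3 hjn
  have hkey0 : IsKSimplicial G 2 (vt 0) → IsKSimplicial G 2 (vt 1) := by
    intro hs0
    rcases hswap_cases with ⟨hs, hns⟩ | ⟨hs, hsp⟩
    · exfalso; apply hns; simpa only [vt, hs] using hs0
    · obtain ⟨-, h1⟩ := hsw01 hs
      rw [show vt 1 = σA (F 1) from rfl, h1]
      exact hsp

  -- parent functions
  have hpairex : ∀ j : ℕ, 3 ≤ j → j < n → ∃ p q : ℕ, p < q ∧ q < j ∧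
      (∀ u, (G.Adj (vt j) u ∧ idxA u < j) ↔ (u = vt p ∨ u = vt q)) ∧
      G.Adj (vt p) (vt q) := by
    intro j h3 hjn
    obtain ⟨hcard, hclq⟩ := hB3' j h3 hjn
    obtain ⟨x, y, hxy, hSeq⟩ := Set.ncard_eq_two.1 hcard
    have hxS : G.Adj (vt j) x ∧ idxA x < j := by
      have : x ∈ {u | G.Adj (vt j) u ∧ idxA u < j} := by rw [hSeq]; simp
      exact this
    have hyS : G.Adj (vt j) y ∧ idxA y < j := by
      have : y ∈ {u | G.Adj (vt j) u ∧ idxA u < j} := by rw [hSeq]; simp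
      exact this
    have hvx : vt (idxA x) = x := hidxvt x
    have hvy : vt (idxA y) = y := hidxvt y
    have hiff : ∀ u, (G.Adj (vt j) u ∧ idxA u < j) ↔ (u = x ∨ u = y) := by
      intro u
      constructor
      · intro hu
        have : u ∈ {u | G.Adj (vt j) u ∧ idxA u < j} := hu
        rw [hSeq] at this
        simpa using this
      · rintro (rfl | rfl)
        · exact hxS
        · exact hyS
    have hadjxy : G.Adj x y := hclq (by rw [hSeq]; simp) (by rw [hSeq]; simp) hxy
    have hne : idxA x ≠ idxA y := fun hc => hxy (by rw [← hvx, hc, hvy])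
    rcases Nat.lt_or_ge (idxA x) (idxA y) with hlt | hge
    · exact ⟨idxA x, idxA y, hlt, hyS.2, by
        intro u; rw [hiff u, hvx, hvy], by rw [hvx, hvy]; exact hadjxy⟩
    · have hlt : idxA y < idxA x := by omega
      exact ⟨idxA y, idxA x, hlt, hxS.2, by
        intro u; rw [hiff u, hvx, hvy]; tauto, by rw [hvx, hvy]; exact hadjxy.symm⟩
  let paN : ℕ → ℕ := fun j => if h : 3 ≤ j ∧ j < n then (hpairex j h.1 h.2).choose else 0
  let pbN : ℕ → ℕ := fun j =>
    if h : 3 ≤ j ∧ j < n then (hpairex j h.1 h.2).choose_spec.choose else 1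
  have hspec : ∀ j (h3 : 3 ≤ j) (hjn : j < n), paN j < pbN j ∧ pbN j < j ∧
      (∀ u, (G.Adj (vt j) u ∧ idxA u < j) ↔ (u = vt (paN j) ∨ u = vt (pbN j))) ∧
      G.Adj (vt (paN j)) (vt (pbN j)) := by
    intro j h3 hjn
    have hd : (3 ≤ j ∧ j < n) := ⟨h3, hjn⟩
    simp only [paN, pbN, dif_pos hd]
    obtain ⟨h1, h2, h3', h4⟩ := (hpairex j hd.1 hd.2).choose_spec.choose_spec
    exact ⟨h1, h2, h3', h4⟩
  have hpa20 : paN 2 = 0 := by simp [paN]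
  have hpb21 : pbN 2 = 1 := by simp [pbN]
  have hpa : ∀ j, 2 ≤ j → j < n → paN j < pbN j ∧ pbN j < j := by
    intro j h2 hjn
    by_cases h3 : 3 ≤ j
    · obtain ⟨a, b, -, -⟩ := hspec j h3 hjn
      exact ⟨a, b⟩
    · have : j = 2 := by omega
      subst this
      rw [hpa20, hpb21]
      omega
  have hSj : ∀ j, 2 ≤ j → j < n →
      ∀ u, (G.Adj (vt j) u ∧ idxA u < j) ↔ (u = vt (paN j) ∨ u = vt (pbN j)) := by
    intro j h2 hjn
    by_cases h3 : 3 ≤ j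
    · exact (hspec j h3 hjn).2.2.1
    · have : j = 2 := by omega
      subst this
      rw [hpa20, hpb21]
      intro u
      constructor
      · rintro ⟨hadj, hlt⟩
        have : u = vt (idxA u) := (hidxvt u).symm
        interval_cases h : idxA u
        · exact Or.inl (by rw [this])
        · exact Or.inr (by rw [this])
      · rintro (rfl | rfl)
        · exact ⟨A2a', by rw [hvtidx 0 (by omega)]; omega⟩
        · exact ⟨A2b', by rw [hvtidx 1 (by omega)]; omega⟩
  have hadjpab : ∀ j, 2 ≤ j → j < n → G.Adj (vt (paN j)) (vt (pbN j)) := by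
    intro j h2 hjn
    by_cases h3 : 3 ≤ j
    · exact (hspec j h3 hjn).2.2.2
    · have : j = 2 := by omega
      subst this
      rw [hpa20, hpb21]
      exact A1'.symm
  have habT : ∀ j, 2 ≤ j → j < n → paN j < pbN j := fun j a b => (hpa j a b).1
  have hbT : ∀ j, 2 ≤ j → j < n → pbN j < j := fun j a b => (hpa j a b).2
  have hcoT : ∀ j, 2 ≤ j → j < n → 2 ≤ pbN j → (paN j = paN (pbN j) ∨ paN j = pbN (pbN j)) := by
    intro j h2 hjn hq2
    have hqj : pbN j < j := hbT j h2 hjn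
    have hqn : pbN j < n := by omega
    have hpan : paN j < n := by have := habT j h2 hjn; omega
    have := (hSj (pbN j) hq2 hqn (vt (paN j))).1
      ⟨(hadjpab j h2 hjn).symm, by rw [hvtidx _ hpan]; exact habT j h2 hjn⟩
    have hpbq : pbN (pbN j) < pbN j := hbT _ hq2 hqn
    have hpaq : paN (pbN j) < pbN j := by have := habT _ hq2 hqn; omega
    rcases this with hl | hr
    · left
      have := congrArg idxA hl
      rwa [hvtidx _ hpan, hvtidx _ (by omega)] at this
    · right
      have := congrArg idxA hr
      rwa [hvtidx _ hpan, hvtidx _ (by omega)] at this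
  -- keys
  let key : ℕ → List ℕ := BK.keyN n paN pbN hbT
  let fkey : V → List ℕ := fun v => key (idxA v)
  have hfkey_inj : Function.Injective fkey := by
    intro u v huv
    exact hidxA_inj u v
      (BK.keyInj (hb := hbT) habT hcoT (idxA u) (idxA v) (hidxA_lt u) (hidxA_lt v) huv)
  -- colours
  let colE : V → V → Fin 2 := fun u v => if ((idxA u < idxA v) ↔ (fkey u < fkey v)) then 0 else 1
  have colE_def : ∀ u v, colE u v = if ((idxA u < idxA v) ↔ (fkey u < fkey v)) then 0 else 1 :=
    fun _ _ => rfl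
  have hcolE_symm : ∀ u v, u ≠ v → colE u v = colE v u := by
    intro u v huv
    have hine : idxA u ≠ idxA v := fun hc => huv (hidxA_inj _ _ hc)
    have hkne : fkey u ≠ fkey v := fun hc => huv (hfkey_inj hc)
    rw [colE_def, colE_def]
    by_cases h1 : idxA u < idxA v <;> by_cases h2 : fkey u < fkey v
    · rw [if_pos (iff_of_true h1 h2),
        if_pos (iff_of_false (by omega) (fun hc => lt_asymm h2 hc))]
    · have h2' : fkey v < fkey u := lt_of_le_of_ne (le_of_not_gt h2) hkne.symm
      rw [if_neg (fun hc => h2 (hc.1 h1)), if_neg (fun hc => absurd (hc.2 h2') (by omega))]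
    · have h1' : idxA v < idxA u := by omega
      rw [if_neg (fun hc => h1 (hc.2 h2)), if_neg (fun hc => lt_asymm h2 (hc.1 h1'))]
    · have h1' : idxA v < idxA u := by omega
      have h2' : fkey v < fkey u := lt_of_le_of_ne (le_of_not_gt h2) hkne.symm
      rw [if_pos (iff_of_false h1 h2), if_pos (iff_of_true h1' h2')]
  let HH : Fin 2 → SimpleGraph V := fun c =>
    { Adj := fun u v => G.Adj u v ∧ colE u v = c
      symm := by
        constructor
        intro u v ⟨ha, hc⟩
        exact ⟨ha.symm, by rw [← hcolE_symm u v ha.ne]; exact hc⟩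
      loopless := ⟨fun v hv => G.loopless.irrefl v hv.1⟩ }

  -- adjacency characterization
  have hadjchar : ∀ u v, G.Adj u v → idxA u < idxA v →
      (idxA v = 1 ∧ idxA u = 0) ∨
      (2 ≤ idxA v ∧ (idxA u = paN (idxA v) ∨ idxA u = pbN (idxA v))) := by
    intro u v hadj hlt
    have hvn := hidxA_lt v
    by_cases h1 : idxA v = 1
    · exact Or.inl ⟨h1, by omega⟩
    · have h2 : 2 ≤ idxA v := by
        rcases Nat.eq_zero_or_pos (idxA v) with h | h
        · omega
        · omega
      right
      refine ⟨h2, ?_⟩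
      have hA : G.Adj (vt (idxA v)) u := by rw [hidxvt v]; exact hadj.symm
      have hmem := (hSj (idxA v) h2 hvn u).1 ⟨hA, hlt⟩
      have hpan : paN (idxA v) < n := by
        have := habT _ h2 hvn; have := hbT _ h2 hvn; omega
      have hpbn : pbN (idxA v) < n := by have := hbT _ h2 hvn; omega
      rcases hmem with rfl | rfl
      · left; rw [hvtidx _ hpan]
      · right; rw [hvtidx _ hpbn]
  -- abbreviations
  have hkeyj : ∀ j, 2 ≤ j → j < n →
      key j = (BK.T n paN pbN hbT j).1 ++ [3*j+1] := by
    intro j h2 hjn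
    show BK.keyN n paN pbN hbT j = _
    rw [BK.keyN, if_neg (by omega), if_neg (by omega)]
  have hkey0' : key 0 = [] := by show BK.keyN n paN pbN hbT 0 = []; simp [BK.keyN]
  have hkey1' : key 1 = [3*n+3] := by show BK.keyN n paN pbN hbT 1 = _; simp [BK.keyN]
  have hT12 : ∀ j, 2 ≤ j → j < n →
      ((BK.T n paN pbN hbT j).2.1 = paN j ∧ (BK.T n paN pbN hbT j).2.2 = pbN j) ∨
      ((BK.T n paN pbN hbT j).2.1 = pbN j ∧ (BK.T n paN pbN hbT j).2.2 = paN j) := by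
    intro j h2 hjn
    rcases (BK.Wmain (hb := hbT) habT hcoT j h2 hjn).1 with hp | hp
    · left; rw [hp]; exact ⟨rfl, rfl⟩
    · right; rw [hp]; exact ⟨rfl, rfl⟩
  have hTlt : ∀ j, 2 ≤ j → j < n →
      (BK.T n paN pbN hbT j).2.1 < j ∧ (BK.T n paN pbN hbT j).2.2 < j := by
    intro j h2 hjn
    have h1 := habT j h2 hjn
    have h2' := hbT j h2 hjn
    rcases hT12 j h2 hjn with ⟨e1, e2⟩ | ⟨e1, e2⟩ <;> rw [e1, e2] <;> omega
  have hfkeyvt : ∀ i, i < n → fkey (vt i) = key i := by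
    intro i hi
    show key (idxA (vt i)) = key i
    rw [hvtidx i hi]
  -- the global bound
  have hGB : ∀ w : V, fkey w ≤ [3*n+3] := fun w => BK.keyLeB (hb := hbT) habT hcoT _ (hidxA_lt w)
  -- classification of edges sorted by key
  have hclass : ∀ u v, G.Adj u v → fkey u < fkey v →
      (colE u v = 0 ∧ ((fkey u = [] ∧ fkey v = [3*n+3]) ∨
        (∃ j, 2 ≤ j ∧ j < n ∧
          fkey v = (BK.T n paN pbN hbT j).1 ++ [3*j+1] ∧
          fkey u = BK.LV (BK.T n paN pbN hbT j).1))) ∨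
      (colE u v = 1 ∧ (∃ j, 2 ≤ j ∧ j < n ∧
          fkey u = (BK.T n paN pbN hbT j).1 ++ [3*j+1] ∧
          fkey v = BK.RV (3*n+3) (BK.T n paN pbN hbT j).1)) := by
    intro u v hadj hk
    have hne : idxA u ≠ idxA v := fun hc => (G.ne_of_adj hadj) (hidxA_inj _ _ hc)
    rcases Nat.lt_or_ge (idxA u) (idxA v) with hlt | hge
    · rcases hadjchar u v hadj hlt with ⟨hv1, hu0⟩ | ⟨h2, hpq⟩
      · left
        have hfu : fkey u = [] := by show key (idxA u) = []; rw [hu0, hkey0']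
        have hfv : fkey v = [3*n+3] := by show key (idxA v) = _; rw [hv1, hkey1']
        refine ⟨by rw [colE_def, if_pos (iff_of_true hlt hk)], Or.inl ⟨hfu, hfv⟩⟩
      · have hjn := hidxA_lt v
        obtain ⟨-, helem, hkL, hkR⟩ := BK.Wmain (hb := hbT) habT hcoT (idxA v) h2 hjn
        have hfv : fkey v = (BK.T n paN pbN hbT (idxA v)).1 ++ [3*(idxA v)+1] := by
          show key (idxA v) = _
          exact hkeyj _ h2 hjn
        have hu12 : idxA u = (BK.T n paN pbN hbT (idxA v)).2.1 ∨
            idxA u = (BK.T n paN pbN hbT (idxA v)).2.2 := by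
          rcases hT12 _ h2 hjn with ⟨e1, e2⟩ | ⟨e1, e2⟩ <;> rw [e1, e2] <;> tauto
        rcases hu12 with he | he
        · left
          have hfu : fkey u = BK.LV (BK.T n paN pbN hbT (idxA v)).1 := by
            show key (idxA u) = _
            rw [he]
            exact hkL
          exact ⟨by rw [colE_def, if_pos (iff_of_true hlt hk)],
            Or.inr ⟨idxA v, h2, hjn, hfv, hfu⟩⟩
        · exfalso
          have hfu : fkey u = BK.RV (3*n+3) (BK.T n paN pbN hbT (idxA v)).1 := by
            show key (idxA u) = _
            rw [he]
            exact hkR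
          have hfu2 : fkey u = BK.keyN n paN pbN hbT ((BK.T n paN pbN hbT (idxA v)).2.2) := by
            show key (idxA u) = _
            rw [he]
          have hsand := (BK.keysand (hb := hbT) habT hcoT (idxA v) h2 hjn).2
          have : fkey v < fkey u := by
            rw [hfu2]
            show BK.keyN n paN pbN hbT (idxA v) < _
            exact hsand
          exact lt_asymm hk this
    · have hlt : idxA v < idxA u := by omega
      rcases hadjchar v u hadj.symm hlt with ⟨hu1, hv0⟩ | ⟨h2, hpq⟩
      · exfalso
        have hfv : fkey v = [] := by show key (idxA v) = []; rw [hv0, hkey0']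
        rw [hfv, BK.lt_is_lex] at hk
        exact List.not_lex_nil hk
      · have hjn := hidxA_lt u
        obtain ⟨-, helem, hkL, hkR⟩ := BK.Wmain (hb := hbT) habT hcoT (idxA u) h2 hjn
        have hfu : fkey u = (BK.T n paN pbN hbT (idxA u)).1 ++ [3*(idxA u)+1] := by
          show key (idxA u) = _
          exact hkeyj _ h2 hjn
        have hv12 : idxA v = (BK.T n paN pbN hbT (idxA u)).2.1 ∨
            idxA v = (BK.T n paN pbN hbT (idxA u)).2.2 := by
          rcases hT12 _ h2 hjn with ⟨e1, e2⟩ | ⟨e1, e2⟩ <;> rw [e1, e2] <;> tauto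
        rcases hv12 with he | he
        · exfalso
          have hfv : fkey v = BK.LV (BK.T n paN pbN hbT (idxA u)).1 := by
            show key (idxA v) = _
            rw [he]
            exact hkL
          have hfv2 : fkey v = BK.keyN n paN pbN hbT ((BK.T n paN pbN hbT (idxA u)).2.1) := by
            show key (idxA v) = _
            rw [he]
          have hsand := (BK.keysand (hb := hbT) habT hcoT (idxA u) h2 hjn).1
          have : fkey v < fkey u := by
            rw [hfv2]
            show _ < BK.keyN n paN pbN hbT (idxA u)
            exact hsand
          exact lt_asymm hk this
        · right
          have hfv : fkey v = BK.RV (3*n+3) (BK.T n paN pbN hbT (idxA u)).1 := by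
            show key (idxA v) = _
            rw [he]
            exact hkR
          refine ⟨?_, ⟨idxA u, h2, hjn, hfu, hfv⟩⟩
          rw [colE_def, if_neg (fun hc => absurd (hc.2 hk) (by omega))]
  -- colours of the two parent edges at a vertex
  have hcolpar : ∀ j, 2 ≤ j → j < n →
      colE (vt j) (vt ((BK.T n paN pbN hbT j).2.1)) = 0 ∧
      colE (vt j) (vt ((BK.T n paN pbN hbT j).2.2)) = 1 := by
    intro j h2 hjn
    obtain ⟨hl, hr⟩ := hTlt j h2 hjn
    obtain ⟨-, -, hkL, hkR⟩ := BK.Wmain (hb := hbT) habT hcoT j h2 hjn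
    obtain ⟨hs1, hs2⟩ := BK.keysand (hb := hbT) habT hcoT j h2 hjn
    have hij : idxA (vt j) = j := hvtidx j hjn
    have hil := hvtidx ((BK.T n paN pbN hbT j).2.1) (by omega)
    have hir := hvtidx ((BK.T n paN pbN hbT j).2.2) (by omega)
    have hfl : fkey (vt ((BK.T n paN pbN hbT j).2.1)) =
        BK.keyN n paN pbN hbT ((BK.T n paN pbN hbT j).2.1) := by
      show key _ = _
      rw [hil]
    have hfr : fkey (vt ((BK.T n paN pbN hbT j).2.2)) =
        BK.keyN n paN pbN hbT ((BK.T n paN pbN hbT j).2.2) := by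
      show key _ = _
      rw [hir]
    have hfj : fkey (vt j) = BK.keyN n paN pbN hbT j := by
      show key _ = _
      rw [hij]
    constructor
    · rw [colE_def, if_pos]
      constructor
      · intro hc; rw [hij, hil] at hc; omega
      · intro hc
        rw [hfj, hfl] at hc
        exact absurd (lt_trans hc hs1) (lt_irrefl _)
    · rw [colE_def, if_neg]
      intro hc
      have hlt2 : fkey (vt j) < fkey (vt ((BK.T n paN pbN hbT j).2.2)) := by
        rw [hfj, hfr]; exact hs2
      have := hc.2 hlt2
      rw [hij, hir] at this
      omega
  -- the order isomorphism
  letI instLO : LinearOrder V := LinearOrder.lift' fkey hfkey_inj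
  haveI : Fintype V := Fintype.ofFinite V
  have hcard : Fintype.card V = n := by rw [hn, Nat.card_eq_fintype_card]
  let oi := Fintype.orderIsoFinOfCardEq V hcard
  let σf : V ≃ Fin n := oi.symm.toEquiv
  have hσf_lt : ∀ a b : V, σf a < σf b ↔ fkey a < fkey b := by
    intro a b
    have h1 : σf a < σf b ↔ a < b := oi.symm.lt_iff_lt
    rw [h1]
    exact Iff.rfl
  refine ⟨σf, HH, ?_, ?_, ?_, ?_, ?_⟩
  · -- acyclicity
    intro c
    apply BK.acyclic_of_unique_smaller (HH c) idxA
    · intro v u1 u2 h1 h2 hl1 hl2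
      have h1' : G.Adj v u1 ∧ colE v u1 = c := h1
      have h2' : G.Adj v u2 ∧ colE v u2 = c := h2
      rcases hadjchar u1 v h1'.1.symm hl1 with ⟨hv1, hu1⟩ | ⟨hj2, hp1⟩
      · rcases hadjchar u2 v h2'.1.symm hl2 with ⟨-, hu2⟩ | ⟨hj2, -⟩
        · exact hidxA_inj _ _ (by omega)
        · omega
      · rcases hadjchar u2 v h2'.1.symm hl2 with ⟨hv1, -⟩ | ⟨-, hp2⟩
        · omega
        · by_cases heq : idxA u1 = idxA u2
          · exact hidxA_inj _ _ heq
          · exfalso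
            set j := idxA v with hjdef
            have hjn := hidxA_lt v
            have hu1v : u1 = vt (idxA u1) := (hidxvt u1).symm
            have hu2v : u2 = vt (idxA u2) := (hidxvt u2).symm
            have hvv : v = vt j := (hidxvt v).symm
            have h12 : (idxA u1 = (BK.T n paN pbN hbT j).2.1 ∧
                idxA u2 = (BK.T n paN pbN hbT j).2.2) ∨
                (idxA u1 = (BK.T n paN pbN hbT j).2.2 ∧
                idxA u2 = (BK.T n paN pbN hbT j).2.1) := by
              rcases hT12 j hj2 hjn with ⟨e1, e2⟩ | ⟨e1, e2⟩ <;> rw [e1, e2] <;>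
                rcases hp1 with hq1 | hq1 <;> rcases hp2 with hq2 | hq2 <;>
                  first
                    | exact absurd (hq1.trans hq2.symm) heq
                    | exact Or.inl ⟨hq1, hq2⟩
                    | exact Or.inr ⟨hq1, hq2⟩
            obtain ⟨hc1, hc2⟩ := hcolpar j hj2 hjn
            rcases h12 with ⟨e1, e2⟩ | ⟨e1, e2⟩
            · have k1 : colE v u1 = 0 := by rw [hvv, hu1v, e1]; exact hc1
              have k2 : colE v u2 = 1 := by rw [hvv, hu2v, e2]; exact hc2
              rw [h1'.2] at k1; rw [h2'.2] at k2
              rw [k1] at k2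
              exact absurd k2 (by decide)
            · have k1 : colE v u1 = 1 := by rw [hvv, hu1v, e1]; exact hc2
              have k2 : colE v u2 = 0 := by rw [hvv, hu2v, e2]; exact hc1
              rw [h1'.2] at k1; rw [h2'.2] at k2
              rw [k1] at k2
              exact absurd k2 (by decide)
    · intro u v huv
      have h' : G.Adj u v ∧ colE u v = c := huv
      exact fun hc => (G.ne_of_adj h'.1) (hidxA_inj _ _ hc)
  · -- HH ≤ G
    intro c u v hadj
    exact hadj.1
  · -- unique colour
    intro u v hadj
    exact ⟨colE u v, ⟨hadj, rfl⟩, fun c hc => hc.2.symm⟩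
  · -- noncrossing
    intro c a b x y h1 h2 ⟨s1, s2, s3⟩
    have h1' : G.Adj a b ∧ colE a b = c := h1
    have h2' : G.Adj x y ∧ colE x y = c := h2
    rw [hσf_lt] at s1 s2 s3
    have hab : fkey a < fkey b := lt_trans s1 s2
    have hxy : fkey x < fkey y := lt_trans s2 s3
    rcases hclass a b h1'.1 hab with ⟨hcol1, hd1⟩ | ⟨hcol1, hd1⟩ <;>
      rcases hclass x y h2'.1 hxy with ⟨hcol2, hd2⟩ | ⟨hcol2, hd2⟩
    · -- colour 0 / colour 0
      rcases hd1 with ⟨hfa, hfb⟩ | ⟨j1, hj1a, hj1b, hfb, hfa⟩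
      · rcases hd2 with ⟨hfx, -⟩ | ⟨j2, -, -, -, hfx⟩
        · rw [hfx, BK.lt_is_lex] at s1
          exact List.not_lex_nil s1
        · rw [hfb] at s3
          exact absurd s3 (not_lt.2 (hGB y))
      · rcases hd2 with ⟨hfx, hfy⟩ | ⟨j2, hj2a, hj2b, hfy, hfx⟩
        · rw [hfx, BK.lt_is_lex] at s1
          exact List.not_lex_nil s1
        · obtain ⟨-, he1, -, -⟩ := BK.Wmain (hb := hbT) habT hcoT j1 hj1a hj1b
          obtain ⟨-, he2, -, -⟩ := BK.Wmain (hb := hbT) habT hcoT j2 hj2a hj2b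
          have hcon := BK.NC0 (r1 := (BK.T n paN pbN hbT j1).1) (k1 := 3*j1+1)
            (r2 := (BK.T n paN pbN hbT j2).1) (k2 := 3*j2+1)
            (fun z hz => (he1 z hz).1) (fun z hz => (he2 z hz).1)
            (by omega) (by rw [← hfx, ← hfb]; exact s2) (by rw [← hfb, ← hfy]; exact s3)
          rw [← hfx, ← hfa] at hcon
          exact absurd s1 (not_lt.2 hcon)
    · rw [hcol1] at h1'; rw [hcol2] at h2'
      rw [← h1'.2] at h2'
      exact absurd h2'.2 (by decide)
    · rw [hcol1] at h1'; rw [hcol2] at h2'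
      rw [← h1'.2] at h2'
      exact absurd h2'.2 (by decide)
    · -- colour 1 / colour 1
      obtain ⟨j1, hj1a, hj1b, hfa, hfb⟩ := hd1
      obtain ⟨j2, hj2a, hj2b, hfx, hfy⟩ := hd2
      obtain ⟨-, he2, -, -⟩ := BK.Wmain (hb := hbT) habT hcoT j2 hj2a hj2b
      have hcon := BK.NC1 (B := 3*n+3) (n := n) (r1 := (BK.T n paN pbN hbT j1).1)
        (k1 := 3*j1+1) (r2 := (BK.T n paN pbN hbT j2).1) (k2 := 3*j2+1)
        (by omega) (fun z hz => (he2 z hz).2)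
        (by rw [← hfa, ← hfx]; exact s1) (by rw [← hfx, ← hfb]; exact s2)
      rw [← hfy, ← hfb] at hcon
      exact absurd s3 (not_lt.2 hcon)
  · -- colourful
    intro hIso v hsimp c u w hune h1 h2
    have h1' : G.Adj v u ∧ colE v u = c := h1
    have h2' : G.Adj v w ∧ colE v w = c := h2
    have hvtne : ∀ i j, i < n → j < n → i ≠ j → vt i ≠ vt j := by
      intro i j hi hj hij hc
      exact hij (by rw [← hvtidx i hi, ← hvtidx j hj, hc])
    have hge3 : ∀ (S : Set V) (a b d : V), a ∈ S → b ∈ S → d ∈ S →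
        a ≠ b → a ≠ d → b ≠ d → S.ncard = 2 → False := by
      intro S a b d ha hb hd hab had hbd h2'
      have hsub : {a, b, d} ⊆ S := by
        intro z hz
        rcases hz with rfl | rfl | rfl
        exacts [ha, hb, hd]
      have h3 : ({a, b, d} : Set V).ncard = 3 := by
        rw [Set.ncard_insert_of_notMem (by simp [hab, had]) (Set.toFinite _),
          Set.ncard_pair hbd]
      have := Set.ncard_le_ncard hsub (Set.toFinite S)
      omega
    have hNB : ¬(IsKSimplicial G 2 (vt 0) ∧ IsKSimplicial G 2 (vt 1)) := by
      by_cases hn4 : 4 ≤ n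
      · rintro ⟨hs0, hs1⟩
        have h3n : 3 < n := by omega
        have hpa3 := habT 3 (by omega) h3n
        have hpb3 := hbT 3 (by omega) h3n
        have hadj3a : G.Adj (vt 3) (vt (paN 3)) := by
          exact ((hSj 3 (by omega) h3n (vt (paN 3))).2 (Or.inl rfl)).1
        have hadj3b : G.Adj (vt 3) (vt (pbN 3)) := by
          exact ((hSj 3 (by omega) h3n (vt (pbN 3))).2 (Or.inr rfl)).1
        by_cases hp0 : paN 3 = 0
        · rw [hp0] at hadj3a
          exact hge3 (G.neighborSet (vt 0)) (vt 1) (vt 2) (vt 3)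
            A1'.symm A2a'.symm hadj3a.symm
            (hvtne 1 2 (by omega) (by omega) (by omega))
            (hvtne 1 3 (by omega) (by omega) (by omega))
            (hvtne 2 3 (by omega) (by omega) (by omega)) hs0.2
        · have hp1 : paN 3 = 1 ∨ pbN 3 = 1 := by omega
          have hadj1 : G.Adj (vt 3) (vt 1) := by
            rcases hp1 with hp | hp
            · rw [← hp]; exact hadj3a
            · rw [← hp]; exact hadj3b
          exact hge3 (G.neighborSet (vt 1)) (vt 0) (vt 2) (vt 3)
            A1' A2b'.symm hadj1.symm
            (hvtne 0 2 (by omega) (by omega) (by omega))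
            (hvtne 0 3 (by omega) (by omega) (by omega))
            (hvtne 2 3 (by omega) (by omega) (by omega)) hs1.2
      · -- n = 3 : G is K₃
        intro hcon
        have hAdjAll : ∀ a b : V, a ≠ b → G.Adj a b := by
          intro a b hne'
          have ha := hidxA_lt a
          have hb := hidxA_lt b
          have hav : a = vt (idxA a) := (hidxvt a).symm
          have hbv : b = vt (idxA b) := (hidxvt b).symm
          have hne'' : idxA a ≠ idxA b := fun hc => hne' (hidxA_inj _ _ hc)
          have hn3' : n = 3 := by omega
          have ha3 : idxA a < 3 := by omega
          have hb3 : idxA b < 3 := by omega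
          rw [hav, hbv]
          interval_cases hia : idxA a <;> interval_cases hib : idxA b <;>
            first
              | exact absurd rfl hne''
              | exact A1'
              | exact A1'.symm
              | exact A2a'
              | exact A2a'.symm
              | exact A2b'
              | exact A2b'.symm
        refine hIso.false ?_
        refine ⟨σA.symm.trans (finCongr (by omega : n = 3)), @fun a b => ?_⟩
        rw [Equiv.coe_trans]
        show (⊤ : SimpleGraph (Fin 3)).Adj _ _ ↔ G.Adj a b
        rw [SimpleGraph.top_adj]
        constructor
        · intro hne'
          refine hAdjAll a b (fun hab => hne' ?_)
          rw [hab]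
        · intro hadj hc
          have : σA.symm a = σA.symm b := by
            apply (finCongr (by omega : n = 3)).injective
            exact hc
          exact (G.ne_of_adj hadj) (σA.symm.injective this)
    have hvn := hidxA_lt v
    have hvv : v = vt (idxA v) := (hidxvt v).symm
    by_cases hj0 : idxA v = 0
    · have hv0 : v = vt 0 := by rw [hvv, hj0]
      exact hNB ⟨hv0 ▸ hsimp, hkey0 (hv0 ▸ hsimp)⟩
    · by_cases hj1 : idxA v = 1
      · have hv1 : v = vt 1 := by rw [hvv, hj1]
        have hcol0 : colE v (vt 0) = 0 := by
          rw [colE_def, if_pos (iff_of_false ?_ ?_)]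
          · rw [hj1, hvtidx 0 (by omega)]
            omega
          · intro hc
            have h0 : fkey (vt 0) = [] := by
              rw [hfkeyvt 0 (by omega)]
              exact hkey0'
            rw [h0, BK.lt_is_lex] at hc
            exact List.not_lex_nil hc
        have hcolz : ∀ z, G.Adj v z → z ≠ vt 0 → colE v z = 1 := by
          intro z hz hz0
          have hzi : idxA z ≠ 0 := fun hc => hz0 (by rw [← hidxvt z, hc])
          have hzi1 : idxA z ≠ 1 := fun hc =>
            (G.ne_of_adj hz) (hidxA_inj v z (by omega))
          rw [colE_def, if_neg]
          intro hc
          have hidlt : idxA v < idxA z := by omega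
          have hfvz := hc.1 hidlt
          have hfz : fkey z < [3*n+3] :=
            BK.keyLtB (hb := hbT) habT hcoT _ (hidxA_lt z) (by omega)
          have hfv1 : fkey v = [3*n+3] := by
            show key (idxA v) = _
            rw [hj1, hkey1']
          rw [hfv1] at hfvz
          exact absurd (lt_trans hfvz hfz) (lt_irrefl _)
        have hu : G.Adj v u := h1'.1
        have hw : G.Adj v w := h2'.1
        by_cases hu0 : u = vt 0
        · have hw0 : w ≠ vt 0 := fun hc => hune (by rw [hu0, ← hc])
          have k1 : colE v u = 0 := by rw [hu0]; exact hcol0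
          have k2 : colE v w = 1 := hcolz w hw hw0
          rw [h1'.2] at k1
          rw [h2'.2] at k2
          rw [k1] at k2
          exact absurd k2 (by decide)
        · by_cases hw0 : w = vt 0
          · have k1 : colE v u = 1 := hcolz u hu hu0
            have k2 : colE v w = 0 := by rw [hw0]; exact hcol0
            rw [h1'.2] at k1
            rw [h2'.2] at k2
            rw [k1] at k2
            exact absurd k2 (by decide)
          · refine hge3 (G.neighborSet v) (vt 0) u w ?_ hu hw ?_ ?_ hune hsimp.2
            · show G.Adj v (vt 0)
              rw [hv1]
              exact A1'
            · exact fun hc => hu0 hc.symm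
            · exact fun hc => hw0 hc.symm
      · have h2 : 2 ≤ idxA v := by omega
        have hadjP : G.Adj (vt (idxA v)) (vt (paN (idxA v))) :=
          ((hSj (idxA v) h2 hvn (vt (paN (idxA v)))).2 (Or.inl rfl)).1
        have hadjQ : G.Adj (vt (idxA v)) (vt (pbN (idxA v))) :=
          ((hSj (idxA v) h2 hvn (vt (pbN (idxA v)))).2 (Or.inr rfl)).1
        obtain ⟨hTl, hTr⟩ := hTlt (idxA v) h2 hvn
        rw [← hvv] at hadjP hadjQ
        have hadjL : G.Adj v (vt ((BK.T n paN pbN hbT (idxA v)).2.1)) := by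
          rcases hT12 (idxA v) h2 hvn with ⟨e1, -⟩ | ⟨e1, -⟩ <;> rw [e1]
          exacts [hadjP, hadjQ]
        have hadjR : G.Adj v (vt ((BK.T n paN pbN hbT (idxA v)).2.2)) := by
          rcases hT12 (idxA v) h2 hvn with ⟨-, e2⟩ | ⟨-, e2⟩ <;> rw [e2]
          exacts [hadjQ, hadjP]
        have hTne : (BK.T n paN pbN hbT (idxA v)).2.1 ≠ (BK.T n paN pbN hbT (idxA v)).2.2 := by
          have := habT (idxA v) h2 hvn
          rcases hT12 (idxA v) h2 hvn with ⟨e1, e2⟩ | ⟨e1, e2⟩ <;> rw [e1, e2] <;> omega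
        have hLRne : vt ((BK.T n paN pbN hbT (idxA v)).2.1) ≠
            vt ((BK.T n paN pbN hbT (idxA v)).2.2) :=
          hvtne _ _ (by omega) (by omega) hTne
        have hmem2 : ∀ z, G.Adj v z → z = vt ((BK.T n paN pbN hbT (idxA v)).2.1) ∨
            z = vt ((BK.T n paN pbN hbT (idxA v)).2.2) := by
          intro z hz
          by_contra hcon
          push_neg at hcon
          exact hge3 (G.neighborSet v) (vt ((BK.T n paN pbN hbT (idxA v)).2.1))
            (vt ((BK.T n paN pbN hbT (idxA v)).2.2)) z hadjL hadjR hz hLRne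
            (fun hc => hcon.1 hc.symm) (fun hc => hcon.2 hc.symm) hsimp.2
        obtain ⟨hc1, hc2⟩ := hcolpar (idxA v) h2 hvn
        rw [← hvv] at hc1 hc2
        have hcL : colE v (vt ((BK.T n paN pbN hbT (idxA v)).2.1)) = 0 := hc1
        have hcR : colE v (vt ((BK.T n paN pbN hbT (idxA v)).2.2)) = 1 := hc2
        rcases hmem2 u h1'.1 with rfl | rfl <;> rcases hmem2 w h2'.1 with rfl | rfl
        · exact hune rfl
        · have k1 := h1'.2
          have k2 := h2'.2
          rw [hcL] at k1
          rw [hcR] at k2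
          rw [← k1] at k2
          exact absurd k2 (by decide)
        · have k1 := h1'.2
          have k2 := h2'.2
          rw [hcR] at k1
          rw [hcL] at k2
          rw [← k1] at k2
          exact absurd k2 (by decide)
        · exact hune rfl
end

section
/- Every k-tree G has a book embedding with star-arboricity k+1: there is a cyclic ordering of V(G) and a partition of E(G) into k+1 star-forests such that no two edges of the same star-forest interleave in the cyclic order. Moreover, if G ≇ K_{k+1} this can be done so that every k-simplicial vertex has all its incident edges in pairwise distinct parts. -/
namespace List

variable {α : Type*} [LinearOrder α] {p q l l₁ l₂ l₃ : List α}

theorem IsPrefix.lt_of_ne (h : l₁ <+: l₂) (hne : l₁ ≠ l₂) : l₁ < l₂ :=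
  lt_of_le_of_ne (not_lt.1 h.le) hne

theorem cons_le_cons_iff' {a b : α} : a :: l₁ ≤ b :: l₂ ↔ a < b ∨ a = b ∧ l₁ ≤ l₂ := by
  simp only [le_iff_lt_or_eq, cons_lt_cons_iff, cons.injEq]
  tauto

theorem IsPrefix.of_le_of_le (h₁ : p <+: l₁) (h₃ : p <+: l₃) (h₁₂ : l₁ ≤ l₂) (h₂₃ : l₂ ≤ l₃) :
    p <+: l₂ := by
  induction p generalizing l₁ l₂ l₃ with
  | nil => exact nil_prefix
  | cons a p ih =>
    obtain ⟨t₁, rfl⟩ := h₁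
    obtain ⟨t₃, rfl⟩ := h₃
    cases l₂ with
    | nil => exact absurd h₁₂ (not_le.2 Lex.nil)
    | cons b l₂ =>
      rw [cons_append, cons_le_cons_iff'] at h₁₂ h₂₃
      obtain rfl : a = b := le_antisymm (by rcases h₁₂ with h | h; exacts [h.le, h.1.le])
        (by rcases h₂₃ with h | h; exacts [h.le, h.1.le])
      simp only [lt_irrefl, true_and, false_or] at h₁₂ h₂₃
      exact (prefix_cons_inj a).2 (ih (prefix_append p t₁) (prefix_append p t₃) h₁₂ h₂₃)

theorem IsPrefix.prefix_of_lt (hp : p <+: l) (hq : q <+: l) (hpq : p < q) : p <+: q :=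
  (prefix_or_prefix_of_prefix hp hq).resolve_right fun h => h.le hpq

theorem lt_append_singleton {m : α} (hl : ∀ a ∈ l, a < m) (h : l <+: p ∨ p <+: l) :
    l < p ++ [m] := by
  rcases h with h | ⟨_ | ⟨a, s⟩, rfl⟩
  · exact (h.trans (prefix_append p [m])).lt_of_ne fun he => (hl m (he ▸ by simp)).false
  · simpa using (prefix_append p [m]).lt_of_ne (by simp)
  · exact append_left_lt (Lex.rel (hl a (by simp)))

end List

theorem Finite.exists_equiv_fin_lt_iff {V β : Type*} [Finite V] [LinearOrder β] {f : V → β}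
    (hf : Function.Injective f) : ∃ σ : V ≃ Fin (Nat.card V), ∀ a b, σ a < σ b ↔ f a < f b := by
  let _ : LinearOrder V := LinearOrder.lift' f hf
  have := Fintype.ofFinite V
  let e := (Fintype.orderIsoFinOfCardEq V Nat.card_eq_fintype_card.symm).symm
  exact ⟨e.toEquiv, fun a b => e.lt_iff_lt⟩

theorem Fin.add_ne_of_lt_of_lt {n : ℕ} {a b x : Fin n} (hax : a < x) (hxb : x < b) :
    a + b ≠ x := by
  intro h
  have hval := congrArg Fin.val h
  rw [Fin.val_add_eq_ite] at hval
  rw [Fin.lt_def] at hax hxb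
  have := b.isLt
  split_ifs at hval <;> omega

theorem Fin.add_ne_add_of_lt_of_lt_of_lt {n : ℕ} {a b x y : Fin n} (hax : a < x) (hxb : x < b)
    (hby : b < y) : a + b ≠ x + y := by
  intro h
  have hval := congrArg Fin.val h
  rw [Fin.val_add_eq_ite, Fin.val_add_eq_ite] at hval
  rw [Fin.lt_def] at hax hxb hby
  have := y.isLt
  split_ifs at hval <;> omega

theorem isStarForest_of_forall_adj {V : Type*} {H : SimpleGraph V}
    (h : ∀ u v, H.Adj u v → (H.neighborSet u).Subsingleton ∨ (H.neighborSet v).Subsingleton) :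
    IsStarForest H := by
  intro v hv u huv
  have hv' : ¬ (H.neighborSet v).Subsingleton := fun hs => by
    have := (Set.ncard_le_one hs.finite).2 fun a ha b hb => hs ha hb
    omega
  rw [(h v u huv).resolve_left hv' |>.eq_singleton_of_mem huv.symm, Set.ncard_singleton]

namespace KTree

variable {V : Type*} (G : SimpleGraph V) (r : V → ℕ) (k : ℕ)

def parents (v : V) : Set V := {u | G.Adj u v ∧ r u < r v}

/-- `r` ranks the vertices in a construction order of a `k`-tree; the vertices of rank at most
`k` form the initial clique. -/
structure IsConstructionOrder : Prop where
  injective : Function.Injective r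
  exists_rank_eq : ∀ i ≤ k, ∃ v, r v = i
  adj_of_lt : ∀ u v, r u < r v → r v ≤ k → G.Adj u v
  isClique_parents_of_lt : ∀ v, k < r v → G.IsClique (parents G r v)
  ncard_parents : ∀ v, k < r v → (parents G r v).ncard = k

-- A later vertex has a free colour (see `colour_ne_of_mem_parents`), which `epsilon` picks.
noncomputable def colour (v : V) : Fin (k + 1) :=
  if h : r v ≤ k then ⟨r v, Nat.lt_succ_of_le h⟩
  else Classical.epsilon fun c => ∀ u ∈ parents G r v, colour u ≠ c
termination_by r v
decreasing_by exact ‹_ ∈ parents G r v›.2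

noncomputable def edgeColour (u v : V) : Fin (k + 1) :=
  if r v ≤ k then colour G r k u + colour G r k v else colour G r k u

noncomputable def colourClass (c : Fin (k + 1)) : SimpleGraph V :=
  SimpleGraph.fromRel fun u v => u ∈ parents G r v ∧ edgeColour G r k u v = c

theorem exists_max_rank_parents [Finite V] {v : V} (hv : (parents G r v).Nonempty) :
    ∃ u ∈ parents G r v, ∀ w ∈ parents G r v, r w ≤ r u :=
  Set.exists_max_image _ r (Set.toFinite _) hv

noncomputable def topParent [Finite V] {v : V} (hv : (parents G r v).Nonempty) : V :=
  (exists_max_rank_parents G r hv).choose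

theorem topParent_mem [Finite V] {v : V} (hv : (parents G r v).Nonempty) :
    topParent G r hv ∈ parents G r v :=
  (exists_max_rank_parents G r hv).choose_spec.1

theorem le_topParent [Finite V] {v w : V} (hv : (parents G r v).Nonempty)
    (hw : w ∈ parents G r v) : r w ≤ r (topParent G r hv) :=
  (exists_max_rank_parents G r hv).choose_spec.2 w hw

open Classical in
/-- The ranks along the path to `v` in the forest where every vertex hangs from its `topParent`;
the lexicographic order of these lists is a depth-first order of that forest. -/
noncomputable def key [Finite V] (v : V) : List ℕ :=
  if hv : (parents G r v).Nonempty then key (topParent G r hv) ++ [r v] else [r v]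
termination_by r v
decreasing_by exact (topParent_mem G r hv).2

variable {G r k} {c : Fin (k + 1)}

theorem val_colour_of_le {v : V} (hv : r v ≤ k) : (colour G r k v : ℕ) = r v := by
  rw [colour, dif_pos hv]

variable (G) in
theorem colour_lt_colour {u v : V} (hu : r u ≤ k) (hv : r v ≤ k) (h : r u < r v) :
    colour G r k u < colour G r k v := by
  rwa [Fin.lt_def, val_colour_of_le hu, val_colour_of_le hv]

theorem colour_injOn (hG : IsConstructionOrder G r k) :
    Set.InjOn (colour G r k) {v | r v ≤ k} := fun u hu v hv h =>
  hG.injective (by rw [← val_colour_of_le hu, ← val_colour_of_le hv, h])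

theorem IsConstructionOrder.isClique_parents (hG : IsConstructionOrder G r k) (v : V) :
    G.IsClique (parents G r v) := by
  by_cases hv : k < r v
  · exact hG.isClique_parents_of_lt v hv
  intro u hu w hw huw
  rcases lt_or_gt_of_ne (hG.injective.ne huw) with h | h
  · exact hG.adj_of_lt u w h (by have := hw.2; omega)
  · exact (hG.adj_of_lt w u h (by have := hu.2; omega)).symm

theorem colourClass_adj_of_lt {u v : V} (h : r u < r v) :
    (colourClass G r k c).Adj u v ↔ u ∈ parents G r v ∧ edgeColour G r k u v = c := by
  simp only [colourClass, SimpleGraph.fromRel_adj]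
  refine ⟨?_, fun huv => ⟨G.ne_of_adj huv.1.1, .inl huv⟩⟩
  rintro ⟨-, huv | ⟨hvu, -⟩⟩
  · exact huv
  · exact absurd hvu.2 h.not_gt

theorem colourClass_le (c : Fin (k + 1)) : colourClass G r k c ≤ G := by
  rintro u v ⟨-, ⟨hu, -⟩ | ⟨hv, -⟩⟩
  exacts [hu.1, hv.1.symm]

theorem existsUnique_colourClass_adj (hG : IsConstructionOrder G r k) {u v : V}
    (huv : G.Adj u v) : ∃! c, (colourClass G r k c).Adj u v := by
  wlog h : r u < r v generalizing u v
  · simp_rw [SimpleGraph.adj_comm _ u v]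
    exact this huv.symm ((Ne.lt_or_gt (hG.injective.ne (G.ne_of_adj huv))).resolve_left h)
  simp_rw [colourClass_adj_of_lt h]
  exact ⟨edgeColour G r k u v, ⟨⟨huv, h⟩, rfl⟩, fun c hc => hc.2.symm⟩

theorem exists_subset_neighborSet (hG : IsConstructionOrder G r k) (v : V) :
    ∃ s ⊆ G.neighborSet v, s.ncard = k ∧ ∀ u ∈ s, r u ≤ max (r v) k := by
  by_cases hv : k < r v
  · exact ⟨parents G r v, fun u hu => hu.1.symm, hG.ncard_parents v hv,
      fun u hu => hu.2.le.trans (le_max_left _ _)⟩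
  rw [not_lt] at hv
  refine ⟨r ⁻¹' Set.Iic k \ {v}, ?_, ?_, fun u hu => le_max_of_le_right hu.1⟩
  · rintro u ⟨hu, huv : u ≠ v⟩
    rcases lt_or_gt_of_ne (hG.injective.ne huv) with h | h
    · exact (hG.adj_of_lt u v h hv).symm
    · exact hG.adj_of_lt v u h hu
  · rw [Set.ncard_sdiff_singleton_of_mem (show v ∈ r ⁻¹' Set.Iic k from hv),
      Set.ncard_preimage_of_injective_subset_range (s := Set.Iic k) hG.injective
        hG.exists_rank_eq, Set.ncard_Iic_nat, Nat.add_sub_cancel]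

variable [Finite V]

theorem colour_ne_of_mem_parents (hG : IsConstructionOrder G r k) {u v : V}
    (hu : u ∈ parents G r v) : colour G r k u ≠ colour G r k v := by
  by_cases hv : r v ≤ k
  · rw [Ne, Fin.ext_iff, val_colour_of_le hv, val_colour_of_le (hu.2.le.trans hv)]
    exact hu.2.ne
  have hfree : ∃ c, ∀ u ∈ parents G r v, colour G r k u ≠ c := by
    have : colour G r k '' parents G r v ≠ Set.univ := fun h => by
      have := Set.ncard_image_le (f := colour G r k) (Set.toFinite (parents G r v))
      rw [h, Set.ncard_univ, Nat.card_eq_fintype_card, Fintype.card_fin,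
        hG.ncard_parents v (not_le.1 hv)] at this
      omega
    obtain ⟨c, hc⟩ := (Set.ne_univ_iff_exists_notMem _).1 this
    exact ⟨c, fun u hu h => hc ⟨u, hu, h⟩⟩
  rw [colour.eq_1 G r k v, dif_neg hv]
  exact Classical.epsilon_spec hfree u hu

theorem colour_injOn_parents (hG : IsConstructionOrder G r k) (v : V) :
    Set.InjOn (colour G r k) (parents G r v) := by
  intro u hu w hw h
  by_contra huw
  rcases lt_or_gt_of_ne (hG.injective.ne huw) with hlt | hlt
  · exact colour_ne_of_mem_parents hG ⟨hG.isClique_parents v hu hw huw, hlt⟩ h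
  · exact colour_ne_of_mem_parents hG ⟨hG.isClique_parents v hw hu (Ne.symm huw), hlt⟩ h.symm

theorem subsingleton_neighborSet_colourClass (hG : IsConstructionOrder G r k) {w : V}
    (hw : colour G r k w ≠ c) : ((colourClass G r k c).neighborSet w).Subsingleton := by
  have hnbr : ∀ z, (colourClass G r k c).Adj w z →
      (r w ≤ k → r z ≤ k ∧ colour G r k z + colour G r k w = c) ∧
      (k < r w → z ∈ parents G r w ∧ colour G r k z = c) := by
    rintro z ⟨-, ⟨hwz, hc⟩ | ⟨hzw, hc⟩⟩ <;> unfold edgeColour at hc <;> split_ifs at hc with h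
    · exact ⟨fun _ => ⟨h, add_comm (colour G r k w) _ ▸ hc⟩, fun _ => by have := hwz.2; omega⟩
    · exact absurd hc hw
    · exact ⟨fun _ => ⟨hzw.2.le.trans h, hc⟩, fun _ => by omega⟩
    · exact ⟨fun h' => absurd h' h, fun _ => ⟨hzw, hc⟩⟩
  intro z hz z' hz'
  by_cases hwk : r w ≤ k
  · obtain ⟨hzk, hzc⟩ := (hnbr z hz).1 hwk
    obtain ⟨hzk', hzc'⟩ := (hnbr z' hz').1 hwk
    exact colour_injOn hG hzk hzk' (add_right_cancel (hzc.trans hzc'.symm))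
  · obtain ⟨hzp, hzc⟩ := (hnbr z hz).2 (not_le.1 hwk)
    obtain ⟨hzp', hzc'⟩ := (hnbr z' hz').2 (not_le.1 hwk)
    exact colour_injOn_parents hG w hzp hzp' (hzc.trans hzc'.symm)

theorem isStarForest_colourClass (hG : IsConstructionOrder G r k) (c : Fin (k + 1)) :
    IsStarForest (colourClass G r k c) := by
  refine isStarForest_of_forall_adj fun u v huv => ?_
  by_cases hu : colour G r k u = c
  · refine .inr (subsingleton_neighborSet_colourClass hG fun hv => ?_)
    obtain ⟨-, ⟨huv, -⟩ | ⟨hvu, -⟩⟩ := huv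
    exacts [colour_ne_of_mem_parents hG huv (hu.trans hv.symm),
      colour_ne_of_mem_parents hG hvu (hv.trans hu.symm)]
  · exact .inl (subsingleton_neighborSet_colourClass hG hu)

theorem rank_le_of_adj_of_ncard_eq (hG : IsConstructionOrder G r k) {v z : V}
    (hv : (G.neighborSet v).ncard = k) (hz : G.Adj v z) : r z ≤ max (r v) k := by
  obtain ⟨s, hs, hsk, hsr⟩ := exists_subset_neighborSet hG v
  by_contra h
  have := Set.ncard_le_ncard (Set.insert_subset (t := G.neighborSet v) hz hs)
  rw [Set.ncard_insert_of_notMem fun hz' => h (hsr z hz'), hsk, hv] at this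
  omega

theorem subsingleton_neighborSet_colourClass_of_ncard_eq (hG : IsConstructionOrder G r k)
    {v : V} (hv : (G.neighborSet v).ncard = k) (c : Fin (k + 1)) :
    ((colourClass G r k c).neighborSet v).Subsingleton := by
  by_cases hc : colour G r k v = c
  swap
  · exact subsingleton_neighborSet_colourClass hG hc
  subst hc
  by_cases hvk : r v ≤ k
  · have h0 : ∀ z, (colourClass G r k (colour G r k v)).Adj v z →
        r z ≤ k ∧ colour G r k z = 0 := by
      intro z hz
      have hzk : r z ≤ k := by
        have := rank_le_of_adj_of_ncard_eq hG hv (colourClass_le _ hz)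
        omega
      obtain ⟨-, ⟨-, h⟩ | ⟨-, h⟩⟩ := hz <;> simp only [edgeColour, if_pos hzk, if_pos hvk] at h <;>
        exact ⟨hzk, by simpa using h⟩
    intro z hz z' hz'
    obtain ⟨hzk, hz0⟩ := h0 z hz
    obtain ⟨hzk', hz0'⟩ := h0 z' hz'
    exact colour_injOn hG hzk hzk' (hz0.trans hz0'.symm)
  · intro z hz
    have hzr := rank_le_of_adj_of_ncard_eq hG hv (colourClass_le _ hz)
    obtain ⟨-, ⟨hvz, -⟩ | ⟨hzv, h⟩⟩ := hz
    · have := hvz.2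
      omega
    · simp only [edgeColour, if_neg hvk] at h
      exact absurd h (colour_ne_of_mem_parents hG hzv)

theorem key_of_nonempty {v : V} (hv : (parents G r v).Nonempty) :
    key G r v = key G r (topParent G r hv) ++ [r v] := by
  rw [key, dif_pos hv]

theorem key_of_empty {v : V} (hv : ¬ (parents G r v).Nonempty) : key G r v = [r v] := by
  rw [key, dif_neg hv]

theorem le_of_mem_key {v : V} {n : ℕ} (hn : n ∈ key G r v) : n ≤ r v := by
  induction v using (measure r).wf.induction with
  | _ v ih =>
  by_cases hv : (parents G r v).Nonempty
  · rw [key_of_nonempty hv, List.mem_append, List.mem_singleton] at hn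
    rcases hn with hn | rfl
    · exact (ih _ (topParent_mem G r hv).2 hn).trans (topParent_mem G r hv).2.le
    · exact le_rfl
  · rw [key_of_empty hv, List.mem_singleton] at hn
    exact hn.le

theorem getLast?_key (v : V) : (key G r v).getLast? = some (r v) := by
  by_cases hv : (parents G r v).Nonempty
  · simp [key_of_nonempty hv]
  · simp [key_of_empty hv]

theorem key_injective (hG : IsConstructionOrder G r k) : Function.Injective (key G r) :=
  fun u v h => hG.injective (Option.some_injective _ (by rw [← getLast?_key, h, getLast?_key]))

theorem mem_parents_topParent (hG : IsConstructionOrder G r k) {u v : V}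
    (hv : (parents G r v).Nonempty) (hu : u ∈ parents G r v) (hne : u ≠ topParent G r hv) :
    u ∈ parents G r (topParent G r hv) :=
  ⟨hG.isClique_parents v hu (topParent_mem G r hv) hne,
    (le_topParent G r hv hu).lt_of_ne (hG.injective.ne hne)⟩

theorem key_prefix_of_mem_parents (hG : IsConstructionOrder G r k) {u v : V}
    (hu : u ∈ parents G r v) : key G r u <+: key G r v := by
  induction v using (measure r).wf.induction with
  | _ v ih =>
  have hv : (parents G r v).Nonempty := ⟨u, hu⟩
  rw [key_of_nonempty hv]
  by_cases hne : u = topParent G r hv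
  · rw [hne]
    exact List.prefix_append _ _
  · exact (ih _ (topParent_mem G r hv).2 (mem_parents_topParent hG hv hu hne)).trans
      (List.prefix_append _ _)

theorem key_lt_of_mem_parents (hG : IsConstructionOrder G r k) {u v : V}
    (hu : u ∈ parents G r v) : key G r u < key G r v :=
  (key_prefix_of_mem_parents hG hu).lt_of_ne ((key_injective hG).ne (G.ne_of_adj hu.1))

theorem mem_parents_of_key_prefix (hG : IsConstructionOrder G r k) {u x w : V}
    (hu : u ∈ parents G r w) (hux : key G r u <+: key G r x) (hxw : key G r x <+: key G r w)
    (hxu : x ≠ u) (hxw' : x ≠ w) : u ∈ parents G r x := by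
  induction w using (measure r).wf.induction with
  | _ w ih =>
  have hw : (parents G r w).Nonempty := ⟨u, hu⟩
  set p := topParent G r hw
  rw [key_of_nonempty hw, List.prefix_concat_iff] at hxw
  have hxp : key G r x <+: key G r p :=
    hxw.resolve_left fun h => hxw' (key_injective hG (h.trans (key_of_nonempty hw).symm))
  have hup : u ≠ p := by
    rintro rfl
    exact hxu (key_injective hG (hxp.eq_of_length (hxp.length_le.antisymm hux.length_le)))
  by_cases hx : x = p
  · exact hx ▸ mem_parents_topParent hG hw hu hup
  · exact ih p (topParent_mem G r hw).2 (mem_parents_topParent hG hw hu hup) hxp hx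

theorem key_lt_key_of_le_of_lt (hG : IsConstructionOrder G r k) {y b : V} (hy : r y ≤ k)
    (hb : k < r b) : key G r y < key G r b := by
  induction b using (measure r).wf.induction with
  | _ b ih =>
  have hlt : ∀ n ∈ key G r y, n < r b := fun n hn => by have := le_of_mem_key hn; omega
  by_cases hne : (parents G r b).Nonempty
  · set p := topParent G r hne
    by_cases hp : k < r p
    · exact (ih p (topParent_mem G r hne).2 hp).trans
        (key_lt_of_mem_parents hG (topParent_mem G r hne))
    · rw [key_of_nonempty hne]
      refine List.lt_append_singleton hlt ?_
      rcases lt_trichotomy (r y) (r p) with h | h | h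
      · exact .inl (key_prefix_of_mem_parents hG ⟨hG.adj_of_lt y p h (not_lt.1 hp), h⟩)
      · exact .inl (hG.injective h ▸ List.prefix_rfl)
      · exact .inr (key_prefix_of_mem_parents hG ⟨hG.adj_of_lt p y h hy, h⟩)
  · rw [key_of_empty hne]
    simpa using List.lt_append_singleton (p := []) hlt (.inr (List.nil_prefix))

theorem key_lt_key_iff_of_le (hG : IsConstructionOrder G r k) {x y : V} (hx : r x ≤ k)
    (hy : r y ≤ k) : key G r x < key G r y ↔ r x < r y := by
  refine ⟨fun h => ?_, fun h => key_lt_of_mem_parents hG ⟨hG.adj_of_lt x y h hy, h⟩⟩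
  rcases lt_trichotomy (r x) (r y) with hxy | hxy | hxy
  · exact hxy
  · exact absurd h (hG.injective hxy ▸ lt_irrefl _)
  · exact absurd h (key_lt_of_mem_parents hG ⟨hG.adj_of_lt y x hxy hx, hxy⟩).not_gt

theorem mem_parents_of_colourClass_adj (hG : IsConstructionOrder G r k) {u v : V}
    (huv : (colourClass G r k c).Adj u v) (h : key G r u < key G r v) :
    u ∈ parents G r v ∧ edgeColour G r k u v = c := by
  obtain ⟨-, huv | ⟨hvu, -⟩⟩ := huv
  · exact huv
  · exact absurd h (key_lt_of_mem_parents hG hvu).not_gt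

theorem not_crossing (hG : IsConstructionOrder G r k) {a b x y : V}
    (hab : (colourClass G r k c).Adj a b) (hxy : (colourClass G r k c).Adj x y)
    (hax : key G r a < key G r x) (hxb : key G r x < key G r b) (hby : key G r b < key G r y) :
    False := by
  obtain ⟨hab, hcab⟩ := mem_parents_of_colourClass_adj hG hab (hax.trans hxb)
  obtain ⟨hxy, hcxy⟩ := mem_parents_of_colourClass_adj hG hxy (hxb.trans hby)
  by_cases hb : r b ≤ k
  · have hx : r x ≤ k := not_lt.1 fun hx => (key_lt_key_of_le_of_lt hG hb hx).not_gt hxb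
    have ha : r a ≤ k := hab.2.le.trans hb
    simp only [edgeColour, if_pos hb] at hcab
    have hax' := colour_lt_colour G ha hx ((key_lt_key_iff_of_le hG ha hx).1 hax)
    have hxb' := colour_lt_colour G hx hb ((key_lt_key_iff_of_le hG hx hb).1 hxb)
    by_cases hy : r y ≤ k
    · simp only [edgeColour, if_pos hy] at hcxy
      exact Fin.add_ne_add_of_lt_of_lt_of_lt hax' hxb'
        (colour_lt_colour G hb hy ((key_lt_key_iff_of_le hG hb hy).1 hby)) (hcab.trans hcxy.symm)
    · simp only [edgeColour, if_neg hy] at hcxy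
      exact Fin.add_ne_of_lt_of_lt hax' hxb' (hcab.trans hcxy.symm)
  · have hy : k < r y :=
      lt_of_not_ge fun hy => (key_lt_key_of_le_of_lt hG hy (not_le.1 hb)).not_gt hby
    simp only [edgeColour, if_neg hb, if_neg (not_le.2 hy)] at hcab hcxy
    have hxb' : key G r x <+: key G r b :=
      List.prefix_rfl.of_le_of_le (key_prefix_of_mem_parents hG hxy) hxb.le hby.le
    have hax' : key G r a <+: key G r x :=
      (key_prefix_of_mem_parents hG hab).prefix_of_lt hxb' hax
    exact colour_ne_of_mem_parents hG (mem_parents_of_key_prefix hG hab hax' hxb'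
      (fun h => hax.ne' (congrArg _ h)) (fun h => hxb.ne (congrArg _ h))) (hcab.trans hcxy.symm)

end KTree

theorem IsKTree.exists_isConstructionOrder {V : Type*} [Finite V] {k : ℕ} {G : SimpleGraph V}
    (h : IsKTree k G) : ∃ r : V → ℕ, KTree.IsConstructionOrder G r k := by
  obtain ⟨hN, σ, hσ⟩ := h
  have hpar : ∀ v, KTree.parents G (fun v => σ.symm v) v =
      {u | G.Adj (σ (σ.symm v)) u ∧ ((σ.symm u : Fin _) : ℕ) < σ.symm v} := by
    intro v
    ext u
    simp [KTree.parents, G.adj_comm]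
  refine ⟨fun v => σ.symm v, ⟨Fin.val_injective.comp σ.symm.injective,
    fun i hi => ⟨σ ⟨i, by omega⟩, by simp⟩, fun u v huv hv => ?_, fun v hv => ?_, fun v hv => ?_⟩⟩
  · have hu : u ∈ {u | ((σ.symm u : Fin _) : ℕ) < σ.symm v} := huv
    rw [← (hσ (σ.symm v)).1 hv, Equiv.apply_symm_apply] at hu
    exact hu.1.symm
  · rw [hpar]
    exact ((hσ _).2 hv).2
  · rw [hpar]
    exact ((hσ _).2 hv).1

theorem ktree_book_star_arboricity_general {V : Type*} [Finite V] (k : ℕ)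
    (G : SimpleGraph V) (h : IsKTree k G) :
    ∃ (σ : V ≃ Fin (Nat.card V)) (H : Fin (k + 1) → SimpleGraph V),
      (∀ i, IsStarForest (H i)) ∧ (∀ i, H i ≤ G) ∧
      (∀ u v, G.Adj u v → ∃! i, (H i).Adj u v) ∧
      (∀ i, ∀ a b x y, (H i).Adj a b → (H i).Adj x y →
        ¬ (σ a < σ x ∧ σ x < σ b ∧ σ b < σ y)) ∧
      (IsEmpty (G ≃g (⊤ : SimpleGraph (Fin (k + 1)))) →
        ∀ v, IsKSimplicial G k v →
          ∀ i, ∀ u w, u ≠ w → (H i).Adj v u → ¬ (H i).Adj v w) := by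
  obtain ⟨r, hG⟩ := h.exists_isConstructionOrder
  obtain ⟨σ, hσ⟩ := Finite.exists_equiv_fin_lt_iff (KTree.key_injective hG)
  refine ⟨σ, KTree.colourClass G r k, KTree.isStarForest_colourClass hG, KTree.colourClass_le,
    fun u v huv => KTree.existsUnique_colourClass_adj hG huv, ?_, ?_⟩
  · rintro c a b x y hab hxy ⟨hax, hxb, hby⟩
    rw [hσ] at hax hxb hby
    exact KTree.not_crossing hG hab hxy hax hxb hby
  · intro _ v hv c u w huw hu hw
    exact huw (KTree.subsingleton_neighborSet_colourClass_of_ncard_eq hG hv.2 c hu hw)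

/-- Every `k`-tree has a book embedding with star-arboricity `k+1`: a circular vertex
ordering and a partition of the edges into `k+1` star forests, each noncrossing with
respect to the ordering; moreover if `G ≄ K_{k+1}` then every `k`-simplicial vertex is
colourful. -/
theorem ktree_book_star_arboricity {V : Type*} [Finite V] (k : ℕ) (hk : 1 ≤ k)
    (G : SimpleGraph V) (h : IsKTree k G) :
    ∃ (σ : V ≃ Fin (Nat.card V)) (H : Fin (k + 1) → SimpleGraph V),
      (∀ i, IsStarForest (H i)) ∧ (∀ i, H i ≤ G) ∧
      (∀ u v, G.Adj u v → ∃! i, (H i).Adj u v) ∧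
      (∀ i, ∀ a b x y, (H i).Adj a b → (H i).Adj x y →
        ¬ (σ a < σ x ∧ σ x < σ b ∧ σ b < σ y)) ∧
      (IsEmpty (G ≃g (⊤ : SimpleGraph (Fin (k + 1)))) →
        ∀ v, IsKSimplicial G k v →
          ∀ i, ∀ u w, u ≠ w → (H i).Adj v u → ¬ (H i).Adj v w) :=
  ktree_book_star_arboricity_general k G h
end
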